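/- arXiv:2508.21671 — 14 statements merged into one kernel-verified Lean document; each statement's English description precedes it below -/
import Mathlib

section
/- Let F be a field and let A, B be elements of SL(2, F). Then tr(A)^2 + tr(B)^2 + tr(AB)^2 − tr(A)·tr(B)·tr(AB) − 2 = tr(A B A⁻¹ B⁻¹). -/
/-!
In SL(2) the inverse is the adjugate, and for any $2 \times 2$ matrix $M$ Cayley–Hamilton gives
$\operatorname{adj} M = \operatorname{tr} M - M$ and $M^2 = \operatorname{tr} M \cdot M - \det M$.
Expanding $\operatorname{tr}(A B \operatorname{adj} A \operatorname{adj} B)$ with the first identity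
leaves traces of words in which, up to cyclic rotation, a letter occurs twice in a row; the second
identity reduces those to $\operatorname{tr} A$, $\operatorname{tr} B$, $\operatorname{tr} AB$ and
the determinants.
-/

namespace Matrix

variable {R : Type*} [CommRing R] (M N : Matrix (Fin 2) (Fin 2) R)

theorem adjugate_eq_trace_smul_one_sub_fin_two : adjugate M = trace M • 1 - M := by
  ext i j
  fin_cases i <;> fin_cases j <;> simp [adjugate_fin_two, trace_fin_two]

theorem mul_self_eq_trace_smul_sub_det_smul_fin_two :
    M * M = trace M • M - det M • 1 := by
  ext i j
  fin_cases i <;> fin_cases j <;>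
    simp [mul_apply, Fin.sum_univ_two, trace_fin_two, det_fin_two] <;> ring

theorem trace_mul_self_mul_fin_two :
    trace (M * M * N) = trace M * trace (M * N) - det M * trace N := by
  rw [mul_self_eq_trace_smul_sub_det_smul_fin_two, sub_mul, smul_mul_assoc, smul_mul_assoc,
    one_mul, trace_sub, trace_smul, trace_smul, smul_eq_mul, smul_eq_mul]

theorem trace_mul_self_fin_two : trace (M * M) = trace M ^ 2 - 2 * det M := by
  simpa [sq, mul_comm (det M)] using trace_mul_self_mul_fin_two M 1

theorem trace_mul_mul_adjugate_mul_adjugate_fin_two :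
    trace (M * N * adjugate M * adjugate N) =
      det N * trace M ^ 2 + det M * trace N ^ 2 + trace (M * N) ^ 2
        - trace M * trace N * trace (M * N) - 2 * det M * det N := by
  have hMNN : trace (M * N * N) = trace N * trace (M * N) - det N * trace M := by
    rw [Matrix.mul_assoc, trace_mul_comm, trace_mul_self_mul_fin_two, trace_mul_comm N M]
  have hMNM : trace (M * N * M) = trace M * trace (M * N) - det M * trace N := by
    rw [trace_mul_comm, ← Matrix.mul_assoc, trace_mul_self_mul_fin_two]
  have hMNMN : trace (M * N * M * N) = trace (M * N) ^ 2 - 2 * (det M * det N) := by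
    rw [Matrix.mul_assoc (M * N), trace_mul_self_fin_two, det_mul]
  have hexpand : M * N * (trace M • 1 - M) * (trace N • 1 - N) =
      (trace M * trace N) • (M * N) - trace M • (M * N * N) - trace N • (M * N * M)
        + M * N * M * N := by
    simp only [Matrix.mul_sub, Matrix.sub_mul, Matrix.mul_smul, Matrix.smul_mul, Matrix.mul_one,
      smul_sub, smul_smul, Matrix.mul_assoc]
    module
  rw [adjugate_eq_trace_smul_one_sub_fin_two, adjugate_eq_trace_smul_one_sub_fin_two, hexpand]
  simp only [trace_add, trace_sub, trace_smul, smul_eq_mul, hMNN, hMNM, hMNMN]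
  ring

end Matrix

theorem fricke_identity (F : Type*) [Field F]
    (A B : Matrix.SpecialLinearGroup (Fin 2) F) :
    Matrix.trace (A : Matrix (Fin 2) (Fin 2) F) ^ 2 +
      Matrix.trace (B : Matrix (Fin 2) (Fin 2) F) ^ 2 +
      Matrix.trace ((A * B : Matrix.SpecialLinearGroup (Fin 2) F) : Matrix (Fin 2) (Fin 2) F) ^ 2 -
      Matrix.trace (A : Matrix (Fin 2) (Fin 2) F) *
        Matrix.trace (B : Matrix (Fin 2) (Fin 2) F) *
        Matrix.trace ((A * B : Matrix.SpecialLinearGroup (Fin 2) F) : Matrix (Fin 2) (Fin 2) F) -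
      2 =
    Matrix.trace ((A * B * A⁻¹ * B⁻¹ : Matrix.SpecialLinearGroup (Fin 2) F) :
      Matrix (Fin 2) (Fin 2) F) := by
  simp only [Matrix.SpecialLinearGroup.coe_mul, Matrix.SpecialLinearGroup.coe_inv,
    Matrix.trace_mul_mul_adjugate_mul_adjugate_fin_two, Matrix.SpecialLinearGroup.det_coe]
  ring
end

section
/- Let p be an odd prime and t ∈ 𝔽_p. Then t² − 4 is a nonsquare in 𝔽_p (that is, there is no a ∈ 𝔽_p with t² − 4 = a²) if and only if there exists y in 𝔽_{p²} with y ≠ 1, y ≠ −1, y^(p+1) = 1, and the image of t in 𝔽_{p²} equals y + y⁻¹. -/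
/-!
Put `s = y - y⁻¹`. Then `s ^ 2 = (y + y⁻¹) ^ 2 - 4`, and `y ^ (p + 1) = 1` says that the Frobenius
sends `y` to `y⁻¹`, hence `s` to `-s`; conversely, if `s ^ 2 = t ^ 2 - 4` and `s ^ p = -s`, then
`y = (t + s) / 2` has `y⁻¹ = (t - s) / 2 = y ^ p`. So the right-hand side says that `t ^ 2 - 4` has a
nonzero square root in `𝔽_{p²}` negated by the Frobenius. By Euler's criterion every element of
`𝔽_p` is a square in `𝔽_{p²}`, and since `𝔽_p` is the fixed field of the Frobenius, the square
roots of `t ^ 2 - 4` are fixed by it exactly when `t ^ 2 - 4` is a square in `𝔽_p`.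
-/

theorem FiniteField.isSquare_algebraMap_of_finrank_eq_two {K L : Type*} [Field K] [Finite K]
    [Field L] [Finite L] [Algebra K L] (hK : ringChar K ≠ 2) (hKL : Module.finrank K L = 2)
    (a : K) : IsSquare (algebraMap K L a) := by
  rcases eq_or_ne a 0 with rfl | ha
  · simp
  cases nonempty_fintype K
  cases nonempty_fintype L
  have hL : ringChar L ≠ 2 := by rwa [← Algebra.ringChar_eq K L]
  obtain ⟨k, hk⟩ : Odd (Fintype.card K) :=
    Nat.odd_iff.2 (FiniteField.odd_card_of_char_ne_two hK)
  -- Euler's criterion in `L`: the exponent `q ^ 2 / 2` is a multiple of `q - 1`, `q = #K` odd.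
  have hexp : Fintype.card L / 2 = (Fintype.card K - 1) * (k + 1) := by
    rw [Module.card_eq_pow_finrank (K := K), hKL, hk, Nat.add_sub_cancel,
      show (2 * k + 1) ^ 2 = 2 * (2 * k * (k + 1)) + 1 by ring]
    omega
  rw [FiniteField.isSquare_iff hL ((map_ne_zero _).2 ha), hexp, pow_mul, ← map_pow,
    FiniteField.pow_card_sub_one_eq_one a ha, map_one, one_pow]

section

variable {K : Type*} [Field K]

theorem sub_inv_ne_zero_iff {y : K} (hy : y ≠ 0) : y - y⁻¹ ≠ 0 ↔ y ≠ 1 ∧ y ≠ -1 := by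
  rw [Ne, sub_eq_zero, ← mul_eq_one_iff_eq_inv₀ hy, mul_self_eq_one_iff, not_or]

theorem half_add_mul_half_sub_eq_one {t s : K} (h2 : (2 : K) ≠ 0) (hs : s ^ 2 = t ^ 2 - 4) :
    (t + s) / 2 * ((t - s) / 2) = 1 := by
  field_simp
  linear_combination -hs

variable {p : ℕ} [Fact p.Prime] [CharP K p]

theorem exists_algebraMap_eq_iff_pow_char_eq_self [Algebra (ZMod p) K] {x : K} :
    (∃ a : ZMod p, algebraMap (ZMod p) K a = x) ↔ x ^ p = x := by
  rw [← Subfield.mem_bot_iff_pow_eq_self K p, ← ZMod.fieldRange_castHom_eq_bot p,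
    Subsingleton.elim (ZMod.castHom dvd_rfl K) (algebraMap (ZMod p) K)]
  rfl

theorem exists_add_inv_eq_iff_exists_sq_eq (hp : p ≠ 2) {t : K} (ht : t ^ p = t) :
    (∃ y : K, y ≠ 1 ∧ y ≠ -1 ∧ y ^ (p + 1) = 1 ∧ t = y + y⁻¹) ↔
      ∃ s : K, s ≠ 0 ∧ s ^ 2 = t ^ 2 - 4 ∧ s ^ p = -s := by
  have h2 : (2 : K) ≠ 0 := Ring.two_ne_zero (by rwa [ringChar.eq K p])
  constructor
  · rintro ⟨y, hy1, hym1, hyp, rfl⟩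
    have hy0 : y ≠ 0 := by rintro rfl; simp at hyp
    have hyp : y ^ p = y⁻¹ := by rwa [pow_succ, mul_eq_one_iff_eq_inv₀ hy0] at hyp
    refine ⟨y - y⁻¹, ?_, by field_simp; ring, ?_⟩
    · exact (sub_inv_ne_zero_iff hy0).2 ⟨hy1, hym1⟩
    · rw [sub_pow_char, inv_pow, hyp, inv_inv, neg_sub]
  · rintro ⟨s, hs0, hs, hsp⟩
    have hmul := half_add_mul_half_sub_eq_one h2 hs
    have hy0 : (t + s) / 2 ≠ 0 := left_ne_zero_of_mul_eq_one hmul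
    have hinv : ((t + s) / 2)⁻¹ = (t - s) / 2 := inv_eq_of_mul_eq_one_right hmul
    have h2p : (2 : K) ^ p = 2 := by simpa [frobenius_def] using map_ofNat (frobenius K p) 2
    have hsub : (t + s) / 2 - ((t + s) / 2)⁻¹ = s := by
      rw [hinv]
      field_simp
      ring
    obtain ⟨hy1, hym1⟩ := (sub_inv_ne_zero_iff hy0).1 (by rwa [hsub])
    refine ⟨(t + s) / 2, hy1, hym1, ?_, by rw [hinv]; field_simp; ring⟩
    rw [pow_succ, div_pow, add_pow_char, ht, hsp, h2p, ← sub_eq_add_neg, ← hinv,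
      inv_mul_cancel₀ hy0]

theorem exists_sq_eq_algebraMap_pow_char_eq_neg_iff [Algebra (ZMod p) K] (hp : p ≠ 2)
    {d : ZMod p} (hd : IsSquare (algebraMap (ZMod p) K d)) :
    (∃ s : K, s ≠ 0 ∧ s ^ 2 = algebraMap (ZMod p) K d ∧ s ^ p = -s) ↔ ¬ IsSquare d := by
  have hK : ringChar K ≠ 2 := by rwa [ringChar.eq K p]
  constructor
  · rintro ⟨s, hs0, hs, hsp⟩ ⟨a, rfl⟩
    have hsa : s = algebraMap (ZMod p) K a ∨ s = -algebraMap (ZMod p) K a :=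
      sq_eq_sq_iff_eq_or_eq_neg.1 (by rw [hs, map_mul, sq])
    have hsF : ∃ b : ZMod p, algebraMap (ZMod p) K b = s := by
      rcases hsa with rfl | rfl
      exacts [⟨a, rfl⟩, ⟨-a, map_neg _ a⟩]
    rw [exists_algebraMap_eq_iff_pow_char_eq_self, hsp,
      Ring.eq_self_iff_eq_zero_of_char_ne_two hK] at hsF
    exact hs0 hsF
  · intro hnd
    obtain ⟨s, hs⟩ := hd
    have hs2 : s ^ 2 = algebraMap (ZMod p) K d := by rw [hs, sq]
    refine ⟨s, ?_, hs2, ?_⟩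
    · rintro rfl
      refine hnd ⟨0, (algebraMap (ZMod p) K).injective ?_⟩
      rw [hs, mul_zero, mul_zero, map_zero]
    · have hdp : (algebraMap (ZMod p) K d) ^ p = algebraMap (ZMod p) K d :=
        exists_algebraMap_eq_iff_pow_char_eq_self.1 ⟨d, rfl⟩
      refine (sq_eq_sq_iff_eq_or_eq_neg.1 (by rw [← pow_right_comm, hs2, hdp])).resolve_left ?_
      intro hsp
      obtain ⟨b, rfl⟩ := exists_algebraMap_eq_iff_pow_char_eq_self.2 hsp
      exact hnd ⟨b, (algebraMap (ZMod p) K).injective (by rw [hs, map_mul])⟩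

end

theorem elliptic_iff (p : ℕ) [Fact p.Prime] (hodd : p ≠ 2) (t : ZMod p) :
    (¬ ∃ a : ZMod p, t ^ 2 - 4 = a ^ 2) ↔
      ∃ y : GaloisField p 2, y ≠ 1 ∧ y ≠ -1 ∧ y ^ (p + 1) = 1 ∧
        algebraMap (ZMod p) (GaloisField p 2) t = y + y⁻¹ := by
  have ht : algebraMap (ZMod p) (GaloisField p 2) t ^ p =
      algebraMap (ZMod p) (GaloisField p 2) t :=
    exists_algebraMap_eq_iff_pow_char_eq_self.1 ⟨t, rfl⟩
  have hsq : IsSquare (algebraMap (ZMod p) (GaloisField p 2) (t ^ 2 - 4)) :=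
    FiniteField.isSquare_algebraMap_of_finrank_eq_two (by rwa [ZMod.ringChar_zmod_n])
      (GaloisField.finrank p two_ne_zero) _
  rw [exists_add_inv_eq_iff_exists_sq_eq hodd ht, ← isSquare_iff_exists_sq,
    ← exists_sq_eq_algebraMap_pow_char_eq_neg_iff hodd hsq, map_sub, map_pow, map_ofNat]
end

section
/- Let F be a field, let x ∈ F be nonzero, let A ∈ SL(2, F) be the diagonal matrix with entries x and x⁻¹, and let B ∈ SL(2, F) have entries a, b (top row) and c, d (bottom row). Then 2 − tr(A B A⁻¹ B⁻¹) = b·c·(tr(A)² − 4). -/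
theorem normal_pair_commutator_trace (F : Type*) [Field F] (x a b c d : F) (hx : x ≠ 0)
    (A B : Matrix.SpecialLinearGroup (Fin 2) F)
    (hA : (A : Matrix (Fin 2) (Fin 2) F) = !![x, 0; 0, x⁻¹])
    (hB : (B : Matrix (Fin 2) (Fin 2) F) = !![a, b; c, d]) :
    2 - Matrix.trace ((A * B * A⁻¹ * B⁻¹ : Matrix.SpecialLinearGroup (Fin 2) F) :
        Matrix (Fin 2) (Fin 2) F) =
      b * c * (Matrix.trace (A : Matrix (Fin 2) (Fin 2) F) ^ 2 - 4) := by
  have hdB : a * d - b * c = 1 := by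
    have := B.property
    rwa [hB, Matrix.det_fin_two_of] at this
  simp only [Matrix.SpecialLinearGroup.coe_mul, Matrix.SpecialLinearGroup.coe_inv, hA, hB,
    Matrix.adjugate_fin_two_of]
  rw [show (!![x, 0; 0, x⁻¹] * !![a, b; c, d] * !![x⁻¹, -0; -0, x] * !![d, -b; -c, a] :
    Matrix (Fin 2) (Fin 2) F) = !![x*a*x⁻¹*d + x*b*x*(-c), x*a*x⁻¹*(-b) + x*b*x*a;
      x⁻¹*c*x⁻¹*d + x⁻¹*d*x*(-c), x⁻¹*c*x⁻¹*(-b) + x⁻¹*d*x*a] from by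
    simp [Matrix.mul_fin_two]]
  rw [Matrix.trace_fin_two_of, Matrix.trace_fin_two_of]
  field_simp
  ring_nf
  linear_combination (-2*x^2) * hdB
end

section
/- Let p be a prime with p > 5. For every triple (x, y, z) ∈ 𝔽_p³ there exist A, B ∈ SL(2, 𝔽_p) with tr(A) = x, tr(B) = y, and tr(AB) = z. Equivalently, the trace map Tr : SL(2, 𝔽_p) × SL(2, 𝔽_p) → 𝔽_p³, (A, B) ↦ (tr(A), tr(B), tr(AB)), is surjective. -/
open Polynomial

private lemma two_ne_zero_zmodp (p : ℕ) (h5 : 2 < p) : (2 : ZMod p) ≠ 0 := by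
  haveI : NeZero p := ⟨by omega⟩
  intro h2
  have h : ((2 : ℕ) : ZMod p) = 0 := by exact_mod_cast h2
  have hdvd := (ZMod.natCast_eq_zero_iff 2 p).mp h
  have := Nat.le_of_dvd (by norm_num) hdvd
  omega

private lemma key_norm (p : ℕ) [Fact p.Prime] (hodd : p % 2 = 1) (c k : ZMod p) (hc : c ≠ 0) :
    ∃ a b : ZMod p, a ^ 2 - c * b ^ 2 = k := by
  let f : (ZMod p)[X] := X ^ 2
  let g : (ZMod p)[X] := C (-c) * X ^ 2 + C 0 * X + C (-k)
  obtain ⟨a, b, hab⟩ : ∃ a b, f.eval a + g.eval b = 0 :=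
    FiniteField.exists_root_sum_quadratic (degree_X_pow 2)
      (Polynomial.degree_quadratic (neg_ne_zero.mpr hc)) (by rw [ZMod.card, hodd])
  refine ⟨a, b, ?_⟩
  simp only [f, g, eval_add, eval_mul, eval_pow, eval_C, eval_X] at hab
  linear_combination hab

private lemma key_quad (p : ℕ) [Fact p.Prime] (hodd : p % 2 = 1) (c d e : ZMod p)
    (h : c ≠ 0 ∨ d ≠ 0) : ∃ u s : ZMod p, c * u ^ 2 + d * u + e = s ^ 2 := by
  have h5 : 2 < p := by
    have := (Fact.out : p.Prime).two_le; omega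
  have h2 : (2 : ZMod p) ≠ 0 := two_ne_zero_zmodp p h5
  by_cases hc : c = 0
  · subst hc
    have hd : d ≠ 0 := h.resolve_left (by simp)
    refine ⟨-e / d, 0, ?_⟩
    field_simp
    ring
  · obtain ⟨q, hd'⟩ : ∃ q, d = 2 * c * q := ⟨d / (2 * c), by field_simp⟩
    subst hd'
    obtain ⟨a, b, hab⟩ := key_norm p hodd c (e - c * q ^ 2) hc
    exact ⟨b - q, a, by linear_combination -hab⟩

private lemma build (p : ℕ) [Fact p.Prime] (hodd : p % 2 = 1) (x y z : ZMod p)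
    (h : y ^ 2 - 4 ≠ 0 ∨ 4 * x - 2 * y * z ≠ 0) :
    ∃ A B : Matrix.SpecialLinearGroup (Fin 2) (ZMod p),
      Matrix.trace (A : Matrix (Fin 2) (Fin 2) (ZMod p)) = x ∧
      Matrix.trace (B : Matrix (Fin 2) (Fin 2) (ZMod p)) = y ∧
      Matrix.trace ((A * B : Matrix.SpecialLinearGroup (Fin 2) (ZMod p)) :
        Matrix (Fin 2) (Fin 2) (ZMod p)) = z := by
  have h5 : 2 < p := by
    have := (Fact.out : p.Prime).two_le; omega
  have h2 : (2 : ZMod p) ≠ 0 := two_ne_zero_zmodp p h5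
  obtain ⟨u, s, hus⟩ := key_quad p hodd (y ^ 2 - 4) (4 * x - 2 * y * z) (z ^ 2 - 4) h
  obtain ⟨b, hb⟩ : ∃ b : ZMod p, b * 2 = s - (z - u * y) := ⟨(s - (z - u * y)) / 2, by field_simp⟩
  obtain ⟨cc, hcc⟩ : ∃ cc : ZMod p, cc * 2 = (z - u * y) + s :=
    ⟨((z - u * y) + s) / 2, by field_simp⟩
  have hdet : ((!![x - u, b; cc, u] : Matrix (Fin 2) (Fin 2) (ZMod p))).det = 1 := by
    simp only [Matrix.det_fin_two_of]
    have key : ((x - u) * u - b * cc) * (2 * 2) = 1 * (2 * 2) := by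
      linear_combination hus - 2 * b * hcc - (z - u * y + s) * hb
    exact mul_right_cancel₀ (mul_ne_zero h2 h2) key
  refine ⟨⟨!![x - u, b; cc, u], hdet⟩, ⟨!![0, 1; -1, y], by simp [Matrix.det_fin_two_of]⟩,
    ?_, ?_, ?_⟩
  · simp [Matrix.trace_fin_two_of]
  · simp [Matrix.trace_fin_two_of]
  · show Matrix.trace (!![x - u, b; cc, u] * !![0, 1; -1, y] : Matrix (Fin 2) (Fin 2) (ZMod p)) = z
    rw [show (!![x - u, b; cc, u] * !![0, 1; -1, y] : Matrix (Fin 2) (Fin 2) (ZMod p)) =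
      !![-b, (x - u) + b * y; -u, cc + u * y] from by
        ext i j; fin_cases i <;> fin_cases j <;>
          simp [Matrix.mul_apply, Fin.sum_univ_succ]]
    simp only [Matrix.trace_fin_two_of]
    have key : (-b + (cc + u * y)) * 2 = z * 2 := by linear_combination hcc - hb
    exact mul_right_cancel₀ h2 key

theorem trace_map_surjective (p : ℕ) (hp : p.Prime) (hp5 : 5 < p) (x y z : ZMod p) :
    ∃ A B : Matrix.SpecialLinearGroup (Fin 2) (ZMod p),
      Matrix.trace (A : Matrix (Fin 2) (Fin 2) (ZMod p)) = x ∧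
      Matrix.trace (B : Matrix (Fin 2) (Fin 2) (ZMod p)) = y ∧
      Matrix.trace ((A * B : Matrix.SpecialLinearGroup (Fin 2) (ZMod p)) :
        Matrix (Fin 2) (Fin 2) (ZMod p)) = z := by
  haveI : Fact p.Prime := ⟨hp⟩
  have hodd : p % 2 = 1 := by
    rcases hp.eq_two_or_odd with h | h
    · omega
    · exact h
  by_cases h1 : y ^ 2 - 4 ≠ 0 ∨ 4 * x - 2 * y * z ≠ 0
  · exact build p hodd x y z h1
  by_cases h2 : x ^ 2 - 4 ≠ 0 ∨ 4 * y - 2 * x * z ≠ 0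
  · obtain ⟨A, B, hA, hB, hAB⟩ := build p hodd y x z h2
    refine ⟨B, A, hB, hA, ?_⟩
    rw [← hAB]
    simp only [Matrix.SpecialLinearGroup.coe_mul]
    exact Matrix.trace_mul_comm _ _
  push_neg at h1 h2
  obtain ⟨hy4, hxz⟩ := h1
  obtain ⟨hx4, hyz⟩ := h2
  have h2' : (2 : ZMod p) ≠ 0 := two_ne_zero_zmodp p (by omega)
  have h4' : (2 * 2 : ZMod p) ≠ 0 := mul_ne_zero h2' h2'
  obtain ⟨ε, hε⟩ : ∃ ε : ZMod p, ε * 2 = x := ⟨x / 2, by field_simp⟩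
  obtain ⟨η, hη⟩ : ∃ η : ZMod p, η * 2 = y := ⟨y / 2, by field_simp⟩
  have hε2 : ε * ε = 1 := by
    apply mul_right_cancel₀ h4'
    linear_combination hx4 + (x + ε * 2) * hε
  have hη2 : η * η = 1 := by
    apply mul_right_cancel₀ h4'
    linear_combination hy4 + (y + η * 2) * hη
  have hz : ε * η + ε * η = z := by
    apply mul_right_cancel₀ h4'
    -- (2εη)·4 = z·4 ; use 8z = 4xy /... : x*hyz + 2z*hx4 gives 4xy - 8z = 0
    linear_combination 4 * ε * hη + ε * hyz + x * z * hε + z * hx4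
  refine ⟨⟨!![ε, 0; 0, ε], by simp [Matrix.det_fin_two_of, hε2]⟩,
          ⟨!![η, 0; 0, η], by simp [Matrix.det_fin_two_of, hη2]⟩, ?_, ?_, ?_⟩
  · simp only [Matrix.trace_fin_two_of]
    linear_combination hε
  · simp only [Matrix.trace_fin_two_of]
    linear_combination hη
  · show Matrix.trace (!![ε, 0; 0, ε] * !![η, 0; 0, η] : Matrix (Fin 2) (Fin 2) (ZMod p)) = z
    rw [show (!![ε, 0; 0, ε] * !![η, 0; 0, η] : Matrix (Fin 2) (Fin 2) (ZMod p)) =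
      !![ε * η, 0; 0, ε * η] from by
        ext i j; fin_cases i <;> fin_cases j <;> simp [Matrix.mul_apply, Fin.sum_univ_succ]]
    simp only [Matrix.trace_fin_two_of]
    exact hz
end

section
/- Let p be an odd prime and let A, B ∈ SL(2, 𝔽_p) satisfy tr(A B A⁻¹ B⁻¹) = 2. Then the pair (A, B) does not generate SL(2, 𝔽_p); that is, the subgroup generated by {A, B} is a proper subgroup of SL(2, 𝔽_p). -/
open Matrix

/-- Key 2×2 identity: if `det C = 0` and `tr (X*C) = 0` then `C*X*C = 0`. -/
lemma cxc_eq_zero {F : Type*} [CommRing F] (C X : Matrix (Fin 2) (Fin 2) F)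
    (hD : C.det = 0) (hS : (X * C).trace = 0) : C * X * C = 0 := by
  rw [Matrix.det_fin_two] at hD
  have hS' : X 0 0 * C 0 0 + X 0 1 * C 1 0 + (X 1 0 * C 0 1 + X 1 1 * C 1 1) = 0 := by
    simpa [Matrix.trace_fin_two, Matrix.mul_apply, Fin.sum_univ_two] using hS
  ext i j
  fin_cases i <;> fin_cases j <;> simp [Matrix.mul_apply, Fin.sum_univ_two]
  · linear_combination C 0 0 * hS' - X 1 1 * hD
  · linear_combination C 0 1 * hS' + X 0 1 * hD
  · linear_combination C 1 0 * hS' + X 1 0 * hD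
  · linear_combination C 1 1 * hS' - X 0 0 * hD

/-- Two vectors killed by a nonzero singular 2×2 matrix are proportional. -/
lemma dep_of_ker {F : Type*} [Field F] (C : Matrix (Fin 2) (Fin 2) F) (hC : C ≠ 0)
    (v w : Fin 2 → F) (hv : C.mulVec v = 0) (hw : C.mulVec w = 0) (hvne : v ≠ 0) :
    ∃ c : F, w = c • v := by
  have hv0 : C 0 0 * v 0 + C 0 1 * v 1 = 0 := by
    simpa [Matrix.mulVec, dotProduct, Fin.sum_univ_two] using congrFun hv 0
  have hv1 : C 1 0 * v 0 + C 1 1 * v 1 = 0 := by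
    simpa [Matrix.mulVec, dotProduct, Fin.sum_univ_two] using congrFun hv 1
  have hw0 : C 0 0 * w 0 + C 0 1 * w 1 = 0 := by
    simpa [Matrix.mulVec, dotProduct, Fin.sum_univ_two] using congrFun hw 0
  have hw1 : C 1 0 * w 0 + C 1 1 * w 1 = 0 := by
    simpa [Matrix.mulVec, dotProduct, Fin.sum_univ_two] using congrFun hw 1
  have hd : v 0 * w 1 - v 1 * w 0 = 0 := by
    by_contra hd
    apply hC
    ext i j
    fin_cases i <;> fin_cases j <;> simp
    · have : C 0 0 * (v 0 * w 1 - v 1 * w 0) = 0 := by linear_combination w 1 * hv0 - v 1 * hw0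
      exact (mul_eq_zero.mp this).resolve_right hd
    · have : C 0 1 * (v 0 * w 1 - v 1 * w 0) = 0 := by linear_combination v 0 * hw0 - w 0 * hv0
      exact (mul_eq_zero.mp this).resolve_right hd
    · have : C 1 0 * (v 0 * w 1 - v 1 * w 0) = 0 := by linear_combination w 1 * hv1 - v 1 * hw1
      exact (mul_eq_zero.mp this).resolve_right hd
    · have : C 1 1 * (v 0 * w 1 - v 1 * w 0) = 0 := by linear_combination v 0 * hw1 - w 0 * hv1
      exact (mul_eq_zero.mp this).resolve_right hd
  by_cases h0 : v 0 ≠ 0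
  · refine ⟨w 0 / v 0, ?_⟩
    funext i
    fin_cases i <;> simp only [Pi.smul_apply, smul_eq_mul]
    · show w 0 = w 0 / v 0 * v 0
      rw [div_mul_cancel₀ _ h0]
    · show w 1 = w 0 / v 0 * v 1
      field_simp
      linear_combination hd
  · push_neg at h0
    have h1 : v 1 ≠ 0 := by
      intro h1
      apply hvne
      funext i; fin_cases i <;> simp [h0, h1]
    refine ⟨w 1 / v 1, ?_⟩
    funext i
    fin_cases i <;> simp only [Pi.smul_apply, smul_eq_mul]
    · show w 0 = w 1 / v 1 * v 0
      field_simp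
      linear_combination -hd
    · show w 1 = w 1 / v 1 * v 1
      rw [div_mul_cancel₀ _ h1]

theorem singular_pair_not_generating (p : ℕ) (hp : p.Prime) (hodd : p ≠ 2)
    (A B : Matrix.SpecialLinearGroup (Fin 2) (ZMod p))
    (h : Matrix.trace ((A * B * A⁻¹ * B⁻¹ : Matrix.SpecialLinearGroup (Fin 2) (ZMod p)) :
        Matrix (Fin 2) (Fin 2) (ZMod p)) = 2) :
    Subgroup.closure {A, B} ≠ (⊤ : Subgroup (Matrix.SpecialLinearGroup (Fin 2) (ZMod p))) := by
  haveI : Fact p.Prime := ⟨hp⟩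
  intro htop
  let SL := Matrix.SpecialLinearGroup (Fin 2) (ZMod p)
  set Am : Matrix (Fin 2) (Fin 2) (ZMod p) := (A : Matrix (Fin 2) (Fin 2) (ZMod p)) with hAm
  set Bm : Matrix (Fin 2) (Fin 2) (ZMod p) := (B : Matrix (Fin 2) (Fin 2) (ZMod p)) with hBm
  set C : Matrix (Fin 2) (Fin 2) (ZMod p) := Am * Bm - Bm * Am with hCdef
  have honene : (1 : ZMod p) ≠ 0 := one_ne_zero
  -- explicit noncommuting elements
  let E : SL := ⟨!![1, 1; 0, 1], by simp [Matrix.det_fin_two_of]⟩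
  let E' : SL := ⟨!![1, 0; 1, 1], by simp [Matrix.det_fin_two_of]⟩
  have hEE' : E * E' ≠ E' * E := by
    intro hc
    have h2 : ((E * E' : SL) : Matrix (Fin 2) (Fin 2) (ZMod p)) 0 0 = 2 := by
      rw [Matrix.SpecialLinearGroup.coe_mul]
      show (!![1, 1; 0, 1] * !![1, 0; 1, 1] : Matrix (Fin 2) (Fin 2) (ZMod p)) 0 0 = 2
      simp [Matrix.mul_apply, Fin.sum_univ_two]
      norm_num
    have h3 : ((E' * E : SL) : Matrix (Fin 2) (Fin 2) (ZMod p)) 0 0 = 1 := by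
      rw [Matrix.SpecialLinearGroup.coe_mul]
      show (!![1, 0; 1, 1] * !![1, 1; 0, 1] : Matrix (Fin 2) (Fin 2) (ZMod p)) 0 0 = 1
      simp [Matrix.mul_apply, Fin.sum_univ_two]
    rw [hc, h3] at h2
    exact honene (by linear_combination -h2)
  -- trace and det of C
  have hcommmat : ((A * B * A⁻¹ * B⁻¹ : SL) : Matrix (Fin 2) (Fin 2) (ZMod p)) * (Bm * Am)
      = Am * Bm := by
    have hg : (A * B * A⁻¹ * B⁻¹) * (B * A) = A * B := by group
    calc ((A * B * A⁻¹ * B⁻¹ : SL) : Matrix (Fin 2) (Fin 2) (ZMod p)) * (Bm * Am)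
        = ((A * B * A⁻¹ * B⁻¹ : SL) : Matrix (Fin 2) (Fin 2) (ZMod p))
            * ((B * A : SL) : Matrix (Fin 2) (Fin 2) (ZMod p)) := by
          rw [hAm, hBm, ← Matrix.SpecialLinearGroup.coe_mul B A]
      _ = (((A * B * A⁻¹ * B⁻¹) * (B * A) : SL) : Matrix (Fin 2) (Fin 2) (ZMod p)) :=
          (Matrix.SpecialLinearGroup.coe_mul _ _).symm
      _ = ((A * B : SL) : Matrix (Fin 2) (Fin 2) (ZMod p)) := by rw [hg]
      _ = Am * Bm := Matrix.SpecialLinearGroup.coe_mul A B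
  have hdetC : C.det = 0 := by
    have hfac : C = (((A * B * A⁻¹ * B⁻¹ : SL) : Matrix (Fin 2) (Fin 2) (ZMod p)) - 1)
        * (Bm * Am) := by
      rw [sub_mul, one_mul, hcommmat]
    have hdetsub : (((A * B * A⁻¹ * B⁻¹ : SL) : Matrix (Fin 2) (Fin 2) (ZMod p)) - 1).det = 0 := by
      set M := ((A * B * A⁻¹ * B⁻¹ : SL) : Matrix (Fin 2) (Fin 2) (ZMod p)) with hM
      have hdM : M.det = 1 := Matrix.SpecialLinearGroup.det_coe _
      rw [Matrix.det_fin_two] at hdM ⊢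
      rw [Matrix.trace_fin_two] at h
      simp only [Matrix.sub_apply, Matrix.one_apply_eq,
        Matrix.one_apply_ne (by decide : (0 : Fin 2) ≠ 1),
        Matrix.one_apply_ne (by decide : (1 : Fin 2) ≠ 0)]
      linear_combination hdM - h
    rw [hfac, Matrix.det_mul, hdetsub, zero_mul]
  by_cases hC0 : C = 0
  · -- commuting case: the closure is central, contradiction with E, E'
    have hAB : A * B = B * A := by
      have hm : Am * Bm = Bm * Am := sub_eq_zero.mp hC0
      exact Subtype.coe_injective (by simpa using hm)
    have hle : Subgroup.closure {A, B} ≤ Subgroup.centralizer {A, B} := by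
      rw [Subgroup.closure_le]
      rintro x (rfl | hx)
      · rw [SetLike.mem_coe, Subgroup.mem_centralizer_iff]
        rintro g (rfl | rfl)
        · rfl
        · exact hAB.symm
      · simp only [Set.mem_singleton_iff] at hx
        subst hx
        rw [SetLike.mem_coe, Subgroup.mem_centralizer_iff]
        rintro g (rfl | rfl)
        · exact hAB
        · rfl
    rw [htop, top_le_iff] at hle
    have hA : A ∈ Subgroup.center SL := by
      rw [Subgroup.mem_center_iff]
      intro g
      have hg : g ∈ Subgroup.centralizer ({A, B} : Set SL) := hle ▸ Subgroup.mem_top g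
      exact (Subgroup.mem_centralizer_iff.mp hg A (by simp)).symm
    have hB : B ∈ Subgroup.center SL := by
      rw [Subgroup.mem_center_iff]
      intro g
      have hg : g ∈ Subgroup.centralizer ({A, B} : Set SL) := hle ▸ Subgroup.mem_top g
      exact (Subgroup.mem_centralizer_iff.mp hg B (by simp)).symm
    have hcen : Subgroup.closure ({A, B} : Set SL) ≤ Subgroup.center SL := by
      rw [Subgroup.closure_le]
      rintro x (rfl | hx)
      · exact hA
      · simp only [Set.mem_singleton_iff] at hx; subst hx; exact hB
    rw [htop, top_le_iff] at hcen
    have hEc : E ∈ Subgroup.center SL := hcen ▸ Subgroup.mem_top E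
    exact hEE' ((Subgroup.mem_center_iff.mp hEc E')).symm
  · -- non-commuting case: a common eigenvector exists
    have htrC : C.trace = 0 := by
      rw [hCdef, Matrix.trace_sub, Matrix.trace_mul_comm]
      ring
    have hCC : C * C = 0 := by
      have := cxc_eq_zero C 1 hdetC (by rw [one_mul]; exact htrC)
      simpa using this
    have hCAC : C * Am * C = 0 := by
      apply cxc_eq_zero C Am hdetC
      rw [hCdef, mul_sub, Matrix.trace_sub]
      rw [show Am * (Am * Bm) = Am * Am * Bm by rw [mul_assoc]]
      rw [Matrix.trace_mul_comm Am (Bm * Am)]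
      rw [show Bm * Am * Am = Bm * (Am * Am) by rw [mul_assoc]]
      rw [Matrix.trace_mul_comm Bm (Am * Am)]
      ring
    have hCBC : C * Bm * C = 0 := by
      apply cxc_eq_zero C Bm hdetC
      rw [hCdef, mul_sub, Matrix.trace_sub]
      rw [show Bm * (Bm * Am) = Bm * Bm * Am by rw [mul_assoc]]
      rw [Matrix.trace_mul_comm Bm (Am * Bm)]
      rw [show Am * Bm * Bm = Am * (Bm * Bm) by rw [mul_assoc]]
      rw [Matrix.trace_mul_comm Am (Bm * Bm)]
      ring
    -- pick a nonzero column of C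
    obtain ⟨i0, j0, hij⟩ : ∃ i j, C i j ≠ 0 := by
      by_contra hcon
      push_neg at hcon
      exact hC0 (by ext i j; simpa using hcon i j)
    set v : Fin 2 → ZMod p := fun i => C i j0 with hvdef
    have hvne : v ≠ 0 := fun hv => hij (by simpa [hvdef] using congrFun hv i0)
    have hCv : C.mulVec v = 0 := by
      funext i
      have := congrFun (congrFun hCC i) j0
      simpa [Matrix.mulVec, dotProduct, Matrix.mul_apply, hvdef] using this
    have hCAv : C.mulVec (Am.mulVec v) = 0 := by
      funext i
      have := congrFun (congrFun hCAC i) j0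
      rw [Matrix.mulVec_mulVec]
      simpa [Matrix.mulVec, dotProduct, Matrix.mul_apply, hvdef] using this
    have hCBv : C.mulVec (Bm.mulVec v) = 0 := by
      funext i
      have := congrFun (congrFun hCBC i) j0
      rw [Matrix.mulVec_mulVec]
      simpa [Matrix.mulVec, dotProduct, Matrix.mul_apply, hvdef] using this
    obtain ⟨a, ha⟩ := dep_of_ker C hC0 v (Am.mulVec v) hCv hCAv hvne
    obtain ⟨b, hb⟩ := dep_of_ker C hC0 v (Bm.mulVec v) hCv hCBv hvne
    -- the stabilizer of the line spanned by v
    let H : Subgroup SL :=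
      { carrier := {M : SL | ∃ c : ZMod p, (M : Matrix (Fin 2) (Fin 2) (ZMod p)).mulVec v = c • v}
        one_mem' := ⟨1, by simp⟩
        mul_mem' := by
          rintro M N ⟨c, hc⟩ ⟨d, hd⟩
          refine ⟨c * d, ?_⟩
          rw [Matrix.SpecialLinearGroup.coe_mul, ← Matrix.mulVec_mulVec, hd,
            Matrix.mulVec_smul, hc, smul_smul, mul_comm]
        inv_mem' := by
          rintro M ⟨c, hc⟩
          have hMinv : ((M⁻¹ : SL) : Matrix (Fin 2) (Fin 2) (ZMod p))
              * (M : Matrix (Fin 2) (Fin 2) (ZMod p)) = 1 := by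
            rw [← Matrix.SpecialLinearGroup.coe_mul, inv_mul_cancel,
              Matrix.SpecialLinearGroup.coe_one]
          have hid : ((M⁻¹ : SL) : Matrix (Fin 2) (Fin 2) (ZMod p)).mulVec
              ((M : Matrix (Fin 2) (Fin 2) (ZMod p)).mulVec v) = v := by
            rw [Matrix.mulVec_mulVec, hMinv, Matrix.one_mulVec]
          have hcne : c ≠ 0 := by
            intro hc0
            subst hc0
            rw [hc, zero_smul] at hid
            apply hvne
            rw [← hid]
            simp [Matrix.mulVec_zero]
          refine ⟨c⁻¹, ?_⟩
          have : ((M⁻¹ : SL) : Matrix (Fin 2) (Fin 2) (ZMod p)).mulVec (c • v) = v := by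
            rw [← hc]; exact hid
          calc ((M⁻¹ : SL) : Matrix (Fin 2) (Fin 2) (ZMod p)).mulVec v
              = c⁻¹ • ((M⁻¹ : SL) : Matrix (Fin 2) (Fin 2) (ZMod p)).mulVec (c • v) := by
                rw [Matrix.mulVec_smul, smul_smul, inv_mul_cancel₀ hcne, one_smul]
            _ = c⁻¹ • v := by rw [this] }
    have hAH : A ∈ H := ⟨a, ha ▸ rfl⟩
    have hBH : B ∈ H := ⟨b, hb ▸ rfl⟩
    have hHtop : H = ⊤ := by
      rw [← top_le_iff, ← htop, Subgroup.closure_le]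
      rintro x (rfl | hx)
      · exact hAH
      · simp only [Set.mem_singleton_iff] at hx; subst hx; exact hBH
    -- construct an element of SL2 moving the line spanned by v
    obtain ⟨w0, w1, hwdet⟩ : ∃ w0 w1 : ZMod p, v 0 * w1 - v 1 * w0 = 1 := by
      by_cases h0 : v 0 ≠ 0
      · exact ⟨0, (v 0)⁻¹, by field_simp; ring⟩
      · push_neg at h0
        have h1 : v 1 ≠ 0 := by
          intro h1
          exact hvne (funext fun i => by fin_cases i <;> simp [h0, h1])
        exact ⟨-(v 1)⁻¹, 0, by field_simp [h0]; ring⟩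
    let g : SL := ⟨!![v 0, w0; v 1, w1], by
      rw [Matrix.det_fin_two_of]; linear_combination hwdet⟩
    let g' : SL := ⟨!![w0, -(v 0); w1, -(v 1)], by
      rw [Matrix.det_fin_two_of]; linear_combination hwdet⟩
    let Mw : SL := g' * g⁻¹
    have hge : (g : Matrix (Fin 2) (Fin 2) (ZMod p)).mulVec ![1, 0] = v := by
      funext i
      fin_cases i <;> simp [g, Matrix.mulVec, dotProduct, Fin.sum_univ_two]
    have hginv : ((g⁻¹ : SL) : Matrix (Fin 2) (Fin 2) (ZMod p)).mulVec v = ![1, 0] := by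
      rw [← hge, Matrix.mulVec_mulVec, ← Matrix.SpecialLinearGroup.coe_mul, inv_mul_cancel,
        Matrix.SpecialLinearGroup.coe_one, Matrix.one_mulVec]
    have hMwv : (Mw : Matrix (Fin 2) (Fin 2) (ZMod p)).mulVec v = ![w0, w1] := by
      rw [show (Mw : Matrix (Fin 2) (Fin 2) (ZMod p))
          = (g' : Matrix (Fin 2) (Fin 2) (ZMod p)) * ((g⁻¹ : SL) : Matrix (Fin 2) (Fin 2) (ZMod p))
          from Matrix.SpecialLinearGroup.coe_mul g' g⁻¹]
      rw [← Matrix.mulVec_mulVec, hginv]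
      funext i
      fin_cases i <;> simp [g', Matrix.mulVec, dotProduct, Fin.sum_univ_two]
    have hMwH : Mw ∈ H := hHtop ▸ Subgroup.mem_top Mw
    obtain ⟨c, hc⟩ := hMwH
    rw [hMwv] at hc
    have hc0 : w0 = c * v 0 := by simpa using congrFun hc 0
    have hc1 : w1 = c * v 1 := by simpa using congrFun hc 1
    apply honene
    linear_combination -hwdet + v 0 * hc1 - v 1 * hc0
end

section
/- Let p be an odd prime and let (x, y, z) ∈ 𝔽_p³ satisfy x² + y² + z² − xyz = 4 (a singular triple). Then no coordinate of (x, y, z) is hyperbolic while another coordinate is elliptic; moreover exactly one of the following holds: (i) at least two of the coordinates are hyperbolic, (ii) at least two of the coordinates are elliptic, (iii) all three coordinates are parabolic. -/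
/-- `t` is hyperbolic: `t² - 4` is a nonzero square. -/
def IsHyperbolic {p : ℕ} (t : ZMod p) : Prop :=
  ∃ a : ZMod p, a ≠ 0 ∧ t ^ 2 - 4 = a ^ 2

/-- `t` is elliptic: `t² - 4` is not a square. -/
def IsElliptic {p : ℕ} (t : ZMod p) : Prop :=
  ¬ ∃ a : ZMod p, t ^ 2 - 4 = a ^ 2

/-- `t` is parabolic: `t = ±2`. -/
def IsParabolic {p : ℕ} (t : ZMod p) : Prop :=
  t = 2 ∨ t = -2

/-!
The identity `(x² - 4)(y² - 4) = (2z - xy)²`, valid on the singular surface, says that the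
discriminants `t² - 4` of any two coordinates differ by a square factor. Hence a nonzero square
and a non-square cannot occur together, i.e. hyperbolic and elliptic coordinates never coexist.
Moreover, if two coordinates are `±2`, the equation becomes `(x ∓ 2)² = 0`, so the third one is
parabolic as well. The trichotomy then follows by pure bookkeeping.
-/

section SingularTriple

variable {R : Type*} [CommRing R] {x y z : R}

def IsSingularTriple (x y z : R) : Prop :=
  x ^ 2 + y ^ 2 + z ^ 2 - x * y * z = 4

theorem IsSingularTriple.rotate (h : IsSingularTriple x y z) : IsSingularTriple y z x := by
  unfold IsSingularTriple at *; linear_combination h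

theorem IsSingularTriple.swap (h : IsSingularTriple x y z) : IsSingularTriple y x z := by
  unfold IsSingularTriple at *; linear_combination h

theorem IsSingularTriple.isSquare_discr_mul_discr (h : IsSingularTriple x y z) :
    IsSquare ((x ^ 2 - 4) * (y ^ 2 - 4)) :=
  ⟨2 * z - x * y, by unfold IsSingularTriple at h; linear_combination (-4) * h⟩

theorem IsSingularTriple.isSquare_discr_mul_discr_of_mem (h : IsSingularTriple x y z) {s t : R}
    (hs : s = x ∨ s = y ∨ s = z) (ht : t = x ∨ t = y ∨ t = z) :
    IsSquare ((s ^ 2 - 4) * (t ^ 2 - 4)) := by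
  rcases hs with rfl | rfl | rfl <;> rcases ht with rfl | rfl | rfl
  exacts [.mul_self _, h.isSquare_discr_mul_discr, h.rotate.rotate.swap.isSquare_discr_mul_discr,
    h.swap.isSquare_discr_mul_discr, .mul_self _, h.rotate.isSquare_discr_mul_discr,
    h.rotate.rotate.isSquare_discr_mul_discr, h.rotate.swap.isSquare_discr_mul_discr, .mul_self _]

theorem IsSingularTriple.eq_two_or_eq_neg_two [NoZeroDivisors R] (h : IsSingularTriple x y z)
    (hy : y = 2 ∨ y = -2) (hz : z = 2 ∨ z = -2) : x = 2 ∨ x = -2 := by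
  unfold IsSingularTriple at h
  have hsq : (x - 2) ^ 2 = 0 ∨ (x + 2) ^ 2 = 0 := by
    rcases hy with rfl | rfl <;> rcases hz with rfl | rfl
    exacts [.inl (by linear_combination h), .inr (by linear_combination h),
      .inr (by linear_combination h), .inl (by linear_combination h)]
  rcases hsq with hsq | hsq
  · exact .inl (sub_eq_zero.mp (sq_eq_zero_iff.mp hsq))
  · exact .inr (eq_neg_of_add_eq_zero_left (sq_eq_zero_iff.mp hsq))

end SingularTriple

theorem IsSquare.of_mul_left {K : Type*} [Field K] {a b : K} (ha₀ : a ≠ 0) (ha : IsSquare a)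
    (hab : IsSquare (a * b)) : IsSquare b := by
  simpa [ha₀] using hab.div ha

section Classification

variable {p : ℕ}

theorem isElliptic_iff {t : ZMod p} : IsElliptic t ↔ ¬ IsSquare (t ^ 2 - 4) := by
  simp only [IsElliptic, IsSquare, sq]

theorem isHyperbolic_iff [Fact p.Prime] {t : ZMod p} :
    IsHyperbolic t ↔ t ^ 2 - 4 ≠ 0 ∧ IsSquare (t ^ 2 - 4) := by
  simp only [IsHyperbolic, IsSquare, ← sq]
  constructor
  · rintro ⟨a, ha, h⟩
    exact ⟨by simpa [h], a, h⟩
  · rintro ⟨h0, a, h⟩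
    exact ⟨a, by rintro rfl; simp_all, h⟩

theorem isParabolic_iff [Fact p.Prime] {t : ZMod p} : IsParabolic t ↔ t ^ 2 - 4 = 0 := by
  rw [IsParabolic, sub_eq_zero, show (4 : ZMod p) = 2 ^ 2 by norm_num, sq_eq_sq_iff_eq_or_eq_neg]

theorem IsParabolic.not_isElliptic {t : ZMod p} (h : IsParabolic t) : ¬ IsElliptic t :=
  fun he => he ⟨0, by rcases h with rfl | rfl <;> ring⟩

variable [Fact p.Prime]

theorem IsHyperbolic.not_isParabolic {t : ZMod p} (h : IsHyperbolic t) : ¬ IsParabolic t := by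
  rw [isParabolic_iff]; exact (isHyperbolic_iff.mp h).1

theorem isHyperbolic_or_isParabolic_or_isElliptic (t : ZMod p) :
    IsHyperbolic t ∨ IsParabolic t ∨ IsElliptic t := by
  rw [isHyperbolic_iff, isParabolic_iff, isElliptic_iff]
  tauto

theorem not_isHyperbolic_and_isElliptic_of_isSquare_mul {s t : ZMod p}
    (h : IsSquare ((s ^ 2 - 4) * (t ^ 2 - 4))) : ¬ (IsHyperbolic s ∧ IsElliptic t) := by
  rw [isHyperbolic_iff, isElliptic_iff]
  rintro ⟨⟨hs₀, hs⟩, ht⟩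
  exact ht (hs.of_mul_left hs₀ h)

end Classification

theorem pair_of_exists_of_closed {α : Type*} {A B : α → Prop} {x y z : α}
    (hx : A x ∨ B x) (hy : A y ∨ B y) (hz : A z ∨ B z) (hAB : ∀ t, A t → ¬ B t)
    (hBx : B y → B z → B x) (hBy : B z → B x → B y) (hBz : B x → B y → B z)
    (hA : A x ∨ A y ∨ A z) : (A x ∧ A y) ∨ (A x ∧ A z) ∨ (A y ∧ A z) := by
  have := hAB x; have := hAB y; have := hAB z
  clear hAB
  rcases hx with hx | hx <;> rcases hy with hy | hy <;> rcases hz with hz | hz <;> tauto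

theorem exactly_one_pair_or_all_of_trichotomy {α : Type*} {H P E : α → Prop} {x y z : α}
    (htri : ∀ t, H t ∨ P t ∨ E t) (hHP : ∀ t, H t → ¬ P t) (hPE : ∀ t, P t → ¬ E t)
    (hmix : ∀ s t, (s = x ∨ s = y ∨ s = z) → (t = x ∨ t = y ∨ t = z) → ¬ (H s ∧ E t))
    (hPx : P y → P z → P x) (hPy : P z → P x → P y) (hPz : P x → P y → P z) :
    (((H x ∧ H y) ∨ (H x ∧ H z) ∨ (H y ∧ H z)) ∧
      ¬ ((E x ∧ E y) ∨ (E x ∧ E z) ∨ (E y ∧ E z)) ∧ ¬ (P x ∧ P y ∧ P z)) ∨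
    (¬ ((H x ∧ H y) ∨ (H x ∧ H z) ∨ (H y ∧ H z)) ∧
      ((E x ∧ E y) ∨ (E x ∧ E z) ∨ (E y ∧ E z)) ∧ ¬ (P x ∧ P y ∧ P z)) ∨
    (¬ ((H x ∧ H y) ∨ (H x ∧ H z) ∨ (H y ∧ H z)) ∧
      ¬ ((E x ∧ E y) ∨ (E x ∧ E z) ∨ (E y ∧ E z)) ∧ (P x ∧ P y ∧ P z)) := by
  have hHE : H x ∨ H y ∨ H z → ¬ E x ∧ ¬ E y ∧ ¬ E z := by
    intro hH
    refine ⟨fun he => ?_, fun he => ?_, fun he => ?_⟩ <;>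
      rcases hH with hh | hh | hh <;> exact hmix _ _ (by simp) (by simp) ⟨hh, he⟩
  by_cases hH : H x ∨ H y ∨ H z
  · obtain ⟨nEx, nEy, nEz⟩ := hHE hH
    refine .inl ⟨pair_of_exists_of_closed ?_ ?_ ?_ hHP hPx hPy hPz hH, by simp [nEx, nEy, nEz], ?_⟩
    · exact (htri x).imp_right (·.resolve_right nEx)
    · exact (htri y).imp_right (·.resolve_right nEy)
    · exact (htri z).imp_right (·.resolve_right nEz)
    · rintro ⟨px, py, pz⟩
      rcases hH with h | h | h
      exacts [hHP x h px, hHP y h py, hHP z h pz]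
  simp only [not_or] at hH
  obtain ⟨nHx, nHy, nHz⟩ := hH
  have hx := (htri x).resolve_left nHx
  have hy := (htri y).resolve_left nHy
  have hz := (htri z).resolve_left nHz
  by_cases hE : E x ∨ E y ∨ E z
  · refine .inr (.inl ⟨by simp [nHx, nHy, nHz], pair_of_exists_of_closed hx.symm hy.symm hz.symm
      (fun t ht hp => hPE t hp ht) hPx hPy hPz hE, ?_⟩)
    rintro ⟨px, py, pz⟩
    rcases hE with h | h | h
    exacts [hPE x px h, hPE y py h, hPE z pz h]
  · simp only [not_or] at hE
    exact .inr (.inr ⟨by simp [nHx, nHy, nHz], by simp [hE], hx.resolve_right hE.1,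
      hy.resolve_right hE.2.1, hz.resolve_right hE.2.2⟩)

theorem singular_triple_geometry_general (p : ℕ) (hp : p.Prime) (x y z : ZMod p)
    (hsing : x ^ 2 + y ^ 2 + z ^ 2 - x * y * z = 4) :
    (∀ s t : ZMod p, (s = x ∨ s = y ∨ s = z) → (t = x ∨ t = y ∨ t = z) →
      ¬ (IsHyperbolic s ∧ IsElliptic t)) ∧
    ((((IsHyperbolic x ∧ IsHyperbolic y) ∨ (IsHyperbolic x ∧ IsHyperbolic z) ∨
        (IsHyperbolic y ∧ IsHyperbolic z)) ∧
      ¬ ((IsElliptic x ∧ IsElliptic y) ∨ (IsElliptic x ∧ IsElliptic z) ∨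
        (IsElliptic y ∧ IsElliptic z)) ∧
      ¬ (IsParabolic x ∧ IsParabolic y ∧ IsParabolic z)) ∨
    (¬ ((IsHyperbolic x ∧ IsHyperbolic y) ∨ (IsHyperbolic x ∧ IsHyperbolic z) ∨
        (IsHyperbolic y ∧ IsHyperbolic z)) ∧
      ((IsElliptic x ∧ IsElliptic y) ∨ (IsElliptic x ∧ IsElliptic z) ∨
        (IsElliptic y ∧ IsElliptic z)) ∧
      ¬ (IsParabolic x ∧ IsParabolic y ∧ IsParabolic z)) ∨
    (¬ ((IsHyperbolic x ∧ IsHyperbolic y) ∨ (IsHyperbolic x ∧ IsHyperbolic z) ∨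
        (IsHyperbolic y ∧ IsHyperbolic z)) ∧
      ¬ ((IsElliptic x ∧ IsElliptic y) ∨ (IsElliptic x ∧ IsElliptic z) ∨
        (IsElliptic y ∧ IsElliptic z)) ∧
      (IsParabolic x ∧ IsParabolic y ∧ IsParabolic z))) := by
  have := Fact.mk hp
  have h : IsSingularTriple x y z := hsing
  have hmix : ∀ s t : ZMod p, (s = x ∨ s = y ∨ s = z) → (t = x ∨ t = y ∨ t = z) →
      ¬ (IsHyperbolic s ∧ IsElliptic t) := fun _ _ hs ht =>
    not_isHyperbolic_and_isElliptic_of_isSquare_mul (h.isSquare_discr_mul_discr_of_mem hs ht)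
  exact ⟨hmix, exactly_one_pair_or_all_of_trichotomy isHyperbolic_or_isParabolic_or_isElliptic
    (fun _ => IsHyperbolic.not_isParabolic) (fun _ => IsParabolic.not_isElliptic) hmix
    h.eq_two_or_eq_neg_two h.rotate.eq_two_or_eq_neg_two h.rotate.rotate.eq_two_or_eq_neg_two⟩

theorem singular_triple_geometry (p : ℕ) (hp : p.Prime) (hodd : p ≠ 2) (x y z : ZMod p)
    (hsing : x ^ 2 + y ^ 2 + z ^ 2 - x * y * z = 4) :
    (∀ s t : ZMod p, (s = x ∨ s = y ∨ s = z) → (t = x ∨ t = y ∨ t = z) →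
      ¬ (IsHyperbolic s ∧ IsElliptic t)) ∧
    ((((IsHyperbolic x ∧ IsHyperbolic y) ∨ (IsHyperbolic x ∧ IsHyperbolic z) ∨
        (IsHyperbolic y ∧ IsHyperbolic z)) ∧
      ¬ ((IsElliptic x ∧ IsElliptic y) ∨ (IsElliptic x ∧ IsElliptic z) ∨
        (IsElliptic y ∧ IsElliptic z)) ∧
      ¬ (IsParabolic x ∧ IsParabolic y ∧ IsParabolic z)) ∨
    (¬ ((IsHyperbolic x ∧ IsHyperbolic y) ∨ (IsHyperbolic x ∧ IsHyperbolic z) ∨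
        (IsHyperbolic y ∧ IsHyperbolic z)) ∧
      ((IsElliptic x ∧ IsElliptic y) ∨ (IsElliptic x ∧ IsElliptic z) ∨
        (IsElliptic y ∧ IsElliptic z)) ∧
      ¬ (IsParabolic x ∧ IsParabolic y ∧ IsParabolic z)) ∨
    (¬ ((IsHyperbolic x ∧ IsHyperbolic y) ∨ (IsHyperbolic x ∧ IsHyperbolic z) ∨
        (IsHyperbolic y ∧ IsHyperbolic z)) ∧
      ¬ ((IsElliptic x ∧ IsElliptic y) ∨ (IsElliptic x ∧ IsElliptic z) ∨
        (IsElliptic y ∧ IsElliptic z)) ∧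
      (IsParabolic x ∧ IsParabolic y ∧ IsParabolic z))) :=
  singular_triple_geometry_general p hp x y z hsing
end

section
/- Let p be a prime with p > 5 and let A, B ∈ SL(2, 𝔽_p). Then tr(A B A⁻¹ B⁻¹) = 2 if and only if A and B have a common eigenvector over 𝔽_{p²}; that is, if and only if there exist a nonzero vector v ∈ 𝔽_{p²}² and scalars λ, μ ∈ 𝔽_{p²} such that Av = λv and Bv = μv (where A and B are viewed in SL(2, 𝔽_{p²}) via the canonical embedding 𝔽_p → 𝔽_{p²}). -/
open Matrix

lemma sle_sq (p : ℕ) [Fact p.Prime] (hp5 : 5 < p) (x : ZMod p) :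
    IsSquare (algebraMap (ZMod p) (GaloisField p 2) x) := by
  set K := GaloisField p 2
  have hp : p.Prime := Fact.out
  have hpodd : p ≠ 2 := by omega
  by_cases hx : x = 0
  · simp [hx]
  have ha : algebraMap (ZMod p) K x ≠ 0 := by
    simp only [ne_eq, map_eq_zero]; exact hx
  have hchar : ringChar K = p := by
    have : CharP K p := inferInstance
    exact (ringChar.eq K p).symm ▸ rfl
  haveI : Finite K := Nat.finite_of_card_ne_zero (by
    rw [GaloisField.card p 2 (by norm_num)]
    positivity)
  haveI : Fintype K := Fintype.ofFinite K
  have hcard : Fintype.card K = p ^ 2 := by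
    rw [← Nat.card_eq_fintype_card]
    exact GaloisField.card p 2 (by norm_num)
  rw [FiniteField.isSquare_iff (by rw [hchar]; exact hpodd) ha]
  have h1 : x ^ (p - 1) = 1 := ZMod.pow_card_sub_one_eq_one hx
  have hk : p ^ 2 / 2 = (p - 1) * ((p + 1) / 2) := by
    obtain ⟨k, hk'⟩ := hp.odd_of_ne_two hpodd
    subst hk'
    have hsq : (2 * k + 1) ^ 2 = 4 * (k * k) + 4 * k + 1 := by ring
    have h1 : (2 * k + 1 + 1) / 2 = k + 1 := by omega
    have h2 : (2 * k + 1 - 1) * ((2 * k + 1 + 1) / 2) = 2 * (k * k) + 2 * k := by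
      have h0 : 2 * k + 1 - 1 = 2 * k := by omega
      rw [h0, h1]; ring
    omega
  rw [hcard, hk, pow_mul, ← map_pow, h1, _root_.map_one, one_pow]

section fieldpart
variable {K : Type*} [Field K]

section helpers
noncomputable def sle_inv2 (M : Matrix (Fin 2) (Fin 2) K) : Matrix (Fin 2) (Fin 2) K :=
  Matrix.of ![![M 1 1, -M 0 1], ![-M 1 0, M 0 0]]

lemma sle_mul_inv2 (M : Matrix (Fin 2) (Fin 2) K) (h : M.det = 1) :
    M * sle_inv2 M = 1 := by
  rw [det_fin_two] at h
  ext i j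
  fin_cases i <;> fin_cases j <;>
    simp [sle_inv2, Matrix.mul_apply, Fin.sum_univ_two, Matrix.one_apply] <;>
    first | linear_combination h | ring

lemma sle_inv_unique {M X Y : Matrix (Fin 2) (Fin 2) K} (hX : M * X = 1) (hY : M * Y = 1) :
    X = Y := by
  have hX' : X * M = 1 := mul_eq_one_comm.mp hX
  calc X = X * (M * Y) := by rw [hY, mul_one]
    _ = (X * M) * Y := by rw [mul_assoc]
    _ = Y := by rw [hX', one_mul]

lemma sle_det_sub_smul (M : Matrix (Fin 2) (Fin 2) K) (x : K) :
    (M - x • 1).det = M.det - M.trace * x + x ^ 2 := by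
  simp [det_fin_two, trace_fin_two, Matrix.one_apply]
  ring

lemma sle_eig_ex (M : Matrix (Fin 2) (Fin 2) K) (lam : K)
    (h : M.det - M.trace * lam + lam ^ 2 = 0) :
    ∃ v : Fin 2 → K, v ≠ 0 ∧ M.mulVec v = lam • v := by
  have h0 : (M - lam • 1).det = 0 := by rw [sle_det_sub_smul]; exact h
  obtain ⟨v, hv, hMv⟩ := (Matrix.exists_mulVec_eq_zero_iff).mpr h0
  refine ⟨v, hv, ?_⟩
  rw [Matrix.sub_mulVec, Matrix.smul_mulVec, Matrix.one_mulVec, sub_eq_zero] at hMv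
  exact hMv

lemma sle_root_quad (t s : K) (h2 : (2:K) ≠ 0) (hs : s ^ 2 = t ^ 2 - 4) :
    ∃ lam : K, 1 - t * lam + lam ^ 2 = 0 := by
  refine ⟨(t + s) / 2, ?_⟩
  field_simp
  linear_combination hs

def sle_colMat (u w : Fin 2 → K) : Matrix (Fin 2) (Fin 2) K :=
  Matrix.of ![![u 0, w 0], ![u 1, w 1]]

lemma sle_colMat_col0 (u w : Fin 2 → K) : (fun i => sle_colMat u w i 0) = u := by
  funext i; fin_cases i <;> simp [sle_colMat]

lemma sle_colMat_col1 (u w : Fin 2 → K) : (fun i => sle_colMat u w i 1) = w := by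
  funext i; fin_cases i <;> simp [sle_colMat]

lemma sle_colMat_mulVec (u w : Fin 2 → K) (x : Fin 2 → K) :
    (sle_colMat u w).mulVec x = x 0 • u + x 1 • w := by
  funext i; fin_cases i <;>
    (simp [sle_colMat, Matrix.mulVec, dotProduct, Fin.sum_univ_two]; ring)

lemma sle_det_colMat_ne (u w : Fin 2 → K)
    (h : ∀ x0 x1 : K, x0 • u + x1 • w = 0 → x0 = 0 ∧ x1 = 0) :
    (sle_colMat u w).det ≠ 0 := by
  intro hdet
  obtain ⟨x, hx, hPx⟩ := Matrix.exists_mulVec_eq_zero_iff.mpr hdet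
  rw [sle_colMat_mulVec] at hPx
  obtain ⟨h0, h1⟩ := h _ _ hPx
  apply hx
  funext i; fin_cases i <;> simp [h0, h1]

lemma sle_col_eigen0 {B P M : Matrix (Fin 2) (Fin 2) K} (hBP : B * P = P * M)
    (hc : M 1 0 = 0) : B.mulVec (fun i => P i 0) = M 0 0 • (fun i => P i 0) := by
  funext i
  have h := congrFun (congrFun hBP i) 0
  simp only [Matrix.mul_apply, Fin.sum_univ_two] at h
  simp only [Matrix.mulVec, dotProduct, Fin.sum_univ_two, Pi.smul_apply, smul_eq_mul]
  rw [h, hc]; ring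

lemma sle_col_eigen1 {B P M : Matrix (Fin 2) (Fin 2) K} (hBP : B * P = P * M)
    (hb : M 0 1 = 0) : B.mulVec (fun i => P i 1) = M 1 1 • (fun i => P i 1) := by
  funext i
  have h := congrFun (congrFun hBP i) 1
  simp only [Matrix.mul_apply, Fin.sum_univ_two] at h
  simp only [Matrix.mulVec, dotProduct, Fin.sum_univ_two, Pi.smul_apply, smul_eq_mul]
  rw [h, hb]; ring

lemma sle_mul_colMat (A : Matrix (Fin 2) (Fin 2) K) (u w : Fin 2 → K) :
    A * sle_colMat u w = sle_colMat (A.mulVec u) (A.mulVec w) := by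
  ext i j
  fin_cases i <;> fin_cases j <;>
    simp [sle_colMat, Matrix.mul_apply, Matrix.mulVec, dotProduct, Fin.sum_univ_two]

lemma sle_colMat_mul (u w : Fin 2 → K) (T : Matrix (Fin 2) (Fin 2) K) :
    sle_colMat u w * T =
      sle_colMat (T 0 0 • u + T 1 0 • w) (T 0 1 • u + T 1 1 • w) := by
  ext i j
  fin_cases i <;> fin_cases j <;>
    (simp [sle_colMat, Matrix.mul_apply, Fin.sum_univ_two]; ring)

lemma sle_conj_trace {P Q T T' A A₁ B B₁ : Matrix (Fin 2) (Fin 2) K}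
    (hPQ : P * Q = 1) (hTT' : T * T' = 1) (hA : A * A₁ = 1)
    (hAP : A * P = P * T) :
    (A * B * A₁ * B₁).trace = (T * (Q * B * P) * T' * (Q * B₁ * P)).trace := by
  have hQP : Q * P = 1 := mul_eq_one_comm.mp hPQ
  have hA' : A = P * T * Q := by
    calc A = (A * P) * Q := by rw [mul_assoc, hPQ, mul_one]
      _ = P * T * Q := by rw [hAP]
  have hA₁ : A₁ = P * T' * Q := by
    refine sle_inv_unique hA ?_
    rw [hA']
    calc P * T * Q * (P * T' * Q) = P * T * (Q * P) * T' * Q := by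
          simp only [mul_assoc]
      _ = 1 := by
          rw [hQP, mul_one, mul_assoc P T T', hTT', mul_one, hPQ]
  have key : A * B * A₁ * B₁ = P * (T * (Q * B * P) * T' * (Q * B₁ * P)) * Q := by
    rw [hA', hA₁]
    simp only [mul_assoc]
    rw [hPQ]
    simp only [mul_one]
  rw [key, Matrix.trace_mul_comm, ← mul_assoc, hQP, one_mul]

lemma sle_diag_core (lam mu : K) (hlm : lam * mu = 1) (M : Matrix (Fin 2) (Fin 2) K)
    (hdM : M.det = 1)
    (htr : (Matrix.of ![![lam,0],![0,mu]] * M * Matrix.of ![![mu,0],![0,lam]] *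
      sle_inv2 M).trace = 2) :
    M 0 1 * M 1 0 * (lam - mu) ^ 2 = 0 := by
  rw [det_fin_two] at hdM
  simp only [sle_inv2, trace_fin_two, Matrix.mul_apply, Fin.sum_univ_two, Matrix.of_apply,
    Matrix.cons_val', Matrix.cons_val_zero, Matrix.cons_val_one, Matrix.head_cons,
    Matrix.empty_val', Matrix.cons_val_fin_one, Matrix.head_fin_const] at htr
  linear_combination (-1 : K) * htr + 2 * lam * mu * hdM + 2 * hlm

lemma sle_unip_core (lam : K) (hl2 : lam ^ 2 = 1) (M : Matrix (Fin 2) (Fin 2) K)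
    (hdM : M.det = 1)
    (htr : (Matrix.of ![![lam,1],![0,lam]] * M * Matrix.of ![![lam,-1],![0,lam]] *
      sle_inv2 M).trace = 2) :
    M 1 0 ^ 2 = 0 := by
  rw [det_fin_two] at hdM
  simp only [sle_inv2, trace_fin_two, Matrix.mul_apply, Fin.sum_univ_two, Matrix.of_apply,
    Matrix.cons_val', Matrix.cons_val_zero, Matrix.cons_val_one, Matrix.head_cons,
    Matrix.empty_val', Matrix.cons_val_fin_one, Matrix.head_fin_const] at htr
  linear_combination htr - 2 * lam ^ 2 * hdM - 2 * hl2

lemma sle_cayley (A : Matrix (Fin 2) (Fin 2) K) (lam : K) (hdA : A.det = 1)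
    (ht : A.trace = 2 * lam) (hl2 : lam ^ 2 = 1) :
    (A - lam • 1) * (A - lam • 1) = 0 := by
  rw [det_fin_two] at hdA
  rw [trace_fin_two] at ht
  ext i j
  fin_cases i <;> fin_cases j <;>
    (simp [Matrix.mul_apply, Fin.sum_univ_two, Matrix.one_apply] <;>
     first
       | linear_combination hl2 - hdA + (A 0 0) * ht
       | linear_combination (A 0 1) * ht
       | linear_combination (A 1 0) * ht
       | linear_combination hl2 - hdA + (A 1 1) * ht)
end helpers

lemma sle_forward (h2 : (2:K) ≠ 0)
    (A B A₁ B₁ : Matrix (Fin 2) (Fin 2) K) (hA : A * A₁ = 1) (hB : B * B₁ = 1)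
    (hdA : A.det = 1) (hdB : B.det = 1)
    (hsA : ∃ s : K, s ^ 2 = A.trace ^ 2 - 4) (hsB : ∃ s : K, s ^ 2 = B.trace ^ 2 - 4)
    (htr : (A * B * A₁ * B₁).trace = 2) :
    ∃ v : Fin 2 → K, v ≠ 0 ∧ ∃ l m : K, A.mulVec v = l • v ∧ B.mulVec v = m • v := by
  obtain ⟨sA, hsA⟩ := hsA
  obtain ⟨lam, hlam⟩ := sle_root_quad A.trace sA h2 hsA
  have hlam0 : lam ≠ 0 := by
    intro h; rw [h] at hlam; simp at hlam
  by_cases hAs : A = lam • 1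
  · -- A is scalar
    obtain ⟨sB, hsB⟩ := hsB
    obtain ⟨m, hm⟩ := sle_root_quad B.trace sB h2 hsB
    obtain ⟨v, hv, hBv⟩ := sle_eig_ex B m (by rw [hdB]; linear_combination hm)
    refine ⟨v, hv, lam, m, ?_, hBv⟩
    rw [hAs, Matrix.smul_mulVec, Matrix.one_mulVec]
  · by_cases hl2 : lam ^ 2 = 1
    · -- unipotent case
      have ht2 : A.trace = 2 * lam := by
        have h' : A.trace * lam = 2 * lam * lam := by
          linear_combination -hlam - hl2
        exact mul_right_cancel₀ hlam0 h'
      set N : Matrix (Fin 2) (Fin 2) K := A - lam • 1 with hN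
      have hNN : N * N = 0 := sle_cayley A lam hdA ht2 hl2
      have hNne : N ≠ 0 := by
        intro h
        apply hAs
        rw [← sub_eq_zero]; exact h
      have : ∃ u : Fin 2 → K, N.mulVec u ≠ 0 := by
        by_contra hcon
        push_neg at hcon
        apply hNne
        ext i j
        have h := congrFun (hcon (Pi.single j 1)) i
        simpa using h
      obtain ⟨u, hu⟩ := this
      set w : Fin 2 → K := N.mulVec u with hw
      have hNw : N.mulVec w = 0 := by
        rw [hw, Matrix.mulVec_mulVec, hNN, Matrix.zero_mulVec]
      have hAw : A.mulVec w = lam • w := by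
        have h : A.mulVec w - lam • w = N.mulVec w := by
          rw [hN, Matrix.sub_mulVec, Matrix.smul_mulVec, Matrix.one_mulVec]
        rw [hNw, sub_eq_zero] at h
        exact h
      have hAu : A.mulVec u = w + lam • u := by
        have h : A.mulVec u - lam • u = N.mulVec u := by
          rw [hN, Matrix.sub_mulVec, Matrix.smul_mulVec, Matrix.one_mulVec]
        rw [← hw] at h
        linear_combination (norm := module) h
      set P := sle_colMat w u with hP
      -- independence
      have hdP : P.det ≠ 0 := by
        refine sle_det_colMat_ne w u ?_
        intro x0 x1 hx
        have h1 : x1 • w = 0 := by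
          have := congrArg (N.mulVec ·) hx
          simp only [Matrix.mulVec_add, Matrix.mulVec_smul, hNw, ← hw, Matrix.mulVec_zero,
            smul_zero, zero_add] at this
          exact this
        have hx1 : x1 = 0 := by
          rcases smul_eq_zero.mp h1 with h | h
          · exact h
          · exact absurd h hu
        have hx0 : x0 = 0 := by
          rw [hx1, zero_smul, add_zero] at hx
          rcases smul_eq_zero.mp hx with h | h
          · exact h
          · exact absurd h hu
        exact ⟨hx0, hx1⟩
      set T : Matrix (Fin 2) (Fin 2) K := Matrix.of ![![lam,1],![0,lam]] with hT
      set T' : Matrix (Fin 2) (Fin 2) K := Matrix.of ![![lam,-1],![0,lam]] with hT'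
      have hTT' : T * T' = 1 := by
        ext i j
        fin_cases i <;> fin_cases j <;>
          simp [hT, hT', Matrix.mul_apply, Fin.sum_univ_two, Matrix.one_apply] <;>
          linear_combination hl2
      have hAP : A * P = P * T := by
        rw [hP, sle_mul_colMat, sle_colMat_mul]
        have e00 : T 0 0 = lam := rfl
        have e10 : T 1 0 = 0 := rfl
        have e01 : T 0 1 = 1 := rfl
        have e11 : T 1 1 = lam := rfl
        rw [e00, e10, e01, e11, hAw, hAu, zero_smul, add_zero, one_smul]
      have hPunit : IsUnit P.det := isUnit_iff_ne_zero.mpr hdP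
      set Q := P⁻¹ with hQ
      have hPQ : P * Q = 1 := Matrix.mul_nonsing_inv P hPunit
      have hQP : Q * P = 1 := Matrix.nonsing_inv_mul P hPunit
      set M := Q * B * P with hM
      have hdM : M.det = 1 := by
        have : M.det = (Q * P).det * B.det := by
          rw [hM, Matrix.det_mul, Matrix.det_mul, Matrix.det_mul]; ring
        rw [hQP, Matrix.det_one, one_mul, hdB] at this
        exact this
      have hM₁ : Q * B₁ * P = sle_inv2 M := by
        refine sle_inv_unique (M := M) ?_ (sle_mul_inv2 M hdM)
        rw [hM]
        calc Q * B * P * (Q * B₁ * P) = Q * B * (P * Q) * B₁ * P := by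
              simp only [mul_assoc]
          _ = 1 := by
              rw [hPQ, mul_one, mul_assoc Q B B₁, hB, mul_one, hQP]
      have htr2 : (T * M * T' * sle_inv2 M).trace = 2 := by
        rw [← hM₁, hM, ← sle_conj_trace hPQ hTT' hA hAP]
        exact htr
      have hc2 : M 1 0 ^ 2 = 0 := sle_unip_core lam hl2 M hdM (by rw [← hT, ← hT']; exact htr2)
      have hc : M 1 0 = 0 := by
        exact pow_eq_zero_iff (n := 2) (by norm_num) |>.mp hc2
      have hBP : B * P = P * M := by
        rw [hM, ← mul_assoc, ← mul_assoc, hPQ, one_mul]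
      have hBw : B.mulVec w = M 0 0 • w := by
        have h := sle_col_eigen0 hBP hc
        rwa [hP, sle_colMat_col0] at h
      exact ⟨w, hu, lam, M 0 0, hAw, hBw⟩
    · -- diagonalizable case
      set mu := lam⁻¹ with hmu
      have hlm : lam * mu = 1 := mul_inv_cancel₀ hlam0
      have hmuroot : 1 - A.trace * mu + mu ^ 2 = 0 := by
        linear_combination mu ^ 2 * hlam + (A.trace * mu - lam * mu - 1) * hlm
      have hlmne : lam ≠ mu := by
        intro h
        apply hl2
        calc lam ^ 2 = lam * lam := sq lam
          _ = lam * mu := by rw [← h]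
          _ = 1 := hlm
      obtain ⟨u, hu, hAu⟩ := sle_eig_ex A lam (by rw [hdA]; linear_combination hlam)
      obtain ⟨w, hw, hAw⟩ := sle_eig_ex A mu (by rw [hdA]; linear_combination hmuroot)
      set P := sle_colMat u w with hP
      have hdP : P.det ≠ 0 := by
        refine sle_det_colMat_ne u w ?_
        intro x0 x1 hx
        have h1 : (x0 * lam) • u + (x1 * mu) • w = 0 := by
          have h := congrArg (A.mulVec ·) hx
          simp only [Matrix.mulVec_add, Matrix.mulVec_smul, hAu, hAw, Matrix.mulVec_zero,
            smul_smul] at h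
          exact h
        have h2 : (x0 * mu) • u + (x1 * mu) • w = 0 := by
          have h := congrArg (mu • ·) hx
          simp only [smul_add, smul_smul, smul_zero] at h
          rw [mul_comm mu x0, mul_comm mu x1] at h
          exact h
        have h3 : (x0 * (lam - mu)) • u = 0 := by
          linear_combination (norm := module) h1 - h2
        have hx0 : x0 = 0 := by
          rcases smul_eq_zero.mp h3 with h | h
          · rcases mul_eq_zero.mp h with h' | h'
            · exact h'
            · exact absurd h' (sub_ne_zero.mpr hlmne)
          · exact absurd h hu
        have hx1 : x1 = 0 := by
          rw [hx0, zero_smul, zero_add] at hx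
          rcases smul_eq_zero.mp hx with h | h
          · exact h
          · exact absurd h hw
        exact ⟨hx0, hx1⟩
      set D : Matrix (Fin 2) (Fin 2) K := Matrix.of ![![lam,0],![0,mu]] with hD
      set D' : Matrix (Fin 2) (Fin 2) K := Matrix.of ![![mu,0],![0,lam]] with hD'
      have hDD' : D * D' = 1 := by
        ext i j
        fin_cases i <;> fin_cases j <;>
          simp [hD, hD', Matrix.mul_apply, Fin.sum_univ_two, Matrix.one_apply] <;>
          first | linear_combination hlm | linear_combination lam * mu * hlm - hlm + hlm | ring_nf <;> linear_combination hlm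
      have hAP : A * P = P * D := by
        rw [hP, sle_mul_colMat, sle_colMat_mul]
        have e00 : D 0 0 = lam := rfl
        have e10 : D 1 0 = (0:K) := rfl
        have e01 : D 0 1 = (0:K) := rfl
        have e11 : D 1 1 = mu := rfl
        rw [e00, e10, e01, e11, hAu, hAw, zero_smul, add_zero, zero_smul, zero_add]
      have hPunit : IsUnit P.det := isUnit_iff_ne_zero.mpr hdP
      set Q := P⁻¹ with hQ
      have hPQ : P * Q = 1 := Matrix.mul_nonsing_inv P hPunit
      have hQP : Q * P = 1 := Matrix.nonsing_inv_mul P hPunit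
      set M := Q * B * P with hM
      have hdM : M.det = 1 := by
        have h : M.det = (Q * P).det * B.det := by
          rw [hM, Matrix.det_mul, Matrix.det_mul, Matrix.det_mul]; ring
        rw [hQP, Matrix.det_one, one_mul, hdB] at h
        exact h
      have hM₁ : Q * B₁ * P = sle_inv2 M := by
        refine sle_inv_unique (M := M) ?_ (sle_mul_inv2 M hdM)
        rw [hM]
        calc Q * B * P * (Q * B₁ * P) = Q * B * (P * Q) * B₁ * P := by
              simp only [mul_assoc]
          _ = 1 := by
              rw [hPQ, mul_one, mul_assoc Q B B₁, hB, mul_one, hQP]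
      have htr2 : (D * M * D' * sle_inv2 M).trace = 2 := by
        rw [← hM₁, hM, ← sle_conj_trace hPQ hDD' hA hAP]
        exact htr
      have hbc : M 0 1 * M 1 0 * (lam - mu) ^ 2 = 0 :=
        sle_diag_core lam mu hlm M hdM (by rw [← hD, ← hD']; exact htr2)
      have hBP : B * P = P * M := by
        rw [hM, ← mul_assoc, ← mul_assoc, hPQ, one_mul]
      have hbc0 : M 0 1 = 0 ∨ M 1 0 = 0 := by
        rcases mul_eq_zero.mp hbc with h | h
        · exact mul_eq_zero.mp h
        · exact absurd (pow_eq_zero_iff (n := 2) (by norm_num) |>.mp h)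
            (sub_ne_zero.mpr hlmne)
      rcases hbc0 with hb | hc
      · have hBw : B.mulVec w = M 1 1 • w := by
          have h := sle_col_eigen1 hBP hb
          rwa [hP, sle_colMat_col1] at h
        exact ⟨w, hw, mu, M 1 1, hAw, hBw⟩
      · have hBu : B.mulVec u = M 0 0 • u := by
          have h := sle_col_eigen0 hBP hc
          rwa [hP, sle_colMat_col0] at h
        exact ⟨u, hu, lam, M 0 0, hAu, hBu⟩



lemma sle_det_sub_smul' (M : Matrix (Fin 2) (Fin 2) K) (x : K) :
    (M - x • 1).det = M.det - M.trace * x + x ^ 2 := by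
  simp [det_fin_two, trace_fin_two, Matrix.one_apply]
  ring

lemma sle_backward (A B A₁ B₁ : Matrix (Fin 2) (Fin 2) K)
    (hA : A * A₁ = 1) (hB : B * B₁ = 1)
    (v : Fin 2 → K) (hv : v ≠ 0) (l m : K)
    (hAv : A.mulVec v = l • v) (hBv : B.mulVec v = m • v) :
    (A * B * A₁ * B₁).trace = 2 := by
  have hA' : A₁ * A = 1 := mul_eq_one_comm.mp hA
  have hB' : B₁ * B = 1 := mul_eq_one_comm.mp hB
  have hl0 : l ≠ 0 := by
    intro h
    apply hv
    have : A₁.mulVec (A.mulVec v) = v := by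
      rw [Matrix.mulVec_mulVec, hA', Matrix.one_mulVec]
    rw [hAv, h, zero_smul, Matrix.mulVec_zero] at this
    exact this.symm
  have hm0 : m ≠ 0 := by
    intro h
    apply hv
    have : B₁.mulVec (B.mulVec v) = v := by
      rw [Matrix.mulVec_mulVec, hB', Matrix.one_mulVec]
    rw [hBv, h, zero_smul, Matrix.mulVec_zero] at this
    exact this.symm
  have hA₁v : A₁.mulVec v = l⁻¹ • v := by
    have h : A₁.mulVec (A.mulVec v) = v := by
      rw [Matrix.mulVec_mulVec, hA', Matrix.one_mulVec]
    rw [hAv, Matrix.mulVec_smul] at h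
    exact ((inv_smul_eq_iff₀ hl0).mpr h.symm).symm
  have hB₁v : B₁.mulVec v = m⁻¹ • v := by
    have h : B₁.mulVec (B.mulVec v) = v := by
      rw [Matrix.mulVec_mulVec, hB', Matrix.one_mulVec]
    rw [hBv, Matrix.mulVec_smul] at h
    exact ((inv_smul_eq_iff₀ hm0).mpr h.symm).symm
  set C := A * B * A₁ * B₁ with hC
  have hCv : C.mulVec v = v := by
    rw [hC, ← Matrix.mulVec_mulVec, ← Matrix.mulVec_mulVec, ← Matrix.mulVec_mulVec,
      hB₁v, Matrix.mulVec_smul, hA₁v, smul_smul, Matrix.mulVec_smul, hBv, smul_smul,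
      Matrix.mulVec_smul, hAv, smul_smul]
    have : m⁻¹ * l⁻¹ * m * l = 1 := by field_simp
    rw [this, one_smul]
  have hdC : C.det = 1 := by
    have h1 : A.det * A₁.det = 1 := by rw [← Matrix.det_mul, hA, Matrix.det_one]
    have h2 : B.det * B₁.det = 1 := by rw [← Matrix.det_mul, hB, Matrix.det_one]
    rw [hC, Matrix.det_mul, Matrix.det_mul, Matrix.det_mul]
    linear_combination A.det * A₁.det * h2 + h1
  have hdet0 : (C - (1:K) • 1).det = 0 := by
    apply Matrix.exists_mulVec_eq_zero_iff.mp
    refine ⟨v, hv, ?_⟩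
    rw [Matrix.sub_mulVec, Matrix.smul_mulVec, Matrix.one_mulVec, hCv, one_smul, sub_self]
  rw [sle_det_sub_smul', hdC] at hdet0
  linear_combination -hdet0

end fieldpart


theorem singular_iff_common_eigenvector (p : ℕ) [Fact p.Prime] (hp5 : 5 < p)
    (A B : Matrix.SpecialLinearGroup (Fin 2) (ZMod p)) :
    Matrix.trace ((A * B * A⁻¹ * B⁻¹ : Matrix.SpecialLinearGroup (Fin 2) (ZMod p)) :
        Matrix (Fin 2) (Fin 2) (ZMod p)) = 2 ↔
      ∃ v : Fin 2 → GaloisField p 2, v ≠ 0 ∧ ∃ lam mu : GaloisField p 2,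
        Matrix.mulVec ((A : Matrix (Fin 2) (Fin 2) (ZMod p)).map
          (algebraMap (ZMod p) (GaloisField p 2))) v = lam • v ∧
        Matrix.mulVec ((B : Matrix (Fin 2) (Fin 2) (ZMod p)).map
          (algebraMap (ZMod p) (GaloisField p 2))) v = mu • v := by
  have hp : p.Prime := Fact.out
  set K := GaloisField p 2 with hK
  set f := algebraMap (ZMod p) K with hf
  set A' := ((A : Matrix (Fin 2) (Fin 2) (ZMod p)).map f) with hA'
  set B' := ((B : Matrix (Fin 2) (Fin 2) (ZMod p)).map f) with hB'
  set A₁' := (((A⁻¹ : Matrix.SpecialLinearGroup (Fin 2) (ZMod p)) :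
      Matrix (Fin 2) (Fin 2) (ZMod p)).map f) with hA₁'
  set B₁' := (((B⁻¹ : Matrix.SpecialLinearGroup (Fin 2) (ZMod p)) :
      Matrix (Fin 2) (Fin 2) (ZMod p)).map f) with hB₁'
  have hmap : ∀ X Y : Matrix.SpecialLinearGroup (Fin 2) (ZMod p),
      ((X : Matrix (Fin 2) (Fin 2) (ZMod p)).map f) *
        ((Y : Matrix (Fin 2) (Fin 2) (ZMod p)).map f) =
      (((X * Y : Matrix.SpecialLinearGroup (Fin 2) (ZMod p)) :
        Matrix (Fin 2) (Fin 2) (ZMod p)).map f) := by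
    intro X Y
    rw [Matrix.SpecialLinearGroup.coe_mul, Matrix.map_mul]
  have hAA₁ : A' * A₁' = 1 := by
    rw [hA', hA₁', hmap, mul_inv_cancel, Matrix.SpecialLinearGroup.coe_one, Matrix.map_one f f.map_zero f.map_one]
  have hBB₁ : B' * B₁' = 1 := by
    rw [hB', hB₁', hmap, mul_inv_cancel, Matrix.SpecialLinearGroup.coe_one, Matrix.map_one f f.map_zero f.map_one]
  have hdA : A'.det = 1 := by
    rw [hA', ← RingHom.mapMatrix_apply, ← RingHom.map_det, Matrix.SpecialLinearGroup.det_coe, _root_.map_one]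
  have hdB : B'.det = 1 := by
    rw [hB', ← RingHom.mapMatrix_apply, ← RingHom.map_det, Matrix.SpecialLinearGroup.det_coe, _root_.map_one]
  have htrC : (A' * B' * A₁' * B₁').trace =
      f (Matrix.trace ((A * B * A⁻¹ * B⁻¹ : Matrix.SpecialLinearGroup (Fin 2) (ZMod p)) :
        Matrix (Fin 2) (Fin 2) (ZMod p))) := by
    rw [hA', hB', hA₁', hB₁', hmap, hmap, hmap]
    rw [Matrix.SpecialLinearGroup.coe_mul, Matrix.SpecialLinearGroup.coe_mul,
      Matrix.SpecialLinearGroup.coe_mul]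
    exact (AddMonoidHom.map_trace f.toAddMonoidHom _).symm
  have h2K : (2:K) ≠ 0 := by
    intro h
    have hd : (p:ℕ) ∣ 2 := by
      have h' : ((2:ℕ) : K) = 0 := by exact_mod_cast h
      exact (CharP.cast_eq_zero_iff K p 2).mp h'
    have := Nat.le_of_dvd (by norm_num) hd
    omega
  have hsq : ∀ x : ZMod p, IsSquare (f x) := fun x => sle_sq p hp5 x
  have htrA : A'.trace = f ((A : Matrix (Fin 2) (Fin 2) (ZMod p)).trace) := by
    rw [hA']
    exact (AddMonoidHom.map_trace f.toAddMonoidHom _).symm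
  have htrB : B'.trace = f ((B : Matrix (Fin 2) (Fin 2) (ZMod p)).trace) := by
    rw [hB']
    exact (AddMonoidHom.map_trace f.toAddMonoidHom _).symm
  have hf4 : f 4 = 4 := by
    have : ((4:ℕ) : ZMod p) = (4 : ZMod p) := by norm_num
    rw [← this, map_natCast]
    norm_num
  have hsA' : ∃ s : K, s ^ 2 = A'.trace ^ 2 - 4 := by
    obtain ⟨r, hr⟩ := hsq ((A : Matrix (Fin 2) (Fin 2) (ZMod p)).trace ^ 2 - 4)
    refine ⟨r, ?_⟩
    rw [sq, ← hr, map_sub, map_pow, htrA, hf4]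
  have hsB' : ∃ s : K, s ^ 2 = B'.trace ^ 2 - 4 := by
    obtain ⟨r, hr⟩ := hsq ((B : Matrix (Fin 2) (Fin 2) (ZMod p)).trace ^ 2 - 4)
    refine ⟨r, ?_⟩
    rw [sq, ← hr, map_sub, map_pow, htrB, hf4]
  have hf2 : f 2 = 2 := by
    have : ((2:ℕ) : ZMod p) = (2 : ZMod p) := by norm_num
    rw [← this, map_natCast]
    norm_num
  constructor
  · intro htr
    have htr' : (A' * B' * A₁' * B₁').trace = 2 := by
      rw [htrC, htr, hf2]
    obtain ⟨v, hv, l, m, hv1, hv2⟩ :=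
      sle_forward h2K A' B' A₁' B₁' hAA₁ hBB₁ hdA hdB hsA' hsB' htr'
    exact ⟨v, hv, l, m, hv1, hv2⟩
  · rintro ⟨v, hv, l, m, hv1, hv2⟩
    have hb := sle_backward A' B' A₁' B₁' hAA₁ hBB₁ v hv l m hv1 hv2
    rw [htrC, ← hf2] at hb
    exact f.injective hb
end

section
/- Let p be a prime with p > 5 and let (x, y, z) ∈ 𝔽_p³ be non-singular, i.e. x² + y² + z² − xyz ≠ 4. Then: (a) any two pairs (A, B), (A′, B′) ∈ SL(2, 𝔽_p)² with tr(A) = tr(A′) = x, tr(B) = tr(B′) = y, tr(AB) = tr(A′B′) = z are simultaneously conjugate by an element of GL(2, 𝔽_p), i.e. there exists X ∈ GL(2, 𝔽_p) with A′ = X A X⁻¹ and B′ = X B X⁻¹; and (b) under simultaneous conjugation by elements of SL(2, 𝔽_p), the set of such pairs splits into exactly two conjugacy classes. -/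
namespace TCCaux
open Matrix

variable {K : Type*} [Field K]

def Cm (x : K) : Matrix (Fin 2) (Fin 2) K := !![0,-1;1,x]
def Bm (x y z c d : K) : Matrix (Fin 2) (Fin 2) K := !![y-d, c+z-x*d; c, d]
def Conic (x y z c d : K) : Prop := c^2 + (z - x*d)*c + (1 - y*d + d^2) = 0

lemma det_Cm (x : K) : (Cm x).det = 1 := by simp [Cm, det_fin_two_of]
lemma trace_Cm (x : K) : (Cm x).trace = x := by simp [Cm, trace_fin_two_of]
lemma det_Bm {x y z c d : K} (h : Conic x y z c d) : (Bm x y z c d).det = 1 := by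
  have h' : c^2 + (z - x*d)*c + (1 - y*d + d^2) = 0 := h
  simp only [Bm, det_fin_two_of]; linear_combination -h'
lemma trace_Bm (x y z c d : K) : (Bm x y z c d).trace = y := by
  simp [Bm, trace_fin_two_of]
lemma trace_Cm_mul_Bm (x y z c d : K) : (Cm x * Bm x y z c d).trace = z := by
  simp only [Cm, Bm, mul_fin_two, trace_fin_two_of]; ring

lemma eig_quad (A : Matrix (Fin 2) (Fin 2) K) (v : Fin 2 → K) (l : K) (hv : v ≠ 0)
    (h : A.mulVec v = l • v) : l^2 - A.trace * l + A.det = 0 := by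
  have h0 := congrFun h 0
  have h1 := congrFun h 1
  simp only [mulVec, dotProduct, Fin.sum_univ_two, Pi.smul_apply, smul_eq_mul] at h0 h1
  have hv' : v 0 ≠ 0 ∨ v 1 ≠ 0 := by
    by_contra hc
    push_neg at hc
    exact hv (funext fun i => by fin_cases i <;> simp [hc.1, hc.2])
  rw [trace_fin_two, det_fin_two]
  rcases hv' with h' | h'
  · have key : (l^2 - (A 0 0 + A 1 1) * l + (A 0 0 * A 1 1 - A 0 1 * A 1 0)) * v 0 = 0 := by
      linear_combination (A 1 1 - l) * h0 - A 0 1 * h1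
    exact (mul_eq_zero.mp key).resolve_right h'
  · have key : (l^2 - (A 0 0 + A 1 1) * l + (A 0 0 * A 1 1 - A 0 1 * A 1 0)) * v 1 = 0 := by
      linear_combination (A 0 0 - l) * h1 - A 1 0 * h0
    exact (mul_eq_zero.mp key).resolve_right h'

lemma common_eig_singular (A B : Matrix (Fin 2) (Fin 2) K) (hdA : A.det = 1) (hdB : B.det = 1)
    (v : Fin 2 → K) (hv : v ≠ 0) (l m : K)
    (hA : A.mulVec v = l • v) (hB : B.mulVec v = m • v) :
    A.trace^2 + B.trace^2 + (A*B).trace^2 - A.trace * B.trace * (A*B).trace = 4 := by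
  have q1 := eig_quad A v l hv hA
  have q2 := eig_quad B v m hv hB
  have hAB : (A*B).mulVec v = (l*m) • v := by
    rw [← mulVec_mulVec, hB, mulVec_smul, hA, smul_smul, mul_comm]
  have q3 := eig_quad (A*B) v (l*m) hv hAB
  rw [hdA] at q1
  rw [hdB] at q2
  rw [det_mul, hdA, hdB, one_mul] at q3
  have hl : l ≠ 0 := by rintro rfl; simp at q1
  have hm : m ≠ 0 := by rintro rfl; simp at q2
  have hx : A.trace = (l^2+1)/l := by field_simp; linear_combination -q1
  have hy : B.trace = (m^2+1)/m := by field_simp; linear_combination -q2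
  have hz : (A*B).trace = ((l*m)^2+1)/(l*m) := by
    have hlm : l*m ≠ 0 := mul_ne_zero hl hm
    field_simp
    linear_combination -q3
  rw [hx, hy, hz]
  have h1 : l^6 * l⁻¹^6 = 1 := by rw [← mul_pow, mul_inv_cancel₀ hl, one_pow]
  have h2 : m^6 * m⁻¹^6 = 1 := by rw [← mul_pow, mul_inv_cancel₀ hm, one_pow]
  field_simp
  ring

lemma not_scalar (A B : Matrix (Fin 2) (Fin 2) K) (hdA : A.det = 1)
    (hns : A.trace^2 + B.trace^2 + (A*B).trace^2 - A.trace * B.trace * (A*B).trace ≠ 4) :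
    A 0 1 ≠ 0 ∨ A 1 0 ≠ 0 ∨ A 0 0 ≠ A 1 1 := by
  by_contra hc
  push_neg at hc
  obtain ⟨h01, h10, heq⟩ := hc
  rw [det_fin_two, h01, heq] at hdA
  apply hns
  have hx : A.trace = 2 * A 1 1 := by rw [trace_fin_two, heq]; ring
  have hz : (A*B).trace = A 1 1 * B.trace := by
    rw [trace_fin_two, trace_fin_two, mul_apply, mul_apply, Fin.sum_univ_two, Fin.sum_univ_two,
      h01, heq, h10]
    ring
  rw [hx, hz]
  linear_combination (4 - B.trace^2) * hdA

lemma normalize_A (A : Matrix (Fin 2) (Fin 2) K) (hdA : A.det = 1)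
    (h : A 0 1 ≠ 0 ∨ A 1 0 ≠ 0 ∨ A 0 0 ≠ A 1 1) :
    ∃ X : Matrix (Fin 2) (Fin 2) K, X.det ≠ 0 ∧ A * X = X * Cm (A.trace) := by
  rw [det_fin_two] at hdA
  rcases ne_or_eq (A 1 0) 0 with h10 | h10
  · refine ⟨!![1, A 0 0; 0, A 1 0], by simp [det_fin_two_of, h10], ?_⟩
    ext i j
    fin_cases i <;> fin_cases j <;>
      simp [Cm, mul_apply, Fin.sum_univ_two, trace_fin_two] <;>
      first
      | ring1
      | linear_combination hdA
      | linear_combination -hdA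
      | linear_combination 2*hdA
      | linear_combination -2*hdA
  rcases ne_or_eq (A 0 1) 0 with h01 | h01
  · rw [h10, mul_zero, sub_zero] at hdA
    refine ⟨!![0, A 0 1; 1, A 1 1], by simp [det_fin_two_of, h01], ?_⟩
    ext i j
    fin_cases i <;> fin_cases j <;>
      simp [Cm, mul_apply, Fin.sum_univ_two, trace_fin_two, h10] <;>
      first
      | ring1
      | linear_combination hdA
      | linear_combination -hdA
      | linear_combination 2*hdA
      | linear_combination -2*hdA
  have hne : A 0 0 ≠ A 1 1 := by tauto
  rw [h01, h10, mul_zero, sub_zero] at hdA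
  refine ⟨!![1, A 0 0; 1, A 1 1],
    by simp only [det_fin_two_of, one_mul, mul_one]; exact sub_ne_zero.mpr (Ne.symm hne), ?_⟩
  ext i j
  fin_cases i <;> fin_cases j <;>
    simp [Cm, mul_apply, Fin.sum_univ_two, trace_fin_two, h10, h01] <;>
    first
    | ring1
    | linear_combination hdA
    | linear_combination -hdA
    | linear_combination 2*hdA
    | linear_combination -2*hdA

lemma inv_intertwine {A X C : Matrix (Fin 2) (Fin 2) K} (hX : IsUnit X.det)
    (h : A * X = X * C) : X⁻¹ * A = C * X⁻¹ := by
  calc X⁻¹ * A = X⁻¹ * A * (X * X⁻¹) := by rw [mul_nonsing_inv X hX, mul_one]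
    _ = X⁻¹ * (A * X) * X⁻¹ := by rw [← mul_assoc, mul_assoc X⁻¹ A X]
    _ = X⁻¹ * (X * C) * X⁻¹ := by rw [h]
    _ = (X⁻¹ * X) * C * X⁻¹ := by rw [← mul_assoc]
    _ = C * X⁻¹ := by rw [nonsing_inv_mul X hX, one_mul]

lemma normalize (A B : Matrix (Fin 2) (Fin 2) K) (hdA : A.det = 1) (hdB : B.det = 1)
    (x y z : K) (hx : A.trace = x) (hy : B.trace = y) (hz : (A*B).trace = z)
    (hns : x^2 + y^2 + z^2 - x * y * z ≠ 4) :
    ∃ (X : Matrix (Fin 2) (Fin 2) K) (c d : K), X.det ≠ 0 ∧ Conic x y z c d ∧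
      A * X = X * Cm x ∧ B * X = X * Bm x y z c d := by
  have hns' : A.trace^2 + B.trace^2 + (A*B).trace^2
      - A.trace * B.trace * (A*B).trace ≠ 4 := by rw [hx, hy, hz]; exact hns
  obtain ⟨X, hXd, hXC⟩ := normalize_A A hdA (not_scalar A B hdA hns')
  rw [hx] at hXC
  have hXu : IsUnit X.det := isUnit_iff_ne_zero.mpr hXd
  have hXX : X * X⁻¹ = 1 := mul_nonsing_inv X hXu
  have hXX' : X⁻¹ * X = 1 := nonsing_inv_mul X hXu
  set B' := X⁻¹ * B * X with hB'
  have hBX : B * X = X * B' := by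
    rw [hB', ← mul_assoc, ← mul_assoc, hXX, one_mul]
  have hdB' : B'.det = 1 := by
    rw [hB', det_mul, det_mul, det_nonsing_inv, hdB, mul_one,
      Ring.inverse_eq_inv', inv_mul_cancel₀ hXd]
  have htrB' : B'.trace = y := by
    rw [hB', mul_assoc, trace_mul_comm, mul_assoc, hXX, mul_one, hy]
  have hCB' : Cm x * B' = X⁻¹ * (A * B) * X := by
    have hC : Cm x = X⁻¹ * A * X := by
      rw [mul_assoc, hXC, ← mul_assoc, hXX', one_mul]
    calc Cm x * B' = (X⁻¹ * A * X) * (X⁻¹ * B * X) := by rw [← hC, ← hB']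
      _ = (X⁻¹ * A) * (X * (X⁻¹ * B * X)) := by rw [mul_assoc (X⁻¹ * A) X _]
      _ = (X⁻¹ * A) * (B * X) := by
          rw [← mul_assoc X (X⁻¹ * B) X, ← mul_assoc X X⁻¹ B, hXX, one_mul]
      _ = X⁻¹ * (A * B) * X := by rw [← mul_assoc, mul_assoc X⁻¹ A B]
  have htrCB' : (Cm x * B').trace = z := by
    rw [hCB', mul_assoc, trace_mul_comm, mul_assoc (A*B) X X⁻¹, hXX, mul_one, hz]
  set c := B' 1 0 with hc
  set d := B' 1 1 with hd
  have e00 : B' 0 0 = y - d := by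
    rw [trace_fin_two] at htrB'
    linear_combination htrB'
  have e01 : B' 0 1 = c + z - x * d := by
    rw [trace_fin_two] at htrCB'
    simp only [Cm, mul_apply, Fin.sum_univ_two, cons_val', cons_val_zero, cons_val_one,
      head_cons, head_fin_const, empty_val', cons_val_fin_one, of_apply] at htrCB'
    linear_combination htrCB'
  have hBB : B' = Bm x y z c d := by
    rw [eta_fin_two B', e00, e01, ← hc, ← hd, Bm]
  rw [det_fin_two, e00, e01, ← hc, ← hd] at hdB'
  refine ⟨X, c, d, hXd, ?_, hXC, by rw [hBX, hBB]⟩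
  show c^2 + (z - x*d)*c + (1 - y*d + d^2) = 0
  linear_combination -hdB'

/-- The centralizer-form matrix `α I + β C`. -/
def Xm (x al be : K) : Matrix (Fin 2) (Fin 2) K := !![al, -be; be, al + x*be]

lemma Xm_comm (x al be : K) : Xm x al be * Cm x = Cm x * Xm x al be := by
  simp only [Xm, Cm, mul_fin_two]
  ext i j
  fin_cases i <;> fin_cases j <;> simp <;> ring

lemma ker_vec (x al be : K) (hdet : al^2 + x*al*be + be^2 = 0) :
    (Xm x al be).mulVec ![al + x*be, -be] = 0 := by
  funext i
  fin_cases i <;>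
    simp [Xm, mulVec, dotProduct, Fin.sum_univ_two] <;>
    first
    | ring1
    | linear_combination hdet
    | linear_combination -hdet
    | linear_combination 2*hdet
    | linear_combination -2*hdet

lemma canon_kill {x al be : K} (hbe : be ≠ 0) {w : Fin 2 → K}
    (hw : (Xm x al be).mulVec w = 0) :
    w = (-(w 1) / be) • ![al + x*be, -be] := by
  have h1 := congrFun hw 1
  simp only [Xm, mulVec, dotProduct, Fin.sum_univ_two, cons_val', cons_val_zero, cons_val_one,
    head_cons, empty_val', cons_val_fin_one, of_apply, Pi.zero_apply, head_fin_const] at h1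
  funext i
  fin_cases i <;>
    simp only [Pi.smul_apply, Matrix.cons_val_zero, Matrix.cons_val_one, Matrix.head_cons,
      smul_eq_mul, Fin.isValue, Fin.zero_eta, Fin.mk_one]
  · field_simp
    first
    | ring1
    | linear_combination h1
    | linear_combination -h1
    | linear_combination 2*h1
    | linear_combination -2*h1
  · field_simp

lemma canon_trans (x y z c d c' d' : K) (h1 : Conic x y z c d) (h2 : Conic x y z c' d')
    (hns : x^2 + y^2 + z^2 - x * y * z ≠ 4) :
    ∃ Y : Matrix (Fin 2) (Fin 2) K, Y.det ≠ 0 ∧ Y * Cm x = Cm x * Y ∧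
      Y * Bm x y z c d = Bm x y z c' d' * Y := by
  have h1' : c^2 + (z - x*d)*c + (1 - y*d + d^2) = 0 := h1
  have h2' : c'^2 + (z - x*d')*c' + (1 - y*d' + d'^2) = 0 := h2
  by_cases hdd : d = d' ∧ c = c'
  · exact ⟨1, by simp, by simp, by rw [hdd.1, hdd.2]; simp⟩
  -- choose a nonzero intertwiner
  obtain ⟨al, be, hbe, hint⟩ :
      ∃ al be : K, be ≠ 0 ∧ Xm x al be * Bm x y z c d = Bm x y z c' d' * Xm x al be := by
    rcases ne_or_eq d d' with hd | hd
    · refine ⟨c + c' + z - x*d', d' - d, sub_ne_zero.mpr (Ne.symm hd), ?_⟩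
      simp only [Xm, Bm, mul_fin_two]
      ext i j
      fin_cases i <;> fin_cases j <;> simp <;>
        first
        | ring1
        | linear_combination h1' - h2'
        | linear_combination h2' - h1'
    · have hc : c ≠ c' := fun hcc => hdd ⟨hd, hcc⟩
      refine ⟨d + d' - y - x*c, c - c', sub_ne_zero.mpr hc, ?_⟩
      simp only [Xm, Bm, mul_fin_two]
      ext i j
      fin_cases i <;> fin_cases j <;> simp <;>
        first
        | ring1
        | linear_combination h1' - h2'
        | linear_combination h2' - h1'
        | linear_combination (-x) * h1' + x * h2'
        | linear_combination x * h1' + (-x) * h2'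
  refine ⟨Xm x al be, ?_, Xm_comm x al be, hint⟩
  -- show the determinant is nonzero, else common eigenvector gives a singular triple
  intro hdet0
  have hdet : al^2 + x*al*be + be^2 = 0 := by
    have : (Xm x al be).det = al^2 + x*al*be + be^2 := by
      simp [Xm, det_fin_two_of]; ring
    rw [this] at hdet0; exact hdet0
  set v : Fin 2 → K := ![al + x*be, -be] with hv
  have hv0 : v ≠ 0 := by
    intro hcon
    have := congrFun hcon 1
    simp [hv] at this
    exact hbe this
  have hkv : (Xm x al be).mulVec v = 0 := ker_vec x al be hdet
  -- Cm eigenvector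
  have hCv : (Cm x).mulVec v = (-al/be) • v := by
    funext i
    fin_cases i <;>
      simp [Cm, hv, mulVec, dotProduct, Fin.sum_univ_two] <;> field_simp <;>
      first
      | ring1
      | linear_combination hdet
      | linear_combination -hdet
      | linear_combination 2*hdet
      | linear_combination -2*hdet
  -- Bm eigenvector
  have hBkill : (Xm x al be).mulVec ((Bm x y z c d).mulVec v) = 0 := by
    rw [mulVec_mulVec, hint, ← mulVec_mulVec, hkv, mulVec_zero]
  have hBv : (Bm x y z c d).mulVec v
      = (-((Bm x y z c d).mulVec v 1) / be) • v := canon_kill hbe hBkill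
  have := common_eig_singular (Cm x) (Bm x y z c d) (det_Cm x) (det_Bm h1) v hv0 _ _ hCv hBv
  rw [trace_Cm, trace_Bm, trace_Cm_mul_Bm] at this
  exact hns this

lemma central (x y z c d : K) (h1 : Conic x y z c d)
    (hns : x^2 + y^2 + z^2 - x * y * z ≠ 4) (Y : Matrix (Fin 2) (Fin 2) K)
    (hYC : Y * Cm x = Cm x * Y) (hYB : Y * Bm x y z c d = Bm x y z c d * Y) :
    Y 0 1 = 0 ∧ Y 1 0 = 0 ∧ Y 0 0 = Y 1 1 := by
  have h1' : c^2 + (z - x*d)*c + (1 - y*d + d^2) = 0 := h1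
  have eC : ∀ i j, (Y * Cm x) i j = (Cm x * Y) i j := fun i j => by rw [hYC]
  have e00 := eC 0 0
  have e01 := eC 0 1
  simp only [Cm, mul_apply, Fin.sum_univ_two, cons_val', cons_val_zero, cons_val_one,
    head_cons, head_fin_const, empty_val', cons_val_fin_one, of_apply] at e00 e01
  -- e00 : Y 0 1 = -(Y 1 0) form ; e01 relates Y 1 1 and Y 0 0
  have hb : Y 0 1 = -(Y 1 0) := by linear_combination e00
  have hd1 : Y 1 1 = Y 0 0 + x * Y 1 0 := by
    first
    | linear_combination e01 - x*hb
    | linear_combination -e01 - x*hb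
    | linear_combination e01 + x*hb
    | linear_combination -e01 + x*hb
  rcases eq_or_ne (Y 1 0) 0 with hbe | hbe
  · exact ⟨by rw [hb, hbe, neg_zero], hbe, by rw [hd1, hbe, mul_zero, add_zero]⟩
  exfalso
  have eB : ∀ i j, (Y * Bm x y z c d) i j = (Bm x y z c d * Y) i j := fun i j => by rw [hYB]
  have f00 := eB 0 0
  have f10 := eB 1 0
  simp only [Bm, mul_apply, Fin.sum_univ_two, cons_val', cons_val_zero, cons_val_one,
    head_cons, head_fin_const, empty_val', cons_val_fin_one, of_apply] at f00 f10
  have r1 : 2*c + z - x*d = 0 := by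
    have key : Y 1 0 * (2*c + z - x*d) = 0 := by
      first
      | linear_combination c*hb - f00
      | linear_combination f00 - c*hb
    exact (mul_eq_zero.mp key).resolve_left hbe
  have r2 : 2*d - y - x*c = 0 := by
    have key : Y 1 0 * (2*d - y - x*c) = 0 := by
      first
      | linear_combination c*hd1 - f10
      | linear_combination f10 - c*hd1
    exact (mul_eq_zero.mp key).resolve_left hbe
  apply hns
  linear_combination (x^2-4)*h1' + (z + 2*c - x*y + x*d - x^2*c)*r1 + (2*d - y - x*c)*r2

lemma four_cancel {t : K} (h2 : (2:K) ≠ 0) (h : 4*t = 0) : t = 0 := by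
  have h4 : (4:K) ≠ 0 := by
    have := mul_ne_zero h2 h2
    norm_num at this
    exact_mod_cast this
  exact (mul_eq_zero.mp h).resolve_left h4

lemma conic_exists (p : ℕ) [Fact p.Prime] (hp2 : p ≠ 2) (x y z : ZMod p)
    (hns : x^2 + y^2 + z^2 - x * y * z ≠ 4) : ∃ c d : ZMod p, Conic x y z c d := by
  have h2 : (2 : ZMod p) ≠ 0 := by
    intro h
    have : ((2:ℕ) : ZMod p) = 0 := by push_cast; exact h
    rw [ZMod.natCast_eq_zero_iff] at this
    exact hp2 ((Nat.prime_dvd_prime_iff_eq (Fact.out) Nat.prime_two).mp this)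
  rcases eq_or_ne (x^2) 4 with hx4 | hx4
  · -- linear discriminant case
    have hyz : 4*y - 2*x*z ≠ 0 := by
      intro h0
      apply hns
      have h16 : (16 : ZMod p) ≠ 0 := by
        have := pow_ne_zero 4 h2
        norm_num at this
        exact_mod_cast this
      have key : (16 : ZMod p) * (x^2 + y^2 + z^2 - x*y*z - 4) = 0 := by
        linear_combination (4*y-2*x*z)*h0 - 4*(z^2-4)*hx4
      have := (mul_eq_zero.mp key).resolve_left h16
      linear_combination this
    obtain ⟨d, hD⟩ : ∃ d : ZMod p, (4*y - 2*x*z) * d = 4 - z^2 :=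
      ⟨(4 - z^2)/(4*y - 2*x*z), by rw [mul_comm, div_mul_cancel₀ _ hyz]⟩
    obtain ⟨c, hc⟩ : ∃ c : ZMod p, 2*c = x*d - z :=
      ⟨(x*d - z)/2, by rw [mul_comm, div_mul_cancel₀ _ h2]⟩
    refine ⟨c, d, four_cancel h2 ?_⟩
    show 4*(c^2 + (z - x*d)*c + (1 - y*d + d^2)) = 0
    linear_combination (2*c - x*d + z)*hc - d^2*hx4 - hD
  · -- quadratic case : apply the finite-field conic point existence
    have hlead : (4 : ZMod p) - x^2 ≠ 0 := by
      intro h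
      exact hx4 (by linear_combination -h)
    obtain ⟨e, d, hed⟩ := FiniteField.exists_root_sum_quadratic
      (f := (Polynomial.X : Polynomial (ZMod p))^2)
      (g := Polynomial.C (4 - x^2) * Polynomial.X^2 + Polynomial.C (2*x*z - 4*y) * Polynomial.X
        + Polynomial.C (4 - z^2))
      (Polynomial.degree_X_pow 2) (Polynomial.degree_quadratic hlead)
      (by rw [ZMod.card]; exact Nat.odd_iff.mp ((Fact.out : p.Prime).odd_of_ne_two hp2))
    simp only [Polynomial.eval_add, Polynomial.eval_mul, Polynomial.eval_pow,
      Polynomial.eval_X, Polynomial.eval_C] at hed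
    obtain ⟨c, hc⟩ : ∃ c : ZMod p, 2*c = e - z + x*d :=
      ⟨(e - z + x*d)/2, by rw [mul_comm, div_mul_cancel₀ _ h2]⟩
    refine ⟨c, d, four_cancel h2 ?_⟩
    show 4*(c^2 + (z - x*d)*c + (1 - y*d + d^2)) = 0
    linear_combination hed + (2*c + e + z - x*d)*hc

lemma comp_rel {A M B X Y : Matrix (Fin 2) (Fin 2) K} (h1 : A * X = X * M)
    (h2 : M * Y = Y * B) : A * (X * Y) = (X * Y) * B := by
  rw [← mul_assoc, h1, mul_assoc, h2, ← mul_assoc]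

end TCCaux

/-- The trace of an element of `SL(2, 𝔽_p)`. -/
def trSL {p : ℕ} (A : Matrix.SpecialLinearGroup (Fin 2) (ZMod p)) : ZMod p :=
  Matrix.trace (A : Matrix (Fin 2) (Fin 2) (ZMod p))

/-- The tower over `(x, y, z)`: pairs of matrices in `SL(2, 𝔽_p)` with prescribed traces. -/
def Tower (p : ℕ) (x y z : ZMod p) :
    Set (Matrix.SpecialLinearGroup (Fin 2) (ZMod p) ×
      Matrix.SpecialLinearGroup (Fin 2) (ZMod p)) :=
  {AB | trSL AB.1 = x ∧ trSL AB.2 = y ∧ trSL (AB.1 * AB.2) = z}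

/-- Simultaneous conjugacy of pairs by an element of `SL(2, 𝔽_p)`. -/
def SLConj {p : ℕ} (P Q : Matrix.SpecialLinearGroup (Fin 2) (ZMod p) ×
    Matrix.SpecialLinearGroup (Fin 2) (ZMod p)) : Prop :=
  ∃ X : Matrix.SpecialLinearGroup (Fin 2) (ZMod p),
    Q.1 = X * P.1 * X⁻¹ ∧ Q.2 = X * P.2 * X⁻¹


namespace TCCzmod
open Matrix TCCaux

variable {p : ℕ} [Fact p.Prime]

lemma two_ne_zero' (hp2 : p ≠ 2) : (2 : ZMod p) ≠ 0 := by
  intro h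
  have : ((2:ℕ) : ZMod p) = 0 := by push_cast; exact h
  rw [ZMod.natCast_eq_zero_iff] at this
  exact hp2 ((Nat.prime_dvd_prime_iff_eq (Fact.out) Nat.prime_two).mp this)

lemma sq_of_two_nonsq (a b : ZMod p) (ha : ¬IsSquare a) (hb : ¬IsSquare b) :
    IsSquare (a * b) := by
  classical
  have ha0 : a ≠ 0 := fun h => ha ⟨0, by rw [h, mul_zero]⟩
  have hb0 : b ≠ 0 := fun h => hb ⟨0, by rw [h, mul_zero]⟩
  have ha' : quadraticChar (ZMod p) a = -1 :=
    quadraticChar_neg_one_iff_not_isSquare.mpr ha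
  have hb' : quadraticChar (ZMod p) b = -1 :=
    quadraticChar_neg_one_iff_not_isSquare.mpr hb
  have hmul : quadraticChar (ZMod p) (a*b) = 1 := by rw [_root_.map_mul, ha', hb']; ring
  exact (quadraticChar_one_iff_isSquare (mul_ne_zero ha0 hb0)).mp hmul

lemma nonsq_inv {u : ZMod p} (hu : ¬IsSquare u) : ¬IsSquare u⁻¹ := by
  rintro ⟨r, hr⟩
  have hu0 : u ≠ 0 := fun h => hu ⟨0, by rw [h, mul_zero]⟩
  exact hu ⟨r⁻¹, by rw [← mul_inv, ← hr, inv_inv]⟩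

lemma sl_eq_of_mat {X P R : Matrix.SpecialLinearGroup (Fin 2) (ZMod p)}
    (h : (R : Matrix (Fin 2) (Fin 2) (ZMod p)) * (X : Matrix (Fin 2) (Fin 2) (ZMod p))
      = (X : Matrix (Fin 2) (Fin 2) (ZMod p)) * (P : Matrix (Fin 2) (Fin 2) (ZMod p))) :
    R = X * P * X⁻¹ := by
  have hRX : R * X = X * P := Subtype.ext (by
    rw [Matrix.SpecialLinearGroup.coe_mul, Matrix.SpecialLinearGroup.coe_mul]; exact h)
  rw [← hRX, mul_inv_cancel_right]

lemma slconj_of_square (P R : Matrix.SpecialLinearGroup (Fin 2) (ZMod p) ×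
      Matrix.SpecialLinearGroup (Fin 2) (ZMod p))
    (W : Matrix (Fin 2) (Fin 2) (ZMod p)) (hW : W.det ≠ 0) (hsq : IsSquare W.det)
    (w1 : (R.1 : Matrix (Fin 2) (Fin 2) (ZMod p)) * W = W * (P.1 : Matrix (Fin 2) (Fin 2) (ZMod p)))
    (w2 : (R.2 : Matrix (Fin 2) (Fin 2) (ZMod p)) * W = W * (P.2 : Matrix (Fin 2) (Fin 2) (ZMod p))) :
    SLConj P R := by
  obtain ⟨s, hs⟩ := hsq
  have hs0 : s ≠ 0 := by
    intro h
    rw [h, mul_zero] at hs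
    exact hW hs
  have hdet : (s⁻¹ • W).det = 1 := by
    rw [det_smul, hs]
    simp only [Fintype.card_fin]
    field_simp
  refine ⟨⟨s⁻¹ • W, hdet⟩, ?_, ?_⟩
  · exact sl_eq_of_mat (by rw [Matrix.mul_smul, Matrix.smul_mul, w1])
  · exact sl_eq_of_mat (by rw [Matrix.mul_smul, Matrix.smul_mul, w2])

end TCCzmod

open Matrix TCCaux TCCzmod in
theorem tower_conjugacy_classes (p : ℕ) (hp : p.Prime) (hp5 : 5 < p) (x y z : ZMod p)
    (hns : x ^ 2 + y ^ 2 + z ^ 2 - x * y * z ≠ 4) :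
    (∀ P Q, P ∈ Tower p x y z → Q ∈ Tower p x y z →
      ∃ X : GL (Fin 2) (ZMod p),
        (Q.1 : Matrix (Fin 2) (Fin 2) (ZMod p)) =
          (X : Matrix (Fin 2) (Fin 2) (ZMod p)) * (P.1 : Matrix (Fin 2) (Fin 2) (ZMod p)) *
            ((X⁻¹ : GL (Fin 2) (ZMod p)) : Matrix (Fin 2) (Fin 2) (ZMod p)) ∧
        (Q.2 : Matrix (Fin 2) (Fin 2) (ZMod p)) =
          (X : Matrix (Fin 2) (Fin 2) (ZMod p)) * (P.2 : Matrix (Fin 2) (Fin 2) (ZMod p)) *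
            ((X⁻¹ : GL (Fin 2) (ZMod p)) : Matrix (Fin 2) (Fin 2) (ZMod p))) ∧
    (∃ P Q, P ∈ Tower p x y z ∧ Q ∈ Tower p x y z ∧ ¬ SLConj P Q ∧
      ∀ R ∈ Tower p x y z, SLConj P R ∨ SLConj Q R) := by
  haveI : Fact p.Prime := ⟨hp⟩
  have hp2 : p ≠ 2 := by omega
  have key_norm : ∀ P : Matrix.SpecialLinearGroup (Fin 2) (ZMod p) ×
      Matrix.SpecialLinearGroup (Fin 2) (ZMod p), P ∈ Tower p x y z →
      ∃ (X : Matrix (Fin 2) (Fin 2) (ZMod p)) (c d : ZMod p), X.det ≠ 0 ∧ Conic x y z c d ∧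
        (P.1 : Matrix (Fin 2) (Fin 2) (ZMod p)) * X = X * Cm x ∧
        (P.2 : Matrix (Fin 2) (Fin 2) (ZMod p)) * X = X * Bm x y z c d := by
    rintro P ⟨h1, h2', h3⟩
    have h3' : ((P.1 : Matrix (Fin 2) (Fin 2) (ZMod p)) *
        (P.2 : Matrix (Fin 2) (Fin 2) (ZMod p))).trace = z := by
      rw [← Matrix.SpecialLinearGroup.coe_mul]; exact h3
    exact normalize _ _ P.1.2 P.2.2 x y z h1 h2' h3' hns
  constructor
  · -- part (a)
    intro P Q hP hQ
    obtain ⟨XP, c, d, hXPd, hcd, hPA, hPB⟩ := key_norm P hP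
    obtain ⟨XQ, c', d', hXQd, hcd', hQA, hQB⟩ := key_norm Q hQ
    obtain ⟨Y, hYd, hYC, hYB⟩ := canon_trans x y z c d c' d' hcd hcd' hns
    have hXPu : IsUnit XP.det := isUnit_iff_ne_zero.mpr hXPd
    have hrel1 : Cm x * XP⁻¹ = XP⁻¹ * (P.1 : Matrix (Fin 2) (Fin 2) (ZMod p)) :=
      (inv_intertwine hXPu hPA).symm
    have hrel2 : Bm x y z c d * XP⁻¹ = XP⁻¹ * (P.2 : Matrix (Fin 2) (Fin 2) (ZMod p)) :=
      (inv_intertwine hXPu hPB).symm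
    have hZd : (XQ * Y * XP⁻¹).det ≠ 0 := by
      rw [det_mul, det_mul, det_nonsing_inv, Ring.inverse_eq_inv']
      exact mul_ne_zero (mul_ne_zero hXQd hYd) (inv_ne_zero hXPd)
    have k1 : (Q.1 : Matrix (Fin 2) (Fin 2) (ZMod p)) * (XQ * Y * XP⁻¹)
        = (XQ * Y * XP⁻¹) * (P.1 : Matrix (Fin 2) (Fin 2) (ZMod p)) := by
      exact comp_rel (comp_rel hQA hYC.symm) hrel1
    have k2 : (Q.2 : Matrix (Fin 2) (Fin 2) (ZMod p)) * (XQ * Y * XP⁻¹)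
        = (XQ * Y * XP⁻¹) * (P.2 : Matrix (Fin 2) (Fin 2) (ZMod p)) := by
      exact comp_rel (comp_rel hQB hYB.symm) hrel2
    set G := Matrix.GeneralLinearGroup.mkOfDetNeZero (XQ * Y * XP⁻¹) hZd with hG
    have hGc : (G : Matrix (Fin 2) (Fin 2) (ZMod p)) = XQ * Y * XP⁻¹ := rfl
    have main : ∀ (Qm Pm : Matrix (Fin 2) (Fin 2) (ZMod p)),
        Qm * (XQ * Y * XP⁻¹) = (XQ * Y * XP⁻¹) * Pm →
        Qm = (G : Matrix (Fin 2) (Fin 2) (ZMod p)) * Pm *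
          ((G⁻¹ : GL (Fin 2) (ZMod p)) : Matrix (Fin 2) (Fin 2) (ZMod p)) := by
      intro Qm Pm hk
      calc Qm = Qm * ((G : Matrix (Fin 2) (Fin 2) (ZMod p)) *
            ((G⁻¹ : GL (Fin 2) (ZMod p)) : Matrix (Fin 2) (Fin 2) (ZMod p))) := by
            rw [Units.mul_inv, mul_one]
        _ = (Qm * (G : Matrix (Fin 2) (Fin 2) (ZMod p))) *
            ((G⁻¹ : GL (Fin 2) (ZMod p)) : Matrix (Fin 2) (Fin 2) (ZMod p)) := by
            rw [mul_assoc]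
        _ = (G : Matrix (Fin 2) (Fin 2) (ZMod p)) * Pm *
            ((G⁻¹ : GL (Fin 2) (ZMod p)) : Matrix (Fin 2) (Fin 2) (ZMod p)) := by
            rw [hGc, hk]
    exact ⟨G, main _ _ k1, main _ _ k2⟩
  · -- part (b)
    obtain ⟨c, d, hcd⟩ := conic_exists p hp2 x y z hns
    obtain ⟨u, hu⟩ := FiniteField.exists_nonsquare (F := ZMod p)
      (by rw [ZMod.ringChar_zmod_n]; exact hp2)
    have hu0 : u ≠ 0 := fun h => hu ⟨0, by rw [h, mul_zero]⟩
    set g : Matrix (Fin 2) (Fin 2) (ZMod p) := !![u, 0; 0, 1] with hgdef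
    set gi : Matrix (Fin 2) (Fin 2) (ZMod p) := !![u⁻¹, 0; 0, 1] with hgidef
    have hggi : g * gi = 1 := by
      ext i j
      fin_cases i <;> fin_cases j <;>
        simp [hgdef, hgidef, mul_apply, Fin.sum_univ_two, mul_inv_cancel₀ hu0, Matrix.one_apply]
    have hgig : gi * g = 1 := by
      ext i j
      fin_cases i <;> fin_cases j <;>
        simp [hgdef, hgidef, mul_apply, Fin.sum_univ_two, inv_mul_cancel₀ hu0, Matrix.one_apply]
    have hdetg : g.det = u := by simp [hgdef, det_fin_two_of]
    have hdetgi : gi.det = u⁻¹ := by simp [hgidef, det_fin_two_of]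
    have hgirel : ∀ N : Matrix (Fin 2) (Fin 2) (ZMod p), N * gi = gi * (g * N * gi) := by
      intro N
      rw [← mul_assoc gi (g*N) gi, ← mul_assoc gi g N, hgig, one_mul]
    -- conjugation by g preserves tower data
    have conj_det : ∀ N : Matrix (Fin 2) (Fin 2) (ZMod p), N.det = 1 → (g * N * gi).det = 1 := by
      intro N hN
      rw [det_mul, det_mul, hdetg, hdetgi, hN, mul_one, mul_inv_cancel₀ hu0]
    have conj_tr : ∀ N : Matrix (Fin 2) (Fin 2) (ZMod p), (g * N * gi).trace = N.trace := by
      intro N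
      rw [trace_mul_comm (g * N) gi, ← mul_assoc, hgig, one_mul]
    have conj_mul : ∀ N N' : Matrix (Fin 2) (Fin 2) (ZMod p),
        (g * N * gi) * (g * N' * gi) = g * (N * N') * gi := by
      intro N N'
      simp only [← mul_assoc]
      rw [mul_assoc (g*N) gi g, hgig, mul_one, mul_assoc g N N']
    -- the two representative pairs
    set P0 : Matrix.SpecialLinearGroup (Fin 2) (ZMod p) ×
        Matrix.SpecialLinearGroup (Fin 2) (ZMod p) :=
      (⟨Cm x, det_Cm x⟩, ⟨Bm x y z c d, det_Bm hcd⟩) with hP0def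
    set Q0 : Matrix.SpecialLinearGroup (Fin 2) (ZMod p) ×
        Matrix.SpecialLinearGroup (Fin 2) (ZMod p) :=
      (⟨g * Cm x * gi, conj_det _ (det_Cm x)⟩,
       ⟨g * Bm x y z c d * gi, conj_det _ (det_Bm hcd)⟩) with hQ0def
    have hP0 : P0 ∈ Tower p x y z := by
      refine ⟨trace_Cm x, trace_Bm x y z c d, ?_⟩
      show (((P0.1 * P0.2 : _) : Matrix (Fin 2) (Fin 2) (ZMod p))).trace = z
      rw [Matrix.SpecialLinearGroup.coe_mul]
      exact trace_Cm_mul_Bm x y z c d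
    have hQ0 : Q0 ∈ Tower p x y z := by
      refine ⟨?_, ?_, ?_⟩
      · show (g * Cm x * gi).trace = x
        rw [conj_tr, trace_Cm]
      · show (g * Bm x y z c d * gi).trace = y
        rw [conj_tr, trace_Bm]
      · show (((Q0.1 * Q0.2 : _) : Matrix (Fin 2) (Fin 2) (ZMod p))).trace = z
        rw [Matrix.SpecialLinearGroup.coe_mul]
        show ((g * Cm x * gi) * (g * Bm x y z c d * gi)).trace = z
        rw [conj_mul, conj_tr, trace_Cm_mul_Bm]
    refine ⟨P0, Q0, hP0, hQ0, ?_, ?_⟩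
    · -- P0 and Q0 are not SL-conjugate
      rintro ⟨X, hA, hB⟩
      have hA' : (Q0.1 : Matrix (Fin 2) (Fin 2) (ZMod p)) *
          (X : Matrix (Fin 2) (Fin 2) (ZMod p)) =
          (X : Matrix (Fin 2) (Fin 2) (ZMod p)) * (P0.1 : Matrix (Fin 2) (Fin 2) (ZMod p)) := by
        have : Q0.1 * X = X * P0.1 := by rw [hA, inv_mul_cancel_right]
        calc (Q0.1 : Matrix (Fin 2) (Fin 2) (ZMod p)) * (X : Matrix (Fin 2) (Fin 2) (ZMod p))
            = ((Q0.1 * X : _) : Matrix (Fin 2) (Fin 2) (ZMod p)) := by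
              rw [Matrix.SpecialLinearGroup.coe_mul]
          _ = ((X * P0.1 : _) : Matrix (Fin 2) (Fin 2) (ZMod p)) := by rw [this]
          _ = _ := by rw [Matrix.SpecialLinearGroup.coe_mul]
      have hB' : (Q0.2 : Matrix (Fin 2) (Fin 2) (ZMod p)) *
          (X : Matrix (Fin 2) (Fin 2) (ZMod p)) =
          (X : Matrix (Fin 2) (Fin 2) (ZMod p)) * (P0.2 : Matrix (Fin 2) (Fin 2) (ZMod p)) := by
        have : Q0.2 * X = X * P0.2 := by rw [hB, inv_mul_cancel_right]
        calc (Q0.2 : Matrix (Fin 2) (Fin 2) (ZMod p)) * (X : Matrix (Fin 2) (Fin 2) (ZMod p))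
            = ((Q0.2 * X : _) : Matrix (Fin 2) (Fin 2) (ZMod p)) := by
              rw [Matrix.SpecialLinearGroup.coe_mul]
          _ = ((X * P0.2 : _) : Matrix (Fin 2) (Fin 2) (ZMod p)) := by rw [this]
          _ = _ := by rw [Matrix.SpecialLinearGroup.coe_mul]
      -- hA' : (g * Cm x * gi) * Xm = Xm * Cm x  where Xm := ↑X
      set Xm : Matrix (Fin 2) (Fin 2) (ZMod p) := (X : Matrix (Fin 2) (Fin 2) (ZMod p)) with hXm
      have hYC : (gi * Xm) * Cm x = Cm x * (gi * Xm) :=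
        (comp_rel (hgirel (Cm x)) (hA' : (g * Cm x * gi) * Xm = Xm * Cm x)).symm
      have hYB : (gi * Xm) * Bm x y z c d = Bm x y z c d * (gi * Xm) :=
        (comp_rel (hgirel (Bm x y z c d)) (hB' : (g * Bm x y z c d * gi) * Xm
          = Xm * Bm x y z c d)).symm
      obtain ⟨e01, e10, e0011⟩ := central x y z c d hcd hns (gi * Xm) hYC hYB
      have hdetY : (gi * Xm).det = u⁻¹ := by
        rw [det_mul, hdetgi, Matrix.SpecialLinearGroup.det_coe, mul_one]
      rw [det_fin_two, e01, e10, mul_zero, sub_zero, e0011] at hdetY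
      apply hu
      have h11 : (gi * Xm) 1 1 ≠ 0 := by
        intro h
        rw [h, mul_zero] at hdetY
        exact inv_ne_zero hu0 hdetY.symm
      refine ⟨((gi * Xm) 1 1)⁻¹, ?_⟩
      rw [← mul_inv, hdetY, inv_inv]
    · -- completeness
      intro R hR
      obtain ⟨XR, cR, dR, hXRd, hcdR, hRA, hRB⟩ := key_norm R hR
      obtain ⟨Y, hYd, hYC, hYB⟩ := canon_trans x y z c d cR dR hcd hcdR hns
      have w1 : (R.1 : Matrix (Fin 2) (Fin 2) (ZMod p)) * (XR * Y) = (XR * Y) * Cm x :=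
        comp_rel hRA hYC.symm
      have w2 : (R.2 : Matrix (Fin 2) (Fin 2) (ZMod p)) * (XR * Y) = (XR * Y) * Bm x y z c d :=
        comp_rel hRB hYB.symm
      have hWd : (XR * Y).det ≠ 0 := by
        rw [det_mul]; exact mul_ne_zero hXRd hYd
      by_cases hsq : IsSquare (XR * Y).det
      · left
        exact slconj_of_square P0 R (XR * Y) hWd hsq w1 w2
      · right
        -- twist by gi
        have w1' : (R.1 : Matrix (Fin 2) (Fin 2) (ZMod p)) * ((XR * Y) * gi)
            = ((XR * Y) * gi) * (g * Cm x * gi) :=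
          comp_rel w1 (hgirel (Cm x))
        have w2' : (R.2 : Matrix (Fin 2) (Fin 2) (ZMod p)) * ((XR * Y) * gi)
            = ((XR * Y) * gi) * (g * Bm x y z c d * gi) :=
          comp_rel w2 (hgirel (Bm x y z c d))
        have hW2d : ((XR * Y) * gi).det ≠ 0 := by
          rw [det_mul, hdetgi]
          exact mul_ne_zero hWd (inv_ne_zero hu0)
        have hsq2 : IsSquare ((XR * Y) * gi).det := by
          rw [det_mul, hdetgi]
          exact sq_of_two_nonsq _ _ hsq (nonsq_inv hu)
        exact slconj_of_square Q0 R ((XR * Y) * gi) hW2d hsq2 w1' w2'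
end

section
/- Let p be a prime with p > 5, let X ∈ SL(2, 𝔽_p), and let h be the order of the image of X in PSL₂(𝔽_p) (the quotient of SL(2, 𝔽_p) by its center). Then: (i) if h = 2 then tr(X) = 0; (ii) if h = 3 then tr(X) = 1 or tr(X) = −1; (iii) if h = 4 then tr(X)² = 2; (iv) if h = 5 then tr(X)⁴ − 3·tr(X)² + 1 = 0. -/
/-!
By Cayley–Hamilton, a matrix `A` of determinant one satisfies `A ^ 2 = tr A • A - 1`, so its
powers are `A ^ (n + 1) = Sₙ(tr A) • A - Sₙ₋₁(tr A) • 1`, with `Sₙ` the rescaled Chebyshev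
polynomials of the second kind. Over a field, a non-central `X ∈ SL₂` thus has `X ^ (n + 1)`
central exactly when `Sₙ(tr X) = 0`; for an image of order `h` in `PSL₂` this gives
`Sₕ₋₁(t) = 0` with `t = tr X`, which for `h = 2, 3, 4, 5` reads `t = 0`, `t² = 1`,
`t (t² - 2) = 0` and `t⁴ - 3t² + 1 = 0`. For `h = 4` the root `t = 0` is excluded, as it would give order `2`.
-/

open Polynomial Polynomial.Chebyshev

namespace Polynomial.Chebyshev

variable (R : Type*) [CommRing R]

theorem S_three : S R 3 = X ^ 3 - 2 * X := by
  rw [S_eq]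
  norm_num [S_two]
  ring

theorem S_four : S R 4 = X ^ 4 - 3 * X ^ 2 + 1 := by
  rw [S_eq]
  norm_num [S_two, S_three]
  ring

end Polynomial.Chebyshev

namespace Matrix

variable {R : Type*} [CommRing R]

theorem sq_eq_trace_smul_sub_one {A : Matrix (Fin 2) (Fin 2) R} (hA : A.det = 1) :
    A ^ 2 = A.trace • A - 1 := by
  nontriviality R
  have h := A.aeval_self_charpoly
  rw [charpoly_fin_two, hA] at h
  simp only [map_add, map_sub, map_pow, map_mul, aeval_X, Polynomial.aeval_C,
    Algebra.algebraMap_eq_smul_one, smul_mul_assoc, one_mul] at h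
  linear_combination (norm := module) h

theorem pow_succ_eq_chebyshevS {A : Matrix (Fin 2) (Fin 2) R} (hA : A.det = 1) (n : ℕ) :
    A ^ (n + 1) = (S R n).eval A.trace • A - (S R (n - 1)).eval A.trace • 1 := by
  induction n with
  | zero => simp
  | succ n ih =>
    rw [pow_succ, ih, sub_mul, smul_mul_assoc, ← sq, sq_eq_trace_smul_sub_one hA, smul_mul_assoc,
      one_mul, Nat.cast_succ, add_sub_cancel_right, S_add_one]
    simp only [eval_sub, eval_mul, eval_X]
    module

end Matrix

namespace Matrix.SpecialLinearGroup

section CommRing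

variable {n R : Type*} [Fintype n] [DecidableEq n] [CommRing R]

theorem mem_center_iff_exists_coe_eq_smul_one {A : SpecialLinearGroup n R} :
    A ∈ Subgroup.center (SpecialLinearGroup n R) ↔ ∃ r : R, (A : Matrix n n R) = r • 1 := by
  simp only [mem_center_iff, scalar_apply, ← smul_one_eq_diagonal]
  refine ⟨fun ⟨r, _, hr⟩ ↦ ⟨r, hr.symm⟩, fun ⟨r, hr⟩ ↦ ⟨r, ?_, hr.symm⟩⟩
  simpa [hr] using A.det_coe

end CommRing

variable {K : Type*} [Field K]

theorem pow_succ_mem_center_iff {X : SpecialLinearGroup (Fin 2) K}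
    (hX : X ∉ Subgroup.center (SpecialLinearGroup (Fin 2) K)) (n : ℕ) :
    X ^ (n + 1) ∈ Subgroup.center (SpecialLinearGroup (Fin 2) K) ↔
      (S K n).eval (X : Matrix (Fin 2) (Fin 2) K).trace = 0 := by
  simp only [mem_center_iff_exists_coe_eq_smul_one, coe_pow,
    pow_succ_eq_chebyshevS X.det_coe] at hX ⊢
  set a := (S K n).eval (X : Matrix (Fin 2) (Fin 2) K).trace
  set b := (S K (n - 1)).eval (X : Matrix (Fin 2) (Fin 2) K).trace
  constructor
  · rintro ⟨r, hr⟩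
    by_contra ha
    refine hX ⟨a⁻¹ * (r + b), ?_⟩
    rw [mul_smul, ← inv_smul_smul₀ ha (X : Matrix (Fin 2) (Fin 2) K)]
    congr 1
    linear_combination (norm := module) hr
  · intro ha
    exact ⟨-b, by rw [ha]; module⟩

theorem mk_pow_succ_eq_one_iff {X : SpecialLinearGroup (Fin 2) K}
    (hX : X ∉ Subgroup.center (SpecialLinearGroup (Fin 2) K)) (n : ℕ) :
    (QuotientGroup.mk X : SpecialLinearGroup (Fin 2) K ⧸
        Subgroup.center (SpecialLinearGroup (Fin 2) K)) ^ (n + 1) = 1 ↔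
      (S K n).eval (X : Matrix (Fin 2) (Fin 2) K).trace = 0 := by
  rw [← QuotientGroup.mk_pow, QuotientGroup.eq_one_iff, pow_succ_mem_center_iff hX]

theorem eval_chebyshevS_trace_eq_zero_of_orderOf_eq {X : SpecialLinearGroup (Fin 2) K} {n : ℕ}
    (hn : n ≠ 0)
    (hX : orderOf (QuotientGroup.mk X : SpecialLinearGroup (Fin 2) K ⧸
        Subgroup.center (SpecialLinearGroup (Fin 2) K)) = n + 1) :
    (S K n).eval (X : Matrix (Fin 2) (Fin 2) K).trace = 0 := by
  have hX₁ : X ∉ Subgroup.center (SpecialLinearGroup (Fin 2) K) := by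
    rw [← QuotientGroup.eq_one_iff, ← orderOf_eq_one_iff, hX]
    omega
  rw [← mk_pow_succ_eq_one_iff hX₁, ← hX]
  exact pow_orderOf_eq_one _

theorem orderOf_mk_dvd_of_eval_chebyshevS_trace_eq_zero {X : SpecialLinearGroup (Fin 2) K} {n : ℕ}
    (h : (S K n).eval (X : Matrix (Fin 2) (Fin 2) K).trace = 0) :
    orderOf (QuotientGroup.mk X : SpecialLinearGroup (Fin 2) K ⧸
        Subgroup.center (SpecialLinearGroup (Fin 2) K)) ∣ n + 1 := by
  by_cases hX : X ∈ Subgroup.center (SpecialLinearGroup (Fin 2) K)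
  · simp [(QuotientGroup.eq_one_iff X).mpr hX]
  · exact orderOf_dvd_of_pow_eq_one ((mk_pow_succ_eq_one_iff hX n).mpr h)

end Matrix.SpecialLinearGroup

open Matrix.SpecialLinearGroup in
theorem order_trace_general (p : ℕ) (hp : p.Prime)
    (X : Matrix.SpecialLinearGroup (Fin 2) (ZMod p)) :
    (orderOf ((QuotientGroup.mk X) :
        Matrix.SpecialLinearGroup (Fin 2) (ZMod p) ⧸
          Subgroup.center (Matrix.SpecialLinearGroup (Fin 2) (ZMod p))) = 2 →
      Matrix.trace (X : Matrix (Fin 2) (Fin 2) (ZMod p)) = 0) ∧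
    (orderOf ((QuotientGroup.mk X) :
        Matrix.SpecialLinearGroup (Fin 2) (ZMod p) ⧸
          Subgroup.center (Matrix.SpecialLinearGroup (Fin 2) (ZMod p))) = 3 →
      Matrix.trace (X : Matrix (Fin 2) (Fin 2) (ZMod p)) = 1 ∨
        Matrix.trace (X : Matrix (Fin 2) (Fin 2) (ZMod p)) = -1) ∧
    (orderOf ((QuotientGroup.mk X) :
        Matrix.SpecialLinearGroup (Fin 2) (ZMod p) ⧸
          Subgroup.center (Matrix.SpecialLinearGroup (Fin 2) (ZMod p))) = 4 →
      Matrix.trace (X : Matrix (Fin 2) (Fin 2) (ZMod p)) ^ 2 = 2) ∧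
    (orderOf ((QuotientGroup.mk X) :
        Matrix.SpecialLinearGroup (Fin 2) (ZMod p) ⧸
          Subgroup.center (Matrix.SpecialLinearGroup (Fin 2) (ZMod p))) = 5 →
      Matrix.trace (X : Matrix (Fin 2) (Fin 2) (ZMod p)) ^ 4 -
        3 * Matrix.trace (X : Matrix (Fin 2) (Fin 2) (ZMod p)) ^ 2 + 1 = 0) := by
  have := Fact.mk hp
  set t := (X : Matrix (Fin 2) (Fin 2) (ZMod p)).trace
  refine ⟨fun h ↦ ?_, fun h ↦ ?_, fun h ↦ ?_, fun h ↦ ?_⟩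
  · simpa using eval_chebyshevS_trace_eq_zero_of_orderOf_eq (n := 1) one_ne_zero h
  · simpa [S_two, sub_eq_zero] using
      eval_chebyshevS_trace_eq_zero_of_orderOf_eq (n := 2) two_ne_zero h
  · have hS₃ : t ^ 3 - 2 * t = 0 := by
      simpa [S_three] using eval_chebyshevS_trace_eq_zero_of_orderOf_eq (n := 3) three_ne_zero h
    have ht : t ≠ 0 := fun ht ↦ by
      have h2 := orderOf_mk_dvd_of_eval_chebyshevS_trace_eq_zero (n := 1) (by simpa using ht)
      rw [h] at h2
      norm_num at h2
    have hfac : t * (t ^ 2 - 2) = 0 := by linear_combination hS₃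
    exact sub_eq_zero.mp ((mul_eq_zero.mp hfac).resolve_left ht)
  · simpa [S_four] using eval_chebyshevS_trace_eq_zero_of_orderOf_eq (n := 4) four_ne_zero h

theorem order_trace (p : ℕ) (hp : p.Prime) (hp5 : 5 < p)
    (X : Matrix.SpecialLinearGroup (Fin 2) (ZMod p)) :
    (orderOf ((QuotientGroup.mk X) :
        Matrix.SpecialLinearGroup (Fin 2) (ZMod p) ⧸
          Subgroup.center (Matrix.SpecialLinearGroup (Fin 2) (ZMod p))) = 2 →
      Matrix.trace (X : Matrix (Fin 2) (Fin 2) (ZMod p)) = 0) ∧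
    (orderOf ((QuotientGroup.mk X) :
        Matrix.SpecialLinearGroup (Fin 2) (ZMod p) ⧸
          Subgroup.center (Matrix.SpecialLinearGroup (Fin 2) (ZMod p))) = 3 →
      Matrix.trace (X : Matrix (Fin 2) (Fin 2) (ZMod p)) = 1 ∨
        Matrix.trace (X : Matrix (Fin 2) (Fin 2) (ZMod p)) = -1) ∧
    (orderOf ((QuotientGroup.mk X) :
        Matrix.SpecialLinearGroup (Fin 2) (ZMod p) ⧸
          Subgroup.center (Matrix.SpecialLinearGroup (Fin 2) (ZMod p))) = 4 →
      Matrix.trace (X : Matrix (Fin 2) (Fin 2) (ZMod p)) ^ 2 = 2) ∧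
    (orderOf ((QuotientGroup.mk X) :
        Matrix.SpecialLinearGroup (Fin 2) (ZMod p) ⧸
          Subgroup.center (Matrix.SpecialLinearGroup (Fin 2) (ZMod p))) = 5 →
      Matrix.trace (X : Matrix (Fin 2) (Fin 2) (ZMod p)) ^ 4 -
        3 * Matrix.trace (X : Matrix (Fin 2) (Fin 2) (ZMod p)) ^ 2 + 1 = 0) :=
  order_trace_general p hp X
end

section
/- Let p be a prime with p > 5, let n ≥ 1, and let A, B ∈ SL(2, 𝔽_p) be such that the subgroup of PSL₂(𝔽_p) generated by the images of A and B is isomorphic to the dihedral group D_n of order 2n. Then at least two of the three traces tr(A), tr(B), tr(AB) are equal to 0. -/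
open Matrix

private def rotations (n : ℕ) : Subgroup (DihedralGroup n) where
  carrier := Set.range DihedralGroup.r
  mul_mem' := by
    rintro _ _ ⟨i, rfl⟩ ⟨j, rfl⟩
    exact ⟨i + j, (DihedralGroup.r_mul_r i j).symm⟩
  one_mem' := ⟨0, DihedralGroup.one_def.symm⟩
  inv_mem' := by
    rintro _ ⟨i, rfl⟩
    refine ⟨-i, ?_⟩
    rw [eq_comm, inv_eq_iff_mul_eq_one, DihedralGroup.r_mul_r]
    simp [← DihedralGroup.one_def]

private lemma refl_sq {n : ℕ} {H : Type*} [Group H] (e : H ≃* DihedralGroup n) (g : H)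
    (i : ZMod n) (h : e g = DihedralGroup.sr i) : g ^ 2 = 1 ∧ g ≠ 1 := by
  constructor
  · apply e.injective
    rw [map_pow, h, _root_.map_one, sq, DihedralGroup.sr_mul_self]
  · intro hg
    rw [hg, _root_.map_one, DihedralGroup.one_def] at h
    cases h

private lemma gen_dihedral_orders {G : Type*} [Group G] (n : ℕ) (x y : G)
    (e : (Subgroup.closure ({x, y} : Set G)) ≃* DihedralGroup n) :
    (x ^ 2 = 1 ∧ x ≠ 1 ∧ y ^ 2 = 1 ∧ y ≠ 1) ∨
    (x ^ 2 = 1 ∧ x ≠ 1 ∧ (x * y) ^ 2 = 1 ∧ x * y ≠ 1) ∨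
    (y ^ 2 = 1 ∧ y ≠ 1 ∧ (x * y) ^ 2 = 1 ∧ x * y ≠ 1) := by
  set H := Subgroup.closure ({x, y} : Set G) with hH
  have hx : x ∈ H := Subgroup.subset_closure (by simp)
  have hy : y ∈ H := Subgroup.subset_closure (by simp)
  set x' : H := ⟨x, hx⟩ with hx'def
  set y' : H := ⟨y, hy⟩ with hy'def
  have push : ∀ g : H, g ^ 2 = 1 ∧ g ≠ 1 → (g : G) ^ 2 = 1 ∧ (g : G) ≠ 1 := by
    rintro g ⟨h2, h1⟩
    refine ⟨?_, fun hg => h1 (Subtype.ext hg)⟩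
    have := congrArg (Subtype.val : H → G) h2
    simpa using this
  rcases hex : e x' with i | i <;> rcases hey : e y' with j | j
  · -- both rotations: contradiction
    exfalso
    have hpre : ((↑) : H → G) ⁻¹' ({x, y} : Set G) = {x', y'} := by
      ext g
      simp [Set.mem_preimage, hx'def, hy'def, Subtype.ext_iff]
    have htop : Subgroup.closure ({x', y'} : Set H) = ⊤ := by
      rw [← hpre]
      exact Subgroup.closure_closure_coe_preimage
    set g : H := e.symm (DihedralGroup.sr 0) with hg
    have hgmem : g ∈ Subgroup.closure ({x', y'} : Set H) := by
      rw [htop]; trivial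
    have hrot : e g ∈ rotations n := by
      refine Subgroup.closure_induction ?_ ?_ ?_ ?_ hgmem
      · rintro z (rfl | rfl)
        · exact ⟨i, by rw [hex]⟩
        · exact ⟨j, by rw [hey]⟩
      · simpa using (rotations n).one_mem
      · intro a b _ _ ha hb
        simpa using (rotations n).mul_mem ha hb
      · intro a _ ha
        simpa using (rotations n).inv_mem ha
    rw [hg, MulEquiv.apply_symm_apply] at hrot
    obtain ⟨k, hk⟩ := hrot
    simp at hk
  · -- x rotation, y reflection : y and x*y
    right; right
    have h1 := refl_sq e y' j hey
    have h2 := refl_sq e (x' * y') (j - i) (by rw [_root_.map_mul, hex, hey, DihedralGroup.r_mul_sr])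
    exact ⟨(push _ h1).1, (push _ h1).2, (push _ h2).1, (push _ h2).2⟩
  · -- x reflection, y rotation : x and x*y
    right; left
    have h1 := refl_sq e x' i hex
    have h2 := refl_sq e (x' * y') (i + j) (by rw [_root_.map_mul, hex, hey, DihedralGroup.sr_mul_r])
    exact ⟨(push _ h1).1, (push _ h1).2, (push _ h2).1, (push _ h2).2⟩
  · -- both reflections
    left
    have h1 := refl_sq e x' i hex
    have h2 := refl_sq e y' j hey
    exact ⟨(push _ h1).1, (push _ h1).2, (push _ h2).1, (push _ h2).2⟩

private lemma key_trace {p : ℕ} [Fact p.Prime] (hp5 : 5 < p)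
    (A : Matrix.SpecialLinearGroup (Fin 2) (ZMod p))
    (h2 : (QuotientGroup.mk A : Matrix.SpecialLinearGroup (Fin 2) (ZMod p) ⧸
      Subgroup.center (Matrix.SpecialLinearGroup (Fin 2) (ZMod p))) ^ 2 = 1)
    (h1 : (QuotientGroup.mk A : Matrix.SpecialLinearGroup (Fin 2) (ZMod p) ⧸
      Subgroup.center (Matrix.SpecialLinearGroup (Fin 2) (ZMod p))) ≠ 1) :
    Matrix.trace (A : Matrix (Fin 2) (Fin 2) (ZMod p)) = 0 := by
  have hpsub : ∀ k : ℕ, (k : ZMod p) = 0 → p ∣ k := fun k => (ZMod.natCast_eq_zero_iff k p).mp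
  have h2ne : (2 : ZMod p) ≠ 0 := by
    intro h
    have := hpsub 2 (by exact_mod_cast h)
    have := Nat.le_of_dvd (by norm_num) this
    omega
  set a := (A : Matrix (Fin 2) (Fin 2) (ZMod p)) 0 0 with ha
  set b := (A : Matrix (Fin 2) (Fin 2) (ZMod p)) 0 1 with hb
  set c := (A : Matrix (Fin 2) (Fin 2) (ZMod p)) 1 0 with hc
  set d := (A : Matrix (Fin 2) (Fin 2) (ZMod p)) 1 1 with hd
  have hdet : a * d - b * c = 1 := by
    rw [ha, hb, hc, hd, ← Matrix.det_fin_two]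
    exact A.property
  -- A^2 is central
  have hcent : A ^ 2 ∈ Subgroup.center (Matrix.SpecialLinearGroup (Fin 2) (ZMod p)) := by
    rw [← QuotientGroup.eq_one_iff, QuotientGroup.mk_pow]
    exact h2
  obtain ⟨r, hr, hscalar⟩ := Matrix.SpecialLinearGroup.mem_center_iff.mp hcent
  rw [Fintype.card_fin] at hr
  have hr' : r = 1 ∨ r = -1 := by
    have : (r - 1) * (r + 1) = 0 := by ring_nf; linear_combination hr
    rcases mul_eq_zero.mp this with h | h
    · left; linear_combination h
    · right; linear_combination h
  have hAA : (A : Matrix (Fin 2) (Fin 2) (ZMod p)) * A = Matrix.scalar (Fin 2) r := by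
    rw [hscalar, sq, Matrix.SpecialLinearGroup.coe_mul]
  have hsq : ∀ i j, ((A : Matrix (Fin 2) (Fin 2) (ZMod p)) * (A : Matrix (Fin 2) (Fin 2) (ZMod p))) i j
      = Matrix.scalar (Fin 2) r i j := fun i j => by rw [hAA]
  have h00 : a * a + b * c = r := by
    have := hsq 0 0
    simpa [Matrix.mul_apply, Fin.sum_univ_two, Matrix.scalar_apply, Matrix.diagonal_apply,
      ← ha, ← hb, ← hc, ← hd] using this
  have h01 : a * b + b * d = 0 := by
    have := hsq 0 1
    simpa [Matrix.mul_apply, Fin.sum_univ_two, Matrix.scalar_apply, Matrix.diagonal_apply,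
      ← ha, ← hb, ← hc, ← hd] using this
  have h10 : c * a + d * c = 0 := by
    have := hsq 1 0
    simpa [Matrix.mul_apply, Fin.sum_univ_two, Matrix.scalar_apply, Matrix.diagonal_apply,
      ← ha, ← hb, ← hc, ← hd] using this
  have h11 : c * b + d * d = r := by
    have := hsq 1 1
    simpa [Matrix.mul_apply, Fin.sum_univ_two, Matrix.scalar_apply, Matrix.diagonal_apply,
      ← ha, ← hb, ← hc, ← hd] using this
  have htr : Matrix.trace (A : Matrix (Fin 2) (Fin 2) (ZMod p)) = a + d := by
    rw [Matrix.trace_fin_two]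
  rw [htr]
  rcases hr' with rfl | rfl
  · -- r = 1 : A^2 = I, so A must be central, contradiction
    exfalso
    have htrne : a + d ≠ 0 := by
      intro h0
      have : (2 : ZMod p) = 0 := by linear_combination a * h0 - h00 - hdet
      exact h2ne this
    have hbz : b = 0 := by
      have : b * (a + d) = 0 := by linear_combination h01
      rcases mul_eq_zero.mp this with h | h
      · exact h
      · exact absurd h htrne
    have hcz : c = 0 := by
      have : c * (a + d) = 0 := by linear_combination h10
      rcases mul_eq_zero.mp this with h | h
      · exact h
      · exact absurd h htrne
    have haa : a * a = 1 := by linear_combination h00 - c * hbz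
    have had : a * d = 1 := by linear_combination hdet + b * hcz
    have hda : d = a := by linear_combination a * had - d * haa
    have hmem : A ∈ Subgroup.center (Matrix.SpecialLinearGroup (Fin 2) (ZMod p)) := by
      rw [Matrix.SpecialLinearGroup.mem_center_iff]
      refine ⟨a, by rw [Fintype.card_fin]; linear_combination haa, ?_⟩
      ext i j
      fin_cases i <;> fin_cases j <;>
        simp [Matrix.scalar_apply, Matrix.diagonal_apply, ← ha, ← hb, ← hc, ← hd, hbz, hcz, hda]
    exact h1 ((QuotientGroup.eq_one_iff A).mpr hmem)
  · -- r = -1 : trace is zero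
    by_contra htrne
    have haz : a = 0 := by
      have : a * (a + d) = 0 := by linear_combination h00 + hdet
      rcases mul_eq_zero.mp this with h | h
      · exact h
      · exact absurd h htrne
    have hdz : d = 0 := by
      have : d * (a + d) = 0 := by linear_combination h11 + hdet
      rcases mul_eq_zero.mp this with h | h
      · exact h
      · exact absurd h htrne
    rw [haz, hdz, add_zero] at htrne
    exact htrne rfl

theorem dihedral_pair_traces (p n : ℕ) (hp : p.Prime) (hp5 : 5 < p) (hn : 1 ≤ n)
    (A B : Matrix.SpecialLinearGroup (Fin 2) (ZMod p))
    (hiso : Nonempty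
      ((Subgroup.closure {(QuotientGroup.mk A :
          Matrix.SpecialLinearGroup (Fin 2) (ZMod p) ⧸
            Subgroup.center (Matrix.SpecialLinearGroup (Fin 2) (ZMod p))),
        QuotientGroup.mk B}) ≃* DihedralGroup n)) :
    (Matrix.trace (A : Matrix (Fin 2) (Fin 2) (ZMod p)) = 0 ∧
      Matrix.trace (B : Matrix (Fin 2) (Fin 2) (ZMod p)) = 0) ∨
    (Matrix.trace (A : Matrix (Fin 2) (Fin 2) (ZMod p)) = 0 ∧
      Matrix.trace ((A * B : Matrix.SpecialLinearGroup (Fin 2) (ZMod p)) :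
        Matrix (Fin 2) (Fin 2) (ZMod p)) = 0) ∨
    (Matrix.trace (B : Matrix (Fin 2) (Fin 2) (ZMod p)) = 0 ∧
      Matrix.trace ((A * B : Matrix.SpecialLinearGroup (Fin 2) (ZMod p)) :
        Matrix (Fin 2) (Fin 2) (ZMod p)) = 0) := by
  haveI : Fact p.Prime := ⟨hp⟩
  obtain ⟨e⟩ := hiso
  have hmul : (QuotientGroup.mk A : Matrix.SpecialLinearGroup (Fin 2) (ZMod p) ⧸
      Subgroup.center (Matrix.SpecialLinearGroup (Fin 2) (ZMod p))) * QuotientGroup.mk B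
      = QuotientGroup.mk (A * B) := rfl
  rcases gen_dihedral_orders n (QuotientGroup.mk A) (QuotientGroup.mk B) e with
    ⟨ha2, ha1, hb2, hb1⟩ | ⟨ha2, ha1, hab2, hab1⟩ | ⟨hb2, hb1, hab2, hab1⟩
  · exact Or.inl ⟨key_trace hp5 A ha2 ha1, key_trace hp5 B hb2 hb1⟩
  · rw [hmul] at hab2 hab1
    exact Or.inr (Or.inl ⟨key_trace hp5 A ha2 ha1, key_trace hp5 (A * B) hab2 hab1⟩)
  · rw [hmul] at hab2 hab1
    exact Or.inr (Or.inr ⟨key_trace hp5 B hb2 hb1, key_trace hp5 (A * B) hab2 hab1⟩)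
end

section
/- Let p be a prime with p > 5 and let t ∈ 𝔽_p with t ≠ 2 and t ≠ −2. Then there exist A, B ∈ SL(2, 𝔽_p) with tr(A) = t, tr(B) = 0, tr(AB) = 0, such that the subgroup of PSL₂(𝔽_p) generated by the images of A and B is isomorphic to a dihedral group D_n for some n ≥ 1. -/
/-!
Take `B = S = !![0, -1; 1, 0]` and `A = !![t/2 + u, v; v, t/2 - u]` with `u² + v² = t²/4 - 1`
(solvable in every `𝔽_p`). Then `B` and `AB` are traceless, so by Cayley–Hamilton both square
to `-1`, and their images `s`, `as` in `PSL₂(𝔽_p)` satisfy `s² = (as)² = 1`. A symmetric matrix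
commuting with `S` is scalar, hence `±1` of trace `±2`; so `A` and `S` do not commute, and hence
`s ≠ 1` and `s ≠ a`. These exclude `s ∈ ⟨a⟩`: such an `s` commutes with `a`, forcing `a² = 1`.
Then `r ↦ a`, `sr ↦ s` defines an isomorphism `D_{ord a} ≃* ⟨a, s⟩`.
-/

open scoped MatrixGroups

namespace DihedralGroup

variable {n : ℕ} [NeZero n] {G : Type*} [Group G] {a s : G}

theorem pow_val_add (ha : a ^ n = 1) (i j : ZMod n) :
    a ^ (i + j).val = a ^ i.val * a ^ j.val := by
  rw [ZMod.val_add, ← pow_eq_pow_mod _ ha, pow_add]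

theorem pow_val_neg (ha : a ^ n = 1) (i : ZMod n) : a ^ (-i).val = (a ^ i.val)⁻¹ := by
  rw [eq_inv_iff_mul_eq_one, ← pow_val_add ha, neg_add_cancel, ZMod.val_zero, pow_zero]

theorem pow_val_sub (ha : a ^ n = 1) (i j : ZMod n) :
    a ^ (j - i).val = (a ^ i.val)⁻¹ * a ^ j.val := by
  rw [← neg_add_eq_sub, pow_val_add ha, pow_val_neg ha]

omit [NeZero n] in
theorem pow_mul_eq_mul_inv_pow (hs : s * s = 1) (hsa : s * a * s⁻¹ = a⁻¹) (k : ℕ) :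
    a ^ k * s = s * (a ^ k)⁻¹ := by
  rw [← inv_pow, ← hsa, conj_pow, inv_eq_of_mul_eq_one_right hs]
  simp only [← mul_assoc, hs, one_mul]

def lift (ha : a ^ n = 1) (hs : s * s = 1) (hsa : s * a * s⁻¹ = a⁻¹) :
    DihedralGroup n →* G :=
  MonoidHom.mk' (fun | r i => a ^ i.val | sr i => s * a ^ i.val) <| by
    have key := pow_mul_eq_mul_inv_pow hs hsa
    rintro (i | i) (j | j)
    · simp only [r_mul_r, pow_val_add ha]
    · simp only [r_mul_sr, pow_val_sub ha, ← mul_assoc, key]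
    · simp only [sr_mul_r, pow_val_add ha, mul_assoc]
    · simp only [sr_mul_sr, pow_val_sub ha]
      rw [mul_assoc, ← mul_assoc (a ^ i.val), key, ← mul_assoc, ← mul_assoc, hs, one_mul]

variable (ha : a ^ n = 1) (hs : s * s = 1) (hsa : s * a * s⁻¹ = a⁻¹)

@[simp]
theorem lift_r (i : ZMod n) : lift ha hs hsa (r i) = a ^ i.val := rfl

@[simp]
theorem lift_sr (i : ZMod n) : lift ha hs hsa (sr i) = s * a ^ i.val := rfl

theorem lift_injective (hn : orderOf a = n) (hmem : s ∉ Subgroup.zpowers a) :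
    Function.Injective (lift ha hs hsa) := by
  rw [injective_iff_map_eq_one]
  rintro (i | i) h
  · rw [lift_r, ← orderOf_dvd_iff_pow_eq_one, hn] at h
    rw [one_def, (ZMod.val_eq_zero i).mp (Nat.eq_zero_of_dvd_of_lt h (ZMod.val_lt i))]
  · rw [lift_sr, mul_eq_one_iff_eq_inv] at h
    exact absurd (h ▸ Subgroup.inv_mem _ (Subgroup.npow_mem_zpowers a _)) hmem

theorem range_lift : (lift ha hs hsa).range = Subgroup.closure {a, s} := by
  apply le_antisymm
  · rintro _ ⟨i | i, rfl⟩
    · exact Subgroup.pow_mem _ (Subgroup.subset_closure (by simp)) _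
    · exact Subgroup.mul_mem _ (Subgroup.subset_closure (by simp))
        (Subgroup.pow_mem _ (Subgroup.subset_closure (by simp)) _)
  · rw [Subgroup.closure_le]
    rintro x (rfl | rfl)
    · exact ⟨r 1, by rw [lift_r, ZMod.val_one_eq_one_mod, ← pow_eq_pow_mod _ ha, pow_one]⟩
    · exact ⟨sr 0, by simp⟩

noncomputable def mulEquivClosure (hn : orderOf a = n) (hmem : s ∉ Subgroup.zpowers a) :
    DihedralGroup n ≃* Subgroup.closure {a, s} :=
  (MonoidHom.ofInjective (lift_injective ha hs hsa hn hmem)).trans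
    (MulEquiv.subgroupCongr (range_lift ha hs hsa))

end DihedralGroup

theorem Subgroup.exists_closure_pair_mulEquiv_dihedralGroup {G : Type*} [Group G] {a s : G}
    (ha : IsOfFinOrder a) (hs : s * s = 1) (has : a * s * (a * s) = 1) (hs_ne_one : s ≠ 1)
    (hs_ne_a : s ≠ a) : ∃ n, 1 ≤ n ∧ Nonempty (closure {a, s} ≃* DihedralGroup n) := by
  have hconj : s * a * s⁻¹ = a⁻¹ := by
    rw [eq_inv_iff_mul_eq_one, inv_eq_of_mul_eq_one_right hs]
    calc s * a * s * a = s * (a * s * (a * s)) * s⁻¹ := by group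
      _ = 1 := by rw [has]; group
  have hmem : s ∉ zpowers a := by
    rintro ⟨k, rfl : a ^ k = s⟩
    have ha2 : a ^ 2 = 1 := by
      rw [((Commute.refl a).zpow_left k).eq, mul_inv_cancel_right] at hconj
      rw [pow_two, mul_eq_one_iff_eq_inv]
      exact hconj
    rcases Int.emod_two_eq_zero_or_one k with hk | hk <;>
      simp only [zpow_eq_zpow_emod' k ha2, Nat.cast_ofNat, hk, zpow_zero, zpow_one] at hs_ne_one hs_ne_a <;>
      contradiction
  have : NeZero (orderOf a) := ⟨ha.orderOf_pos.ne'⟩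
  exact ⟨orderOf a, ha.orderOf_pos,
    ⟨(DihedralGroup.mulEquivClosure (pow_orderOf_eq_one a) hs hconj rfl hmem).symm⟩⟩

namespace QuotientGroup

variable {G : Type*} [Group G] {g h : G}

theorem mk_ne_one_of_not_commute (hgh : ¬Commute g h) : (h : G ⧸ Subgroup.center G) ≠ 1 :=
  fun hh => hgh (Subgroup.mem_center_iff.mp ((eq_one_iff h).mp hh) g)

theorem mk_ne_mk_of_not_commute (hgh : ¬Commute g h) : (h : G ⧸ Subgroup.center G) ≠ g :=
  fun hh => hgh <| by
    have hc : Commute h (h * (h⁻¹ * g)) :=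
      (Commute.refl h).mul_right (Subgroup.mem_center_iff.mp (QuotientGroup.eq.mp hh) h)
    simpa using hc.symm

end QuotientGroup

namespace Matrix.SpecialLinearGroup

variable {R : Type*} [CommRing R]

theorem mul_self_eq_neg_one_of_trace_eq_zero {M : SL(2, R)}
    (h : trace (M : Matrix (Fin 2) (Fin 2) R) = 0) : M * M = -1 := by
  have hdet := M.det_coe
  rw [det_fin_two] at hdet
  rw [trace_fin_two] at h
  ext i j
  fin_cases i <;> fin_cases j <;>
    simp only [Fin.zero_eta, Fin.mk_one, Fin.isValue, coe_mul, mul_apply, Fin.sum_univ_two,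
      coe_neg, coe_one, neg_apply, one_apply_eq, one_apply_ne, ne_eq, zero_ne_one, one_ne_zero,
      not_false_eq_true, neg_zero]
  · linear_combination (M 0 0 : R) * h - hdet
  · linear_combination (M 0 1 : R) * h
  · linear_combination (M 1 0 : R) * h
  · linear_combination (M 1 1 : R) * h - hdet

theorem neg_one_mem_center : (-1 : SL(2, R)) ∈ Subgroup.center SL(2, R) :=
  Subgroup.mem_center_iff.mpr fun g => by rw [mul_neg_one, neg_one_mul]

theorem mk_mul_self_eq_one_of_trace_eq_zero {M : SL(2, R)}
    (h : trace (M : Matrix (Fin 2) (Fin 2) R) = 0) :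
    (M : SL(2, R) ⧸ Subgroup.center SL(2, R)) * M = 1 := by
  rw [← QuotientGroup.mk_mul, QuotientGroup.eq_one_iff, mul_self_eq_neg_one_of_trace_eq_zero h]
  exact neg_one_mem_center

theorem coe_intCast_S :
    ((ModularGroup.S : SL(2, R)) : Matrix (Fin 2) (Fin 2) R) = !![0, -1; 1, 0] := by
  ext i j
  fin_cases i <;> fin_cases j <;> simp [ModularGroup.coe_S]

theorem trace_intCast_S : trace ((ModularGroup.S : SL(2, R)) : Matrix (Fin 2) (Fin 2) R) = 0 := by
  rw [coe_intCast_S, trace_fin_two_of]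
  simp

theorem trace_mul_S_of_isSymm {A : SL(2, R)} (hA : (A : Matrix (Fin 2) (Fin 2) R).IsSymm) :
    trace ((A * ModularGroup.S : SL(2, R)) : Matrix (Fin 2) (Fin 2) R) = 0 := by
  rw [coe_mul, coe_intCast_S, eta_fin_two (A : Matrix (Fin 2) (Fin 2) R), mul_fin_two,
    trace_fin_two_of]
  simp [hA.apply 0 1]

theorem trace_eq_two_or_neg_two_of_isSymm_of_commute_S [NoZeroDivisors R] (h2 : (2 : R) ≠ 0)
    {A : SL(2, R)} (hA : (A : Matrix (Fin 2) (Fin 2) R).IsSymm)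
    (hAS : Commute A (ModularGroup.S : SL(2, R))) :
    trace (A : Matrix (Fin 2) (Fin 2) R) = 2 ∨ trace (A : Matrix (Fin 2) (Fin 2) R) = -2 := by
  have hmat := congrArg Subtype.val hAS.eq
  rw [coe_mul, coe_mul, coe_intCast_S] at hmat
  have h00 := congrFun₂ hmat 0 0
  have h01 := congrFun₂ hmat 0 1
  simp only [Fin.isValue, mul_apply, of_apply, cons_val', cons_val_zero, cons_val_fin_one,
    Fin.sum_univ_two, mul_zero, cons_val_one, mul_one, zero_add, zero_mul, hA.apply 0 1, neg_mul,
    one_mul, mul_neg, add_zero, neg_inj] at h00 h01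
  have hoff : (A 0 1 : R) = 0 :=
    (mul_eq_zero.mp (by linear_combination h00 : 2 * (A 0 1 : R) = 0)).resolve_left h2
  have hsq : (A 0 0 : R) * A 0 0 = 1 := by
    have hdet := A.det_coe
    rw [det_fin_two, hA.apply 0 1, hoff, ← h01] at hdet
    linear_combination hdet
  rw [trace_fin_two, ← h01]
  rcases mul_self_eq_one_iff.mp hsq with h | h
  · left; rw [h]; norm_num
  · right; rw [h]; norm_num

theorem exists_isSymm_trace_eq {p : ℕ} [Fact p.Prime] (h2 : (2 : ZMod p) ≠ 0) (t : ZMod p) :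
    ∃ A : SL(2, ZMod p), (A : Matrix (Fin 2) (Fin 2) (ZMod p)).IsSymm ∧
      trace (A : Matrix (Fin 2) (Fin 2) (ZMod p)) = t := by
  obtain ⟨u, v, huv⟩ := ZMod.sq_add_sq p ((t / 2) ^ 2 - 1)
  refine ⟨⟨!![t / 2 + u, v; v, t / 2 - u], ?_⟩, ?_, ?_⟩
  · rw [det_fin_two_of]
    linear_combination -huv
  · ext i j
    fin_cases i <;> fin_cases j <;> rfl
  · rw [trace_fin_two_of]
    field_simp
    ring

end Matrix.SpecialLinearGroup

open Matrix.SpecialLinearGroup in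
theorem dihedral_orbit_exists (p : ℕ) (hp : p.Prime) (hp5 : 5 < p) (t : ZMod p)
    (ht2 : t ≠ 2) (htm2 : t ≠ -2) :
    ∃ A B : Matrix.SpecialLinearGroup (Fin 2) (ZMod p),
      Matrix.trace (A : Matrix (Fin 2) (Fin 2) (ZMod p)) = t ∧
      Matrix.trace (B : Matrix (Fin 2) (Fin 2) (ZMod p)) = 0 ∧
      Matrix.trace ((A * B : Matrix.SpecialLinearGroup (Fin 2) (ZMod p)) :
        Matrix (Fin 2) (Fin 2) (ZMod p)) = 0 ∧
      ∃ n : ℕ, 1 ≤ n ∧ Nonempty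
        ((Subgroup.closure {(QuotientGroup.mk A :
            Matrix.SpecialLinearGroup (Fin 2) (ZMod p) ⧸
              Subgroup.center (Matrix.SpecialLinearGroup (Fin 2) (ZMod p))),
          QuotientGroup.mk B}) ≃* DihedralGroup n) := by
  have : Fact p.Prime := ⟨hp⟩
  have h2 : (2 : ZMod p) ≠ 0 := Ring.two_ne_zero (by rw [ZMod.ringChar_zmod_n]; omega)
  obtain ⟨A, hA, hAt⟩ := exists_isSymm_trace_eq h2 t
  have hAS := trace_mul_S_of_isSymm hA
  have hcomm : ¬Commute A ModularGroup.S := fun h =>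
    (trace_eq_two_or_neg_two_of_isSymm_of_commute_S h2 hA h).elim (hAt ▸ ht2) (hAt ▸ htm2)
  refine ⟨A, ModularGroup.S, hAt, trace_intCast_S, hAS, ?_⟩
  exact Subgroup.exists_closure_pair_mulEquiv_dihedralGroup (isOfFinOrder_of_finite _)
    (mk_mul_self_eq_one_of_trace_eq_zero trace_intCast_S)
    (by rw [← QuotientGroup.mk_mul]; exact mk_mul_self_eq_one_of_trace_eq_zero hAS)
    (QuotientGroup.mk_ne_one_of_not_commute hcomm) (QuotientGroup.mk_ne_mk_of_not_commute hcomm)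
end

section
/- Let p be a prime with p > 5 and let A, B ∈ SL(2, 𝔽_p) be such that the subgroup of PSL₂(𝔽_p) generated by the images of A and B is isomorphic to the alternating group A₄. Then tr(A B A⁻¹ B⁻¹) = 0, and each of the traces tr(A), tr(B), tr(AB) lies in the set {0, 1, −1}. -/
set_option maxRecDepth 10000

private lemma sq_trace' {F : Type*} [Field F] (h2 : (2:F) ≠ 0) (M : Matrix (Fin 2) (Fin 2) F)
    (hdet : M.det = 1) (h1 : M ≠ 1) (hn1 : M ≠ -1)
    (h : M*M = 1 ∨ M*M = -1) : M.trace = 0 := by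
  rw [Matrix.det_fin_two] at hdet
  rw [Matrix.trace_fin_two]
  rcases h with h | h
  · have h00 := congr_fun (congr_fun h 0) 0
    have h01 := congr_fun (congr_fun h 0) 1
    have h10 := congr_fun (congr_fun h 1) 0
    simp [Matrix.mul_apply, Fin.sum_univ_two, Matrix.one_apply] at h00 h01 h10
    by_cases ht : M 0 0 + M 1 1 = 0
    · exact absurd (by linear_combination -h00 - hdet + (M 0 0) * ht) h2
    · have hb : M 0 1 = 0 ∨ M 0 0 + M 1 1 = 0 := by
        rcases mul_eq_zero.mp (show M 0 1 * (M 0 0 + M 1 1) = 0 by linear_combination h01) with h' | h'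
        exacts [Or.inl h', Or.inr h']
      have hc : M 1 0 = 0 ∨ M 0 0 + M 1 1 = 0 := by
        rcases mul_eq_zero.mp (show M 1 0 * (M 0 0 + M 1 1) = 0 by linear_combination h10) with h' | h'
        exacts [Or.inl h', Or.inr h']
      rcases hb with hb | hb; swap; · exact absurd hb ht
      rcases hc with hc | hc; swap; · exact absurd hc ht
      have ha : (M 0 0 - 1) * (M 0 0 + 1) = 0 := by linear_combination h00 - (M 1 0) * hb
      rcases mul_eq_zero.mp ha with ha | ha
      · exfalso; apply h1
        have ha : M 0 0 = 1 := by linear_combination ha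
        have hd : M 1 1 = 1 := by linear_combination hdet - (M 1 1)*ha + (M 0 1)*hc
        ext i j; fin_cases i <;> fin_cases j <;> simp [Matrix.one_apply, ha, hb, hc, hd]
      · exfalso; apply hn1
        have ha : M 0 0 = -1 := by linear_combination ha
        have hd : M 1 1 = -1 := by linear_combination -hdet + (M 1 1)*ha - (M 0 1)*hc
        ext i j; fin_cases i <;> fin_cases j <;>
          simp [Matrix.neg_apply, Matrix.one_apply, ha, hb, hc, hd]
  · have h00 := congr_fun (congr_fun h 0) 0
    have h01 := congr_fun (congr_fun h 0) 1
    have h10 := congr_fun (congr_fun h 1) 0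
    simp [Matrix.mul_apply, Fin.sum_univ_two, Matrix.one_apply, Matrix.neg_apply] at h00 h01 h10
    by_cases ht : M 0 0 + M 1 1 = 0
    · exact ht
    · exfalso
      have hb : M 0 1 = 0 := by
        rcases mul_eq_zero.mp (show M 0 1 * (M 0 0 + M 1 1) = 0 by linear_combination h01) with h' | h'
        exacts [h', absurd h' ht]
      have ha0 : M 0 0 * (M 0 0 + M 1 1) = 0 := by linear_combination h00 + hdet
      rcases mul_eq_zero.mp ha0 with ha | ha
      · have : (1:F) = 0 := by linear_combination h00 - (M 0 0)*ha - (M 1 0)*hb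
        simp at this
      · exact ht ha

private lemma cube_trace' {F : Type*} [Field F] (M : Matrix (Fin 2) (Fin 2) F)
    (hdet : M.det = 1) (h1 : M ≠ 1) (hn1 : M ≠ -1)
    (h : M*M*M = 1 ∨ M*M*M = -1) : M.trace = 1 ∨ M.trace = -1 := by
  rw [Matrix.det_fin_two] at hdet
  rw [Matrix.trace_fin_two]
  have key : ∀ R : F, M*M*M = R • (1 : Matrix (Fin 2) (Fin 2) F) →
      (M 0 0 + M 1 1 = -R ∨
        (M 0 1 = 0 ∧ M 1 0 = 0 ∧ M 0 0 = M 1 1 ∧ (M 0 0 - 1) * (M 0 0 + 1) = 0)) := by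
    intro R h
    have h00 := congr_fun (congr_fun h 0) 0
    have h01 := congr_fun (congr_fun h 0) 1
    have h10 := congr_fun (congr_fun h 1) 0
    have h11 := congr_fun (congr_fun h 1) 1
    simp [Matrix.mul_apply, Fin.sum_univ_two, Matrix.one_apply, Matrix.smul_apply]
      at h00 h01 h10 h11
    have E00 : M 0 0 * ((M 0 0 + M 1 1)^2 - 1) - (M 0 0 + M 1 1) = R := by
      linear_combination h00 + (2*(M 0 0)+(M 1 1))*hdet
    have E11 : M 1 1 * ((M 0 0 + M 1 1)^2 - 1) - (M 0 0 + M 1 1) = R := by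
      linear_combination h11 + ((M 0 0)+2*(M 1 1))*hdet
    by_cases hs : (M 0 0 + M 1 1)^2 - 1 = 0
    · exact Or.inl (by linear_combination (M 0 0)*hs - E00)
    · right
      have hb : M 0 1 = 0 := by
        rcases mul_eq_zero.mp (show (M 0 1) * ((M 0 0 + M 1 1)^2 - 1) = 0 by
          linear_combination h01 + (M 0 1)*hdet) with h' | h'
        exacts [h', absurd h' hs]
      have hc : M 1 0 = 0 := by
        rcases mul_eq_zero.mp (show (M 1 0) * ((M 0 0 + M 1 1)^2 - 1) = 0 by
          linear_combination h10 + (M 1 0)*hdet) with h' | h'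
        exacts [h', absurd h' hs]
      have had : M 0 0 = M 1 1 := by
        rcases mul_eq_zero.mp (show (M 0 0 - M 1 1) * ((M 0 0 + M 1 1)^2 - 1) = 0 by
          linear_combination E00 - E11) with h' | h'
        · linear_combination h'
        · exact absurd h' hs
      exact ⟨hb, hc, had, by linear_combination hdet + (M 0 0)*had + (M 1 0)*hb⟩
  have done : ∀ R : F, M*M*M = R • (1 : Matrix (Fin 2) (Fin 2) F) →
      (M 0 0 + M 1 1 = -R ∨ False) := by
    intro R hR
    rcases key R hR with h' | ⟨hb, hc, had, hq⟩
    · exact Or.inl h'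
    · right
      rcases mul_eq_zero.mp hq with h' | h'
      · apply h1
        have ha : M 0 0 = 1 := by linear_combination h'
        ext i j; fin_cases i <;> fin_cases j <;>
          simp [Matrix.one_apply, ha, hb, hc, had ▸ ha]
      · apply hn1
        have ha : M 0 0 = -1 := by linear_combination h'
        ext i j; fin_cases i <;> fin_cases j <;>
          simp [Matrix.neg_apply, Matrix.one_apply, ha, hb, hc, had ▸ ha]
  rcases h with h | h
  · rcases done 1 (by simpa using h) with h' | h'
    · exact Or.inr (by linear_combination h')
    · exact h'.elim
  · rcases done (-1) (by simpa using h) with h' | h'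
    · exact Or.inl (by linear_combination h')
    · exact h'.elim

private lemma center_iff' {p : ℕ} [Fact p.Prime] (X : Matrix.SpecialLinearGroup (Fin 2) (ZMod p)) :
    X ∈ Subgroup.center (Matrix.SpecialLinearGroup (Fin 2) (ZMod p)) ↔
      ((X : Matrix (Fin 2) (Fin 2) (ZMod p)) = 1 ∨
        (X : Matrix (Fin 2) (Fin 2) (ZMod p)) = -1) := by
  rw [Matrix.SpecialLinearGroup.mem_center_iff]
  constructor
  · rintro ⟨r, hr, hs⟩
    rw [Fintype.card_fin] at hr
    have h0 : (r - 1) * (r + 1) = 0 := by linear_combination hr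
    rcases mul_eq_zero.mp h0 with h' | h'
    · left; rw [← hs, show r = 1 by linear_combination h', map_one]
    · right; rw [← hs, show r = -1 by linear_combination h', map_neg, map_one]
  · rintro (h | h)
    · exact ⟨1, one_pow _, by rw [map_one, h]⟩
    · exact ⟨-1, by rw [Fintype.card_fin]; ring, by rw [map_neg, map_one, h]⟩

/-- If the image of `X` in `PSL₂` is nontrivial and has `X²` central, then `tr X = 0`. -/
private lemma trace_of_sq {p : ℕ} [Fact p.Prime] (h2 : (2 : ZMod p) ≠ 0)
    (X : Matrix.SpecialLinearGroup (Fin 2) (ZMod p))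
    (hne : (QuotientGroup.mk X : Matrix.SpecialLinearGroup (Fin 2) (ZMod p) ⧸
      Subgroup.center (Matrix.SpecialLinearGroup (Fin 2) (ZMod p))) ≠ 1)
    (hsq : (QuotientGroup.mk X : Matrix.SpecialLinearGroup (Fin 2) (ZMod p) ⧸
      Subgroup.center (Matrix.SpecialLinearGroup (Fin 2) (ZMod p)))^2 = 1) :
    Matrix.trace (X : Matrix (Fin 2) (Fin 2) (ZMod p)) = 0 := by
  have hX : ¬((X : Matrix (Fin 2) (Fin 2) (ZMod p)) = 1 ∨
      (X : Matrix (Fin 2) (Fin 2) (ZMod p)) = -1) :=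
    fun h => hne ((QuotientGroup.eq_one_iff X).mpr ((center_iff' X).mpr h))
  push_neg at hX
  have hc : X^2 ∈ Subgroup.center (Matrix.SpecialLinearGroup (Fin 2) (ZMod p)) :=
    (QuotientGroup.eq_one_iff _).mp (by rw [QuotientGroup.mk_pow]; exact hsq)
  have := (center_iff' (X^2)).mp hc
  rw [Matrix.SpecialLinearGroup.coe_pow, pow_two] at this
  exact sq_trace' h2 _ X.2 hX.1 hX.2 this

private lemma trace_of_cube {p : ℕ} [Fact p.Prime]
    (X : Matrix.SpecialLinearGroup (Fin 2) (ZMod p))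
    (hne : (QuotientGroup.mk X : Matrix.SpecialLinearGroup (Fin 2) (ZMod p) ⧸
      Subgroup.center (Matrix.SpecialLinearGroup (Fin 2) (ZMod p))) ≠ 1)
    (hsq : (QuotientGroup.mk X : Matrix.SpecialLinearGroup (Fin 2) (ZMod p) ⧸
      Subgroup.center (Matrix.SpecialLinearGroup (Fin 2) (ZMod p)))^3 = 1) :
    Matrix.trace (X : Matrix (Fin 2) (Fin 2) (ZMod p)) = 1 ∨
      Matrix.trace (X : Matrix (Fin 2) (Fin 2) (ZMod p)) = -1 := by
  have hX : ¬((X : Matrix (Fin 2) (Fin 2) (ZMod p)) = 1 ∨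
      (X : Matrix (Fin 2) (Fin 2) (ZMod p)) = -1) :=
    fun h => hne ((QuotientGroup.eq_one_iff X).mpr ((center_iff' X).mpr h))
  push_neg at hX
  have hc : X^3 ∈ Subgroup.center (Matrix.SpecialLinearGroup (Fin 2) (ZMod p)) :=
    (QuotientGroup.eq_one_iff _).mp (by rw [QuotientGroup.mk_pow]; exact hsq)
  have := (center_iff' (X^3)).mp hc
  rw [Matrix.SpecialLinearGroup.coe_pow, show ((X : Matrix (Fin 2) (Fin 2) (ZMod p)))^3 =
    (X : Matrix (Fin 2) (Fin 2) (ZMod p)) * X * X by rw [pow_succ, pow_two]] at this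
  exact cube_trace' _ X.2 hX.1 hX.2 this

open scoped commutatorElement

theorem tetrahedral_pair_traces (p : ℕ) (hp : p.Prime) (hp5 : 5 < p)
    (A B : Matrix.SpecialLinearGroup (Fin 2) (ZMod p))
    (hiso : Nonempty
      ((Subgroup.closure {(QuotientGroup.mk A :
          Matrix.SpecialLinearGroup (Fin 2) (ZMod p) ⧸
            Subgroup.center (Matrix.SpecialLinearGroup (Fin 2) (ZMod p))),
        QuotientGroup.mk B}) ≃* alternatingGroup (Fin 4))) :
    Matrix.trace ((A * B * A⁻¹ * B⁻¹ : Matrix.SpecialLinearGroup (Fin 2) (ZMod p)) :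
      Matrix (Fin 2) (Fin 2) (ZMod p)) = 0 ∧
    (∀ t : ZMod p,
      (t = Matrix.trace (A : Matrix (Fin 2) (Fin 2) (ZMod p)) ∨
        t = Matrix.trace (B : Matrix (Fin 2) (Fin 2) (ZMod p)) ∨
        t = Matrix.trace ((A * B : Matrix.SpecialLinearGroup (Fin 2) (ZMod p)) :
          Matrix (Fin 2) (Fin 2) (ZMod p))) →
      t = 0 ∨ t = 1 ∨ t = -1) := by
  haveI : Fact p.Prime := ⟨hp⟩
  have h2 : (2 : ZMod p) ≠ 0 := by
    intro h
    have hd := (ZMod.natCast_eq_zero_iff 2 p).mp (by exact_mod_cast h)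
    have := Nat.le_of_dvd (by norm_num) hd
    omega
  -- A₄ facts
  have fact1 : ∀ x : alternatingGroup (Fin 4), x^2 = 1 ∨ x^3 = 1 := by decide
  have fact2 : ∀ x y : alternatingGroup (Fin 4), (⁅x,y⁆)^2 = 1 := by decide
  have fact3 : ¬ ∀ x y : alternatingGroup (Fin 4), x*y = y*x := by decide
  obtain ⟨φ⟩ := hiso
  set a : Matrix.SpecialLinearGroup (Fin 2) (ZMod p) ⧸
      Subgroup.center (Matrix.SpecialLinearGroup (Fin 2) (ZMod p)) := QuotientGroup.mk A with ha_def
  set b : Matrix.SpecialLinearGroup (Fin 2) (ZMod p) ⧸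
      Subgroup.center (Matrix.SpecialLinearGroup (Fin 2) (ZMod p)) := QuotientGroup.mk B with hb_def
  set G := Subgroup.closure {a, b} with hG_def
  have ha : a ∈ G := Subgroup.subset_closure (Set.mem_insert _ _)
  have hb : b ∈ G := Subgroup.subset_closure (Set.mem_insert_of_mem _ rfl)
  set a' : G := ⟨a, ha⟩ with ha'_def
  set b' : G := ⟨b, hb⟩ with hb'_def
  -- the commutator squares to 1
  have hcomm2 : (a*b*a⁻¹*b⁻¹)^2 = 1 := by
    have : (⁅a', b'⁆)^2 = 1 := φ.injective (by rw [map_pow, map_commutatorElement, map_one]; exact fact2 _ _)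
    have := congrArg (Subtype.val) this
    simpa [commutatorElement_def] using this
  -- a and b do not commute
  have hnc : a * b ≠ b * a := by
    intro hcomm
    have hsub : G ≤ Subgroup.centralizer {a, b} := by
      rw [hG_def]
      apply (Subgroup.closure_le _).mpr
      rintro x (rfl | rfl) <;> rw [SetLike.mem_coe, Subgroup.mem_centralizer_iff] <;>
        rintro g (rfl | rfl) <;> simp [hcomm]
    have key : ∀ x y : G, x * y = y * x := by
      intro x y
      have hmy := Subgroup.mem_centralizer_iff.mp (hsub y.2)
      have hsub2 : Subgroup.closure {a, b} ≤ Subgroup.centralizer {(y :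
          Matrix.SpecialLinearGroup (Fin 2) (ZMod p) ⧸
            Subgroup.center (Matrix.SpecialLinearGroup (Fin 2) (ZMod p)))} := by
        apply (Subgroup.closure_le _).mpr
        rintro z (rfl | rfl)
        · exact SetLike.mem_coe.mpr (Subgroup.mem_centralizer_iff.mpr (by
            rintro g rfl; exact (hmy a (Set.mem_insert _ _)).symm))
        · exact SetLike.mem_coe.mpr (Subgroup.mem_centralizer_iff.mpr (by
            rintro g rfl; exact (hmy b (Set.mem_insert_of_mem _ rfl)).symm))
      have hx := Subgroup.mem_centralizer_iff.mp (hsub2 x.2)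
      exact Subtype.ext (by simpa using (hx _ rfl).symm)
    apply fact3
    intro x y
    have h' := key (φ.symm x) (φ.symm y)
    have := congrArg φ h'
    simpa [map_mul] using this
  have hcne : a*b*a⁻¹*b⁻¹ ≠ 1 := fun h => hnc (commutatorElement_eq_one_iff_mul_comm.mp h)
  -- nontriviality of a, b, a*b
  have ha1 : a ≠ 1 := fun h => hcne (by rw [h]; group)
  have hb1 : b ≠ 1 := fun h => hcne (by rw [h]; group)
  have hab1 : a*b ≠ 1 := by
    intro h
    apply hcne
    rw [eq_inv_of_mul_eq_one_right h]
    group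
  -- small order facts
  have horder : ∀ x : G, x^2 = 1 ∨ x^3 = 1 := by
    intro x
    rcases fact1 (φ x) with h | h
    · exact Or.inl (φ.injective (by rw [map_pow, map_one]; exact h))
    · exact Or.inr (φ.injective (by rw [map_pow, map_one]; exact h))
  -- commutator in SL₂
  have hmkc : (QuotientGroup.mk (A * B * A⁻¹ * B⁻¹ : Matrix.SpecialLinearGroup (Fin 2) (ZMod p)) :
      Matrix.SpecialLinearGroup (Fin 2) (ZMod p) ⧸
        Subgroup.center (Matrix.SpecialLinearGroup (Fin 2) (ZMod p))) = a*b*a⁻¹*b⁻¹ := rfl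
  constructor
  · exact trace_of_sq h2 _ (by rw [hmkc]; exact hcne) (by rw [hmkc]; exact hcomm2)
  · have main : ∀ X : Matrix.SpecialLinearGroup (Fin 2) (ZMod p),
        ∀ hXG : (QuotientGroup.mk X : Matrix.SpecialLinearGroup (Fin 2) (ZMod p) ⧸
          Subgroup.center (Matrix.SpecialLinearGroup (Fin 2) (ZMod p))) ∈ G,
        (QuotientGroup.mk X : Matrix.SpecialLinearGroup (Fin 2) (ZMod p) ⧸
          Subgroup.center (Matrix.SpecialLinearGroup (Fin 2) (ZMod p))) ≠ 1 →
        Matrix.trace (X : Matrix (Fin 2) (Fin 2) (ZMod p)) = 0 ∨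
        Matrix.trace (X : Matrix (Fin 2) (Fin 2) (ZMod p)) = 1 ∨
        Matrix.trace (X : Matrix (Fin 2) (Fin 2) (ZMod p)) = -1 := by
      intro X hXG hX1
      rcases horder ⟨QuotientGroup.mk X, hXG⟩ with h | h
      · exact Or.inl (trace_of_sq h2 X hX1 (by simpa using congrArg Subtype.val h))
      · rcases trace_of_cube X hX1 (by simpa using congrArg Subtype.val h) with h' | h'
        exacts [Or.inr (Or.inl h'), Or.inr (Or.inr h')]
    rintro t (rfl | rfl | rfl)
    · exact main A ha ha1
    · exact main B hb hb1
    · exact main (A*B) (Subgroup.mul_mem _ ha hb) hab1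
end

section
/- Let p be a prime with p > 5 and let A, B ∈ SL(2, 𝔽_p) be such that the subgroup of PSL₂(𝔽_p) generated by the images of A and B is isomorphic to the symmetric group S₄. Then tr(A B A⁻¹ B⁻¹) = 1, and each trace t ∈ {tr(A), tr(B), tr(AB)} satisfies t = 0, or t² = 1, or t² = 2. -/
/-!
In `PSL₂(F)` an element of order 2, 3 or 4 lifts to some `g ∈ SL₂(F)` with `tr(g)² = 0, 1, 2`
respectively: by Cayley–Hamilton `g² = tr(g) g - 1` and `g³ = (tr(g)² - 1) g - tr(g)`, so if the
relevant power of `g` is central and the coefficient of `g` does not vanish, `g` itself is central.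
As the images of `A`, `B`, `AB` are nontrivial elements of `S₄`, this gives the second claim.

A finite check in `S₄` shows that for every generating pair `(σ, τ)` the commutator has order 3
and the orders of `(σ, τ, στ)` are a permutation of `(2, 3, 4)` or of `(3, 4, 4)`. Hence
`tr[A, B]² = 1`, and with `x, y, z` the traces of `A, B, AB`, Fricke's identity
`tr[A, B] = x² + y² + z² - xyz - 2` together with either `x² + y² + z² = 3, xyz = 0` or
`x² + y² + z² = 5, (xyz)² = 4` leaves only `tr[A, B] = 1`, since `6 ≠ 0` in `𝔽_p`.
-/

open Matrix Subgroup
open scoped MatrixGroups commutatorElement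

namespace Matrix.SpecialLinearGroup

section Center

variable {n : Type*} [DecidableEq n] [Fintype n] {F : Type*} [Field F]

theorem exists_coe_eq_smul_one_of_mem_center {g : SpecialLinearGroup n F}
    (hg : g ∈ center (SpecialLinearGroup n F)) : ∃ r : F, (g : Matrix n n F) = r • 1 := by
  obtain ⟨r, -, hr⟩ := mem_center_iff.1 hg
  exact ⟨r, by rw [← hr, scalar_apply, smul_one_eq_diagonal]⟩

theorem mem_center_of_smul_eq_smul_one {g : SpecialLinearGroup n F} {c s : F} (hc : c ≠ 0)
    (h : c • (g : Matrix n n F) = s • 1) : g ∈ center (SpecialLinearGroup n F) := by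
  have hg : (g : Matrix n n F) = (c⁻¹ * s) • 1 := by rw [mul_smul, ← h, inv_smul_smul₀ hc]
  refine mem_center_iff.2 ⟨c⁻¹ * s, ?_, ?_⟩
  · simpa [hg] using g.det_coe
  · rw [hg, smul_one_eq_diagonal, scalar_apply]

end Center

section CommRing

variable {R : Type*} [CommRing R] (g : SL(2, R))

theorem adjugate_eq_trace_smul_one_sub :
    adjugate (g : Matrix (Fin 2) (Fin 2) R) = trace (g : Matrix (Fin 2) (Fin 2) R) • 1 - g := by
  rw [adjugate_fin_two]
  ext i j
  fin_cases i <;> fin_cases j <;> simp [trace_fin_two]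

theorem sq_eq_trace_smul_sub_one :
    (g : Matrix (Fin 2) (Fin 2) R) ^ 2 = trace (g : Matrix (Fin 2) (Fin 2) R) • g - 1 := by
  have h := mul_adjugate (g : Matrix (Fin 2) (Fin 2) R)
  rw [g.det_coe, one_smul, adjugate_eq_trace_smul_one_sub, mul_sub, mul_smul_comm, mul_one,
    sub_eq_iff_eq_add] at h
  rw [sq, h]
  abel

theorem pow_three_eq_trace_sq_sub_one_smul_sub :
    (g : Matrix (Fin 2) (Fin 2) R) ^ 3 =
      (trace (g : Matrix (Fin 2) (Fin 2) R) ^ 2 - 1) • g -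
        trace (g : Matrix (Fin 2) (Fin 2) R) • 1 := by
  rw [pow_succ', sq_eq_trace_smul_sub_one, mul_sub, mul_smul_comm, ← sq, sq_eq_trace_smul_sub_one,
    mul_one]
  module

theorem trace_sq : trace ((g ^ 2 : SL(2, R)) : Matrix (Fin 2) (Fin 2) R) =
    trace (g : Matrix (Fin 2) (Fin 2) R) ^ 2 - 2 := by
  rw [coe_pow, sq_eq_trace_smul_sub_one, trace_sub, trace_smul, trace_one, Fintype.card_fin,
    smul_eq_mul, sq]
  norm_num

theorem trace_commutatorElement (A B : SL(2, R)) :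
    trace ((⁅A, B⁆ : SL(2, R)) : Matrix (Fin 2) (Fin 2) R) =
      trace (A : Matrix (Fin 2) (Fin 2) R) ^ 2 + trace (B : Matrix (Fin 2) (Fin 2) R) ^ 2
        + trace ((A * B : SL(2, R)) : Matrix (Fin 2) (Fin 2) R) ^ 2
        - trace (A : Matrix (Fin 2) (Fin 2) R) * trace (B : Matrix (Fin 2) (Fin 2) R)
          * trace ((A * B : SL(2, R)) : Matrix (Fin 2) (Fin 2) R) - 2 := by
  have hA := A.det_coe
  have hB := B.det_coe
  rw [det_fin_two] at hA hB
  simp only [commutatorElement_def, coe_mul, coe_inv, adjugate_fin_two, trace_fin_two, mul_apply,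
    Fin.sum_univ_two, of_apply, cons_val', cons_val_zero, cons_val_fin_one, cons_val_one, mul_neg]
  linear_combination (B 0 0 + B 1 1) ^ 2 * hA + (A 0 0 ^ 2 + 2 * A 0 1 * A 1 0 + A 1 1 ^ 2) * hB
    - 2 * hA

end CommRing

section Field

variable {F : Type*} [Field F] {g : SL(2, F)}

theorem trace_eq_zero_of_sq_mem_center (hg : g ∉ center SL(2, F))
    (h2 : g ^ 2 ∈ center SL(2, F)) : trace (g : Matrix (Fin 2) (Fin 2) F) = 0 := by
  obtain ⟨r, hr⟩ := exists_coe_eq_smul_one_of_mem_center h2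
  rw [coe_pow, sq_eq_trace_smul_sub_one, sub_eq_iff_eq_add] at hr
  by_contra ht
  exact hg (mem_center_of_smul_eq_smul_one ht (s := r + 1) (by rw [hr, add_smul, one_smul]))

theorem trace_sq_eq_one_of_pow_three_mem_center (hg : g ∉ center SL(2, F))
    (h3 : g ^ 3 ∈ center SL(2, F)) : trace (g : Matrix (Fin 2) (Fin 2) F) ^ 2 = 1 := by
  obtain ⟨r, hr⟩ := exists_coe_eq_smul_one_of_mem_center h3
  rw [coe_pow, pow_three_eq_trace_sq_sub_one_smul_sub, sub_eq_iff_eq_add] at hr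
  by_contra ht
  exact hg (mem_center_of_smul_eq_smul_one (sub_ne_zero.2 ht) (by rw [hr, ← add_smul]))

theorem trace_sq_eq_two_of_pow_four_mem_center (hg : g ^ 2 ∉ center SL(2, F))
    (h4 : g ^ 4 ∈ center SL(2, F)) : trace (g : Matrix (Fin 2) (Fin 2) F) ^ 2 = 2 := by
  have h := trace_eq_zero_of_sq_mem_center hg (by rwa [← pow_mul])
  rw [trace_sq] at h
  linear_combination h

variable (g)

theorem trace_sq_add_two_eq_orderOf
    (hg : orderOf (g : SL(2, F) ⧸ center SL(2, F)) ∈ Finset.Icc 2 4) :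
    trace (g : Matrix (Fin 2) (Fin 2) F) ^ 2 + 2 = orderOf (g : SL(2, F) ⧸ center SL(2, F)) := by
  have hmem (k : ℕ) : g ^ k ∈ center SL(2, F) ↔ (g : SL(2, F) ⧸ center SL(2, F)) ^ k = 1 := by
    rw [← QuotientGroup.mk_pow, QuotientGroup.eq_one_iff]
  have hpow : g ^ orderOf (g : SL(2, F) ⧸ center SL(2, F)) ∈ center SL(2, F) :=
    (hmem _).2 (pow_orderOf_eq_one _)
  have hlt {k : ℕ} (hk0 : k ≠ 0) (hk : k < orderOf (g : SL(2, F) ⧸ center SL(2, F))) :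
      g ^ k ∉ center SL(2, F) :=
    fun h => pow_ne_one_of_lt_orderOf hk0 hk ((hmem k).1 h)
  obtain ⟨hlo, hhi⟩ := Finset.mem_Icc.1 hg
  generalize orderOf (g : SL(2, F) ⧸ center SL(2, F)) = m at hpow hlt hlo hhi ⊢
  interval_cases m
  · rw [trace_eq_zero_of_sq_mem_center (by simpa using hlt one_ne_zero) hpow]
    norm_num
  · rw [trace_sq_eq_one_of_pow_three_mem_center (by simpa using hlt one_ne_zero) hpow]
    norm_num
  · rw [trace_sq_eq_two_of_pow_four_mem_center (hlt two_ne_zero (by norm_num)) hpow]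
    norm_num

theorem trace_eq_zero_or_sq_eq_one_or_sq_eq_two
    (hg : orderOf (g : SL(2, F) ⧸ center SL(2, F)) ∈ Finset.Icc 2 4) :
    trace (g : Matrix (Fin 2) (Fin 2) F) = 0 ∨ trace (g : Matrix (Fin 2) (Fin 2) F) ^ 2 = 1 ∨
      trace (g : Matrix (Fin 2) (Fin 2) F) ^ 2 = 2 := by
  have h := trace_sq_add_two_eq_orderOf g hg
  obtain ⟨hlo, hhi⟩ := Finset.mem_Icc.1 hg
  generalize orderOf (g : SL(2, F) ⧸ center SL(2, F)) = m at h hlo hhi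
  interval_cases m
  · exact Or.inl (pow_eq_zero_iff two_ne_zero |>.1 (by linear_combination h))
  · exact Or.inr (Or.inl (by linear_combination h))
  · exact Or.inr (Or.inr (by linear_combination h))

end Field

end Matrix.SpecialLinearGroup

/-- The triples `(orderOf σ, orderOf τ, orderOf (σ * τ))` of generating pairs of `S₄`. -/
def octahedralOrderTypes : Finset (ℕ × ℕ × ℕ) :=
  {(2, 3, 4), (2, 4, 3), (3, 2, 4), (3, 4, 2), (4, 2, 3), (4, 3, 2),
    (3, 4, 4), (4, 3, 4), (4, 4, 3)}

theorem mem_Icc_of_mem_octahedralOrderTypes :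
    ∀ t ∈ octahedralOrderTypes,
      t.1 ∈ Finset.Icc 2 4 ∧ t.2.1 ∈ Finset.Icc 2 4 ∧ t.2.2 ∈ Finset.Icc 2 4 := by
  decide

theorem Subgroup.mem_of_closure_pair_eq_top {G : Type*} [Group G] {a b : G}
    (h : closure {a, b} = ⊤) {K : Subgroup G} (ha : a ∈ K) (hb : b ∈ K) (x : G) : x ∈ K :=
  (closure_le K).2 (Set.insert_subset ha (Set.singleton_subset_iff.2 hb)) (h ▸ mem_top x)

namespace Equiv.Perm

set_option synthInstance.maxSize 1000 in
theorem orderOf_of_closure_pair_eq_top {σ τ : Perm (Fin 4)} (h : closure {σ, τ} = ⊤) :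
    orderOf ⁅σ, τ⁆ = 3 ∧ (orderOf σ, orderOf τ, orderOf (σ * τ)) ∈ octahedralOrderTypes := by
  have hfix (i : Fin 4) : σ i = i → τ i = i → ∀ π : Perm (Fin 4), π i = i :=
    mem_of_closure_pair_eq_top h (K := MulAction.stabilizer _ i)
  have hsign : sign σ = 1 → sign τ = 1 → ∀ π : Perm (Fin 4), sign π = 1 :=
    mem_of_closure_pair_eq_top h (K := alternatingGroup (Fin 4))
  have hcentral (g : Perm (Fin 4)) : g * σ = σ * g → g * τ = τ * g → ∀ π, g * π = π * g := by
    simpa [mem_centralizer_singleton_iff, eq_comm] using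
      mem_of_closure_pair_eq_top h (K := centralizer {g})
  -- Every maximal subgroup of `S₄` is a point stabiliser, `A₄`, or a dihedral group of order 8,
  -- the centraliser of a double transposition; so the hypotheses below single out exactly the
  -- generating pairs.
  clear h
  revert σ τ
  show ∀ σ τ : Perm (Fin 4), _
  simp (disch := decide) only [octahedralOrderTypes, Finset.mem_insert, Finset.mem_singleton,
    Prod.mk.injEq, orderOf_eq_iff]
  decide +kernel

end Equiv.Perm

theorem orderOf_of_closure_pair_mulEquiv_perm {G : Type*} [Group G] {u v : G}
    (e : closure {u, v} ≃* Equiv.Perm (Fin 4)) :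
    orderOf ⁅u, v⁆ = 3 ∧ (orderOf u, orderOf v, orderOf (u * v)) ∈ octahedralOrderTypes := by
  set a : closure {u, v} := ⟨u, subset_closure (by simp)⟩
  set b : closure {u, v} := ⟨v, subset_closure (by simp)⟩
  have hab : closure {a, b} = ⊤ := by
    convert closure_closure_coe_preimage (k := {u, v})
    ext ⟨w, hw⟩
    simp [a, b, Subtype.ext_iff]
  have heab : closure {e a, e b} = ⊤ := by
    rw [← Set.image_pair, ← e.coe_toMonoidHom, ← MonoidHom.map_closure, hab]
    exact map_top_of_surjective _ e.surjective
  have := Equiv.Perm.orderOf_of_closure_pair_eq_top heab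
  rwa [← map_commutatorElement, ← map_mul, e.orderOf_eq, e.orderOf_eq, e.orderOf_eq, e.orderOf_eq,
    ← orderOf_coe, ← orderOf_coe a, ← orderOf_coe b, ← orderOf_coe (a * b)] at this

theorem fricke_eq_one_of_sq_eq_one {F : Type*} [Field F] (h6 : (6 : F) ≠ 0) {x y z : F}
    {a b c : ℕ} (habc : (a, b, c) ∈ octahedralOrderTypes) (ha : x ^ 2 + 2 = a)
    (hb : y ^ 2 + 2 = b) (hc : z ^ 2 + 2 = c)
    (h : (x ^ 2 + y ^ 2 + z ^ 2 - x * y * z - 2) ^ 2 = 1) :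
    x ^ 2 + y ^ 2 + z ^ 2 - x * y * z - 2 = 1 := by
  have hprod : (x * y * z) ^ 2 = (a - 2) * (b - 2) * (c - 2) := by
    rw [← ha, ← hb, ← hc]
    ring
  have hsum : x ^ 2 + y ^ 2 + z ^ 2 = a + b + c - 6 := by linear_combination ha + hb + hc
  obtain ⟨habc_sum, habc_prod⟩ | ⟨habc_sum, habc_prod⟩ : (a + b + c : F) = 9 ∧ (a - 2) * (b - 2) * (c - 2 : F) = 0 ∨
      (a + b + c : F) = 11 ∧ (a - 2) * (b - 2) * (c - 2 : F) = 4 := by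
    simp only [octahedralOrderTypes, Finset.mem_insert, Finset.mem_singleton, Prod.mk.injEq] at habc
    rcases habc with ⟨rfl, rfl, rfl⟩ | ⟨rfl, rfl, rfl⟩ | ⟨rfl, rfl, rfl⟩ | ⟨rfl, rfl, rfl⟩ |
      ⟨rfl, rfl, rfl⟩ | ⟨rfl, rfl, rfl⟩ | ⟨rfl, rfl, rfl⟩ | ⟨rfl, rfl, rfl⟩ | ⟨rfl, rfl, rfl⟩ <;>
      norm_num
  · have hxyz : x * y * z = 0 := pow_eq_zero_iff two_ne_zero |>.1 (hprod.trans habc_prod)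
    linear_combination hsum + habc_sum - hxyz
  · have hxyz : x * y * z = 2 := by
      apply mul_left_cancel₀ h6
      linear_combination -h + (x ^ 2 + y ^ 2 + z ^ 2 + 1 - 2 * (x * y * z)) * (hsum + habc_sum)
        + hprod + habc_prod
    linear_combination hsum + habc_sum - hxyz

open Matrix.SpecialLinearGroup

theorem octahedral_pair_traces (p : ℕ) (hp : p.Prime) (hp5 : 5 < p)
    (A B : Matrix.SpecialLinearGroup (Fin 2) (ZMod p))
    (hiso : Nonempty
      ((Subgroup.closure {(QuotientGroup.mk A :
          Matrix.SpecialLinearGroup (Fin 2) (ZMod p) ⧸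
            Subgroup.center (Matrix.SpecialLinearGroup (Fin 2) (ZMod p))),
        QuotientGroup.mk B}) ≃* Equiv.Perm (Fin 4))) :
    Matrix.trace ((A * B * A⁻¹ * B⁻¹ : Matrix.SpecialLinearGroup (Fin 2) (ZMod p)) :
      Matrix (Fin 2) (Fin 2) (ZMod p)) = 1 ∧
    (∀ t : ZMod p,
      (t = Matrix.trace (A : Matrix (Fin 2) (Fin 2) (ZMod p)) ∨
        t = Matrix.trace (B : Matrix (Fin 2) (Fin 2) (ZMod p)) ∨
        t = Matrix.trace ((A * B : Matrix.SpecialLinearGroup (Fin 2) (ZMod p)) :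
          Matrix (Fin 2) (Fin 2) (ZMod p))) →
      t = 0 ∨ t ^ 2 = 1 ∨ t ^ 2 = 2) := by
  have : Fact p.Prime := ⟨hp⟩
  obtain ⟨e⟩ := hiso
  obtain ⟨hcomm, htype⟩ := orderOf_of_closure_pair_mulEquiv_perm e
  rw [← QuotientGroup.mk_mul] at htype
  rw [← QuotientGroup.mk'_apply, ← QuotientGroup.mk'_apply, ← map_commutatorElement,
    QuotientGroup.mk'_apply] at hcomm
  obtain ⟨hA, hB, hAB⟩ := mem_Icc_of_mem_octahedralOrderTypes _ htype
  refine ⟨?_, ?_⟩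
  · have h6 : (6 : ZMod p) ≠ 0 := by
      rw [show (6 : ZMod p) = ((6 : ℕ) : ZMod p) by norm_cast, Ne, ZMod.natCast_eq_zero_iff]
      intro hdvd
      have := Nat.le_of_dvd (by norm_num) hdvd
      interval_cases p
      norm_num at hp
    have hT := trace_sq_add_two_eq_orderOf ⁅A, B⁆ (by rw [hcomm]; decide)
    rw [hcomm, trace_commutatorElement] at hT
    rw [← commutatorElement_def, trace_commutatorElement]
    exact fricke_eq_one_of_sq_eq_one h6 htype (trace_sq_add_two_eq_orderOf A hA)
      (trace_sq_add_two_eq_orderOf B hB) (trace_sq_add_two_eq_orderOf _ hAB)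
      (by linear_combination hT)
  · rintro t (rfl | rfl | rfl)
    exacts [trace_eq_zero_or_sq_eq_one_or_sq_eq_two A hA,
      trace_eq_zero_or_sq_eq_one_or_sq_eq_two B hB, trace_eq_zero_or_sq_eq_one_or_sq_eq_two _ hAB]
end

section
/- Let p be an odd prime, let u ∈ 𝔽_p with u ≠ 0, u ≠ 1, u ≠ −1, let A ∈ SL(2, 𝔽_p) be the diagonal matrix with entries u and u⁻¹, and let B ∈ SL(2, 𝔽_p). Suppose there exists X ∈ SL(2, 𝔽_p) with X A X⁻¹ = A⁻¹ and X B X⁻¹ = B. Then tr(A B A⁻¹ B⁻¹) − 2 is a square in 𝔽_p, i.e. there exists w ∈ 𝔽_p with tr(A B A⁻¹ B⁻¹) − 2 = w². -/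
/-!
Write `A = diag(u, v)` with `u v = 1` and `B = !![a, b; c, d]`. A direct computation gives
`tr (A B A⁻¹ B⁻¹) - 2 = -(u - v)² b c`. An `X` with `X A X⁻¹ = A⁻¹` has `(u - v) X₀₀ = 0`, so
`det X = 1` gives `u - v = -(u - v) X₀₁ X₁₀`; commuting with `B` gives `X₀₁ c = b X₁₀`.
Together these turn `-(u - v)² b c` into `((u - v) X₀₁ c)²`.
-/

open Matrix
open scoped MatrixGroups

namespace Matrix

variable {R : Type*} [CommRing R]

theorem sub_mul_entry_zero_zero_eq_zero_of_mul_diagonal_eq_swap_mul {u v : R}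
    {X : Matrix (Fin 2) (Fin 2) R} (h : X * !![u, 0; 0, v] = !![v, 0; 0, u] * X) :
    (u - v) * X 0 0 = 0 := by
  have h00 := congrFun (congrFun h 0) 0
  simp only [mul_apply, Fin.sum_univ_two, of_apply, cons_val', cons_val_zero, cons_val_one,
    cons_val_fin_one, mul_zero, zero_mul, add_zero] at h00
  linear_combination h00

theorem entry_mul_entry_eq_of_commute {X B : Matrix (Fin 2) (Fin 2) R} (h : Commute X B) :
    X 0 1 * B 1 0 = B 0 1 * X 1 0 := by
  have h00 := congrFun (congrFun h.eq 0) 0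
  simp only [mul_apply, Fin.sum_univ_two] at h00
  linear_combination h00

end Matrix

namespace Matrix.SpecialLinearGroup

variable {R : Type*} [CommRing R]

theorem trace_diagonal_commutator_sub_two {u v : R} {A B : SL(2, R)}
    (hA : (A : Matrix (Fin 2) (Fin 2) R) = !![u, 0; 0, v]) :
    trace ((A * B * A⁻¹ * B⁻¹ : SL(2, R)) : Matrix (Fin 2) (Fin 2) R) - 2 =
      -(u - v) ^ 2 * B 0 1 * B 1 0 := by
  have huv : u * v = 1 := by simpa [hA, det_fin_two_of] using A.det_coe
  have hB : B 0 0 * B 1 1 - B 0 1 * B 1 0 = 1 := det_fin_two (B : Matrix _ _ R) ▸ B.det_coe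
  rw [coe_mul, coe_mul, coe_mul, coe_inv, coe_inv, hA, adjugate_fin_two_of, adjugate_fin_two,
    eta_fin_two (B : Matrix _ _ R)]
  simp only [mul_fin_two, trace_fin_two_of, of_apply, cons_val_zero, cons_val_one]
  linear_combination 2 * u * v * hB + 2 * huv

theorem trace_commutator_sub_two_eq_sq {u v : R} {A B X : SL(2, R)}
    (hA : (A : Matrix (Fin 2) (Fin 2) R) = !![u, 0; 0, v])
    (hXA : X * A * X⁻¹ = A⁻¹) (hXB : X * B * X⁻¹ = B) :
    trace ((A * B * A⁻¹ * B⁻¹ : SL(2, R)) : Matrix (Fin 2) (Fin 2) R) - 2 =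
      ((u - v) * X 0 1 * B 1 0) ^ 2 := by
  have hAinv : ((A⁻¹ : SL(2, R)) : Matrix (Fin 2) (Fin 2) R) = !![v, 0; 0, u] := by
    rw [coe_inv, hA, adjugate_fin_two_of]
    simp
  have hXA' : (X : Matrix (Fin 2) (Fin 2) R) * !![u, 0; 0, v] = !![v, 0; 0, u] * X := by
    rw [← hA, ← hAinv, ← coe_mul, ← coe_mul, ← mul_inv_eq_iff_eq_mul.mp hXA]
  have hXB' : Commute (X : Matrix (Fin 2) (Fin 2) R) B := by
    rw [Commute, SemiconjBy, ← coe_mul, ← coe_mul, ← mul_inv_eq_iff_eq_mul.mp hXB]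
  have hX00 := sub_mul_entry_zero_zero_eq_zero_of_mul_diagonal_eq_swap_mul hXA'
  have hXB01 := entry_mul_entry_eq_of_commute hXB'
  have hX : X 0 0 * X 1 1 - X 0 1 * X 1 0 = 1 := det_fin_two (X : Matrix _ _ R) ▸ X.det_coe
  rw [trace_diagonal_commutator_sub_two hA]
  linear_combination -(u - v) * B 1 0 * (B 0 1 * X 1 1 * hX00 + (u - v) * X 0 1 * hXB01 -
    (u - v) * B 0 1 * hX)

end Matrix.SpecialLinearGroup

theorem conjugating_inverse_forces_square_general (p : ℕ) (u : ZMod p)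
    (A B : Matrix.SpecialLinearGroup (Fin 2) (ZMod p))
    (hA : (A : Matrix (Fin 2) (Fin 2) (ZMod p)) = !![u, 0; 0, u⁻¹])
    (hX : ∃ X : Matrix.SpecialLinearGroup (Fin 2) (ZMod p),
      X * A * X⁻¹ = A⁻¹ ∧ X * B * X⁻¹ = B) :
    ∃ w : ZMod p,
      Matrix.trace ((A * B * A⁻¹ * B⁻¹ : Matrix.SpecialLinearGroup (Fin 2) (ZMod p)) :
        Matrix (Fin 2) (Fin 2) (ZMod p)) - 2 = w ^ 2 := by
  obtain ⟨X, hXA, hXB⟩ := hX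
  exact ⟨_, Matrix.SpecialLinearGroup.trace_commutator_sub_two_eq_sq hA hXA hXB⟩

theorem conjugating_inverse_forces_square (p : ℕ) (hp : p.Prime) (hodd : p ≠ 2) (u : ZMod p)
    (hu0 : u ≠ 0) (hu1 : u ≠ 1) (hum1 : u ≠ -1)
    (A B : Matrix.SpecialLinearGroup (Fin 2) (ZMod p))
    (hA : (A : Matrix (Fin 2) (Fin 2) (ZMod p)) = !![u, 0; 0, u⁻¹])
    (hX : ∃ X : Matrix.SpecialLinearGroup (Fin 2) (ZMod p),
      X * A * X⁻¹ = A⁻¹ ∧ X * B * X⁻¹ = B) :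
    ∃ w : ZMod p,
      Matrix.trace ((A * B * A⁻¹ * B⁻¹ : Matrix.SpecialLinearGroup (Fin 2) (ZMod p)) :
        Matrix (Fin 2) (Fin 2) (ZMod p)) - 2 = w ^ 2 :=
  conjugating_inverse_forces_square_general p u A B hA hX
end
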